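/- arXiv:2011.12778 — 4 statements merged into one kernel-verified Lean document; each statement's English description precedes it below -/
import Mathlib

section
/- At every y ∈ ℝⁿ∖{0}, the fundamental tensor of the (α,β,γ)-metric F is given by g_{ij} = ρ·a_{ij} + ρ₀·b_ib_j + ρ̄₀·γ_iγ_j + ρ₁·(b_iα_j + b_jα_i) + ρ̄₁·(γ_iα_j + γ_jα_i) + ρ₂·α_iα_j + ρ₃·(b_iγ_j + b_jγ_i). -/
noncomputable section

open Set

/-- `a^{ij} u_i v_j` : the pairing of two covectors via the inverse matrix. -/
def quadInv {n : ℕ} (a : Matrix (Fin n) (Fin n) ℝ) (u v : Fin n → ℝ) : ℝ :=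
  ∑ i, ∑ j, a⁻¹ i j * u i * v j

/-- `α(y) = √(a_{ij} y^i y^j)`. -/
def alph {n : ℕ} (a : Matrix (Fin n) (Fin n) ℝ) (y : Fin n → ℝ) : ℝ :=
  Real.sqrt (∑ i, ∑ j, a i j * y i * y j)

/-- `v_i y^i`. -/
def oneForm {n : ℕ} (v y : Fin n → ℝ) : ℝ := ∑ i, v i * y i

/-- `s(y) = v_i y^i / α(y)`. -/
def sVar {n : ℕ} (a : Matrix (Fin n) (Fin n) ℝ) (v y : Fin n → ℝ) : ℝ :=
  oneForm v y / alph a y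

/-- The (α,β,γ)-metric `F(y) = α·Ψ(s, s̄)`. -/
def Fm {n : ℕ} (a : Matrix (Fin n) (Fin n) ℝ) (bv gv : Fin n → ℝ)
    (Ψ : ℝ → ℝ → ℝ) (y : Fin n → ℝ) : ℝ :=
  alph a y * Ψ (sVar a bv y) (sVar a gv y)

/-- Partial derivative of a function on `ℝⁿ` in the `i`-th coordinate direction. -/
def pd {n : ℕ} (f : (Fin n → ℝ) → ℝ) (y : Fin n → ℝ) (i : Fin n) : ℝ :=
  fderiv ℝ f y (Pi.single i 1)

/-- Second partial derivative. -/
def pd2 {n : ℕ} (f : (Fin n → ℝ) → ℝ) (y : Fin n → ℝ) (i j : Fin n) : ℝ :=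
  pd (fun z => pd f z j) y i

/-- Partial derivative with respect to the first slot (`∂/∂s`). -/
def Ds (Ψ : ℝ → ℝ → ℝ) : ℝ → ℝ → ℝ := fun p q => deriv (fun u => Ψ u q) p

/-- Partial derivative with respect to the second slot (`∂/∂s̄`). -/
def Dt (Ψ : ℝ → ℝ → ℝ) : ℝ → ℝ → ℝ := fun p q => deriv (fun v => Ψ p v) q

/-- `h_i = v_i − s·α_i`. -/
def hl {n : ℕ} (a : Matrix (Fin n) (Fin n) ℝ) (v y : Fin n → ℝ) (i : Fin n) : ℝ :=
  v i - sVar a v y * pd (alph a) y i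

/-- Fundamental tensor `g_{ij} = ½ ∂²(F²)/∂yⁱ∂yʲ`. -/
def fundT {n : ℕ} (F : (Fin n → ℝ) → ℝ) (y : Fin n → ℝ) (i j : Fin n) : ℝ :=
  (1 / 2) * pd2 (fun z => F z ^ 2) y i j

/-- `Π = Ψ − sΨ_s − s̄Ψ_s̄`. -/
def PiF (Ψ : ℝ → ℝ → ℝ) (p q : ℝ) : ℝ := Ψ p q - p * Ds Ψ p q - q * Dt Ψ p q

/-- `J = (Ψ_ss Ψ_s̄s̄ − Ψ_ss̄²)/Π`. -/
def JF (Ψ : ℝ → ℝ → ℝ) (p q : ℝ) : ℝ :=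
  (Ds (Ds Ψ) p q * Dt (Dt Ψ) p q - Dt (Ds Ψ) p q ^ 2) / PiF Ψ p q

/-- `Γ`, with `B = b²`, `G = g²`, `Θ = θ` as real parameters. -/
def GammaF (Ψ : ℝ → ℝ → ℝ) (B G Θ p q : ℝ) : ℝ :=
  PiF Ψ p q + (B - p ^ 2) * Ds (Ds Ψ) p q + (G - q ^ 2) * Dt (Dt Ψ) p q
    + 2 * (Θ - p * q) * Dt (Ds Ψ) p q
    + ((B - p ^ 2) * (G - q ^ 2) - (Θ - p * q) ^ 2) * JF Ψ p q

/-- `ρ = Ψ(Ψ − sΨ_s − s̄Ψ_s̄)`. -/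
def rhoF (Ψ : ℝ → ℝ → ℝ) : ℝ → ℝ → ℝ := fun p q => Ψ p q * PiF Ψ p q

/-- `ρ₀ = ΨΨ_ss + Ψ_s²`. -/
def rho0F (Ψ : ℝ → ℝ → ℝ) : ℝ → ℝ → ℝ := fun p q => Ψ p q * Ds (Ds Ψ) p q + Ds Ψ p q ^ 2

/-- `ρ̄₀ = ΨΨ_s̄s̄ + Ψ_s̄²`. -/
def rhobar0F (Ψ : ℝ → ℝ → ℝ) : ℝ → ℝ → ℝ := fun p q => Ψ p q * Dt (Dt Ψ) p q + Dt Ψ p q ^ 2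

/-- `ρ₃ = ΨΨ_ss̄ + Ψ_sΨ_s̄`. -/
def rho3F (Ψ : ℝ → ℝ → ℝ) : ℝ → ℝ → ℝ :=
  fun p q => Ψ p q * Dt (Ds Ψ) p q + Ds Ψ p q * Dt Ψ p q

/-- `ρ₁ = ΨΨ_s − sρ₀ − s̄ρ₃`. -/
def rho1F (Ψ : ℝ → ℝ → ℝ) : ℝ → ℝ → ℝ :=
  fun p q => Ψ p q * Ds Ψ p q - p * rho0F Ψ p q - q * rho3F Ψ p q

/-- `ρ̄₁ = ΨΨ_s̄ − s̄ρ̄₀ − sρ₃`. -/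
def rhobar1F (Ψ : ℝ → ℝ → ℝ) : ℝ → ℝ → ℝ :=
  fun p q => Ψ p q * Dt Ψ p q - q * rhobar0F Ψ p q - p * rho3F Ψ p q

/-- `ρ₂ = −sρ₁ − s̄ρ̄₁`. -/
def rho2F (Ψ : ℝ → ℝ → ℝ) : ℝ → ℝ → ℝ :=
  fun p q => -p * rho1F Ψ p q - q * rhobar1F Ψ p q

/-- `π₁ = Ψ_s̄Ψ_ss̄ − Ψ_sΨ_s̄s̄ + sΨJ`. -/
def pi1F (Ψ : ℝ → ℝ → ℝ) (p q : ℝ) : ℝ :=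
  Dt Ψ p q * Dt (Ds Ψ) p q - Ds Ψ p q * Dt (Dt Ψ) p q + p * Ψ p q * JF Ψ p q

/-- `π₂ = Ψ_sΨ_ss̄ − Ψ_s̄Ψ_ss + s̄ΨJ`. -/
def pi2F (Ψ : ℝ → ℝ → ℝ) (p q : ℝ) : ℝ :=
  Ds Ψ p q * Dt (Ds Ψ) p q - Dt Ψ p q * Ds (Ds Ψ) p q + q * Ψ p q * JF Ψ p q

namespace St2
variable {n : ℕ}

def lin (c : Fin n → ℝ) : (Fin n → ℝ) →L[ℝ] ℝ := ∑ k, c k • ContinuousLinearMap.proj k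

@[simp] lemma lin_apply (c v : Fin n → ℝ) : lin c v = ∑ k, c k * v k := by
  simp [lin, ContinuousLinearMap.sum_apply]

lemma lin_single (c : Fin n → ℝ) (k : Fin n) : lin c (Pi.single k 1) = c k := by
  simp [Pi.single_apply]

def Qf (a : Matrix (Fin n) (Fin n) ℝ) (z : Fin n → ℝ) : ℝ := ∑ i, ∑ j, a i j * z i * z j
def Lf (a : Matrix (Fin n) (Fin n) ℝ) (k : Fin n) (z : Fin n → ℝ) : ℝ := ∑ l, a k l * z l

lemma hasFD_oneForm (v z : Fin n → ℝ) : HasFDerivAt (oneForm v) (lin v) z := by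
  exact HasFDerivAt.fun_sum fun k _ =>
    ((ContinuousLinearMap.proj k : (Fin n → ℝ) →L[ℝ] ℝ).hasFDerivAt (x := z)).const_mul (v k)

lemma hasFD_Q (a : Matrix (Fin n) (Fin n) ℝ) (hsym : ∀ i j, a i j = a j i) (z : Fin n → ℝ) :
    HasFDerivAt (Qf a) (lin (fun k => 2 * Lf a k z)) z := by
  have h : HasFDerivAt (Qf a)
      (∑ i : Fin n, ∑ j : Fin n, a i j •
        (z i • ContinuousLinearMap.proj j (R := ℝ) (φ := fun _ : Fin n => ℝ) +
         z j • ContinuousLinearMap.proj i (R := ℝ) (φ := fun _ : Fin n => ℝ))) z := by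
    apply HasFDerivAt.fun_sum
    intro i _
    apply HasFDerivAt.fun_sum
    intro j _
    have := ((ContinuousLinearMap.hasFDerivAt (x := z)
        (ContinuousLinearMap.proj (R := ℝ) (φ := fun _ : Fin n => ℝ) i)).mul
        (ContinuousLinearMap.hasFDerivAt (x := z)
        (ContinuousLinearMap.proj (R := ℝ) (φ := fun _ : Fin n => ℝ) j))).const_mul (a i j)
    convert this using 1
    ext w; simp [mul_assoc]
    ext w; simp [mul_assoc]
    rfl
  refine h.congr_fderiv (Eq.symm ?_)
  ext v
  simp only [lin_apply, ContinuousLinearMap.sum_apply, ContinuousLinearMap.smul_apply,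
    ContinuousLinearMap.add_apply, ContinuousLinearMap.proj_apply, smul_eq_mul, Lf]
  rw [show (∑ i, ∑ j, a i j * (z i * v j + z j * v i)) =
    (∑ i, ∑ j, a i j * z i * v j) + (∑ i, ∑ j, a i j * z j * v i) by
      rw [← Finset.sum_add_distrib]; congr 1; ext i; rw [← Finset.sum_add_distrib]; congr 1; ext j; ring]
  rw [Finset.sum_comm (s := Finset.univ) (t := Finset.univ) (f := fun i j => a i j * z i * v j)]
  rw [← Finset.sum_add_distrib]
  congr 1; ext k
  have hswap : (∑ x, a x k * z x * v k) = ∑ x, a k x * z x * v k :=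
    Finset.sum_congr rfl (fun l _ => by rw [hsym l k])
  rw [hswap, ← two_mul, Finset.mul_sum, Finset.mul_sum, Finset.sum_mul]
  exact Finset.sum_congr rfl fun l _ => by ring


lemma Qf_eq (a : Matrix (Fin n) (Fin n) ℝ) (z : Fin n → ℝ) :
    Qf a z = dotProduct z (Matrix.mulVec a z) := by
  unfold Qf
  simp only [dotProduct, Matrix.mulVec, Finset.mul_sum]
  apply Finset.sum_congr rfl; intro i _
  apply Finset.sum_congr rfl; intro j _
  ring

lemma Qf_pos {a : Matrix (Fin n) (Fin n) ℝ} (ha : a.PosDef) {z : Fin n → ℝ} (hz : z ≠ 0) :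
    0 < Qf a z := by
  rw [Qf_eq]
  simpa using ha.dotProduct_mulVec_pos hz

lemma Qf_nonneg {a : Matrix (Fin n) (Fin n) ℝ} (ha : a.PosDef) (z : Fin n → ℝ) :
    0 ≤ Qf a z := by
  rw [Qf_eq]
  simpa using ha.posSemidef.dotProduct_mulVec_nonneg z

lemma alph_eq (a : Matrix (Fin n) (Fin n) ℝ) (z : Fin n → ℝ) :
    alph a z = Real.sqrt (Qf a z) := rfl

lemma alph_pos {a : Matrix (Fin n) (Fin n) ℝ} (ha : a.PosDef) {z : Fin n → ℝ} (hz : z ≠ 0) :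
    0 < alph a z := Real.sqrt_pos.2 (Qf_pos ha hz)

lemma sq_alph {a : Matrix (Fin n) (Fin n) ℝ} (ha : a.PosDef) (z : Fin n → ℝ) :
    alph a z ^ 2 = Qf a z := Real.sq_sqrt (Qf_nonneg ha z)

lemma asymm {a : Matrix (Fin n) (Fin n) ℝ} (ha : a.PosDef) (i j : Fin n) : a i j = a j i := by
  have := ha.1.apply i j
  simpa using this.symm

lemma hasFD_alph {a : Matrix (Fin n) (Fin n) ℝ} (ha : a.PosDef) {z : Fin n → ℝ} (hz : z ≠ 0) :
    HasFDerivAt (alph a) (lin (fun k => Lf a k z / alph a z)) z := by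
  have h1 := (Real.hasDerivAt_sqrt (ne_of_gt (Qf_pos ha hz))).comp_hasFDerivAt z
    (hasFD_Q a (asymm ha) z)
  have hα : Real.sqrt (Qf a z) ≠ 0 := ne_of_gt (alph_pos ha hz)
  refine h1.congr_fderiv (Eq.symm ?_)
  ext v
  simp only [lin_apply, ContinuousLinearMap.smul_apply, smul_eq_mul, Finset.mul_sum]
  apply Finset.sum_congr rfl
  intro k _
  rw [alph_eq]
  field_simp

lemma hasFD_inv_alph {a : Matrix (Fin n) (Fin n) ℝ} (ha : a.PosDef) {z : Fin n → ℝ}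
    (hz : z ≠ 0) :
    HasFDerivAt (fun w => (alph a w)⁻¹)
      (lin (fun k => -(Lf a k z / alph a z) / alph a z ^ 2)) z := by
  have hα := ne_of_gt (alph_pos ha hz)
  have h1 := (hasDerivAt_inv hα).comp_hasFDerivAt z (hasFD_alph ha hz)
  refine h1.congr_fderiv (Eq.symm ?_)
  ext w
  simp only [lin_apply, ContinuousLinearMap.smul_apply, smul_eq_mul, Finset.mul_sum]
  apply Finset.sum_congr rfl
  intro k _
  simp [div_eq_mul_inv]
  ring

lemma hasFD_sVar {a : Matrix (Fin n) (Fin n) ℝ} (ha : a.PosDef) (v : Fin n → ℝ)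
    {z : Fin n → ℝ} (hz : z ≠ 0) :
    HasFDerivAt (sVar a v)
      (lin (fun k => (v k - sVar a v z * (Lf a k z / alph a z)) / alph a z)) z := by
  have hα := ne_of_gt (alph_pos ha hz)
  have hsv : sVar a v = fun w => oneForm v w * (alph a w)⁻¹ :=
    funext fun w => div_eq_mul_inv _ _
  rw [hsv]
  have h1 := (hasFD_oneForm v z).mul (hasFD_inv_alph ha hz)
  refine h1.congr_fderiv (Eq.symm ?_)
  ext w
  simp only [lin_apply, ContinuousLinearMap.add_apply, ContinuousLinearMap.smul_apply,
    smul_eq_mul, Finset.mul_sum, ← Finset.sum_add_distrib, sVar, hsv]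
  apply Finset.sum_congr rfl
  intro k _
  field_simp
  ring

lemma pd_of_hasFD {f : (Fin n → ℝ) → ℝ} {c z : Fin n → ℝ} (h : HasFDerivAt f (lin c) z)
    (k : Fin n) : pd f z k = c k := by
  rw [pd, h.fderiv, lin_single]

lemma pd_alph {a : Matrix (Fin n) (Fin n) ℝ} (ha : a.PosDef) {z : Fin n → ℝ} (hz : z ≠ 0)
    (k : Fin n) : pd (alph a) z k = Lf a k z / alph a z :=
  pd_of_hasFD (hasFD_alph ha hz) k


def Bf (a : Matrix (Fin n) (Fin n) ℝ) (u w : Fin n → ℝ) : ℝ := ∑ i, ∑ j, a i j * u i * w j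

lemma Bf_eq (a : Matrix (Fin n) (Fin n) ℝ) (u w : Fin n → ℝ) :
    Bf a u w = dotProduct u (Matrix.mulVec a w) := by
  unfold Bf
  simp only [dotProduct, Matrix.mulVec, Finset.mul_sum]
  apply Finset.sum_congr rfl; intro i _
  apply Finset.sum_congr rfl; intro j _
  ring

lemma Qf_eq_Bf (a : Matrix (Fin n) (Fin n) ℝ) (z : Fin n → ℝ) : Qf a z = Bf a z z := rfl

lemma Bf_symm {a : Matrix (Fin n) (Fin n) ℝ} (ha : a.PosDef) (u w : Fin n → ℝ) :
    Bf a u w = Bf a w u := by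
  unfold Bf
  rw [Finset.sum_comm]
  apply Finset.sum_congr rfl; intro i _
  apply Finset.sum_congr rfl; intro j _
  rw [asymm ha]; ring

lemma Qf_expand {a : Matrix (Fin n) (Fin n) ℝ} (ha : a.PosDef) (t r : ℝ) (u w : Fin n → ℝ) :
    Qf a (t • u + r • w) = t ^ 2 * Qf a u + 2 * t * r * Bf a u w + r ^ 2 * Qf a w := by
  have h : Qf a (t • u + r • w)
      = t ^ 2 * Qf a u + t * r * Bf a u w + t * r * Bf a w u + r ^ 2 * Qf a w := by
    unfold Qf Bf
    simp only [Finset.mul_sum, ← Finset.sum_add_distrib, Pi.add_apply, Pi.smul_apply,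
      smul_eq_mul]
    apply Finset.sum_congr rfl; intro i _
    apply Finset.sum_congr rfl; intro j _
    ring
  rw [h, Bf_symm ha u w]; ring

lemma cauchy_schwarz {a : Matrix (Fin n) (Fin n) ℝ} (ha : a.PosDef) (u w : Fin n → ℝ) :
    Bf a u w ^ 2 ≤ Qf a u * Qf a w := by
  by_cases hu : u = 0
  · subst hu
    have h1 : Bf a 0 w = 0 := by unfold Bf; simp
    have h2 : Qf a (0 : Fin n → ℝ) = 0 := by unfold Qf; simp
    rw [h1, h2]; simp
  · have hQu : 0 < Qf a u := Qf_pos ha hu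
    have h := Qf_nonneg ha ((-(Bf a u w)) • u + (Qf a u) • w)
    rw [Qf_expand ha] at h
    nlinarith [h, hQu]

lemma mulVec_inv_cancel {a : Matrix (Fin n) (Fin n) ℝ} (ha : a.PosDef) (v : Fin n → ℝ) :
    Matrix.mulVec a (Matrix.mulVec a⁻¹ v) = v := by
  have hdet : IsUnit a.det := isUnit_iff_ne_zero.mpr (ne_of_gt ha.det_pos)
  rw [Matrix.mulVec_mulVec, Matrix.mul_nonsing_inv a hdet, Matrix.one_mulVec]

lemma quadInv_eq_Qf {a : Matrix (Fin n) (Fin n) ℝ} (ha : a.PosDef) (v : Fin n → ℝ) :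
    quadInv a v v = Qf a (Matrix.mulVec a⁻¹ v) := by
  rw [show quadInv a v v = Bf a⁻¹ v v from rfl, Bf_eq, Qf_eq_Bf, Bf_eq,
    mulVec_inv_cancel ha]
  exact dotProduct_comm v _

lemma quadInv_nonneg {a : Matrix (Fin n) (Fin n) ℝ} (ha : a.PosDef) (v : Fin n → ℝ) :
    0 ≤ quadInv a v v := by
  rw [quadInv_eq_Qf ha]
  exact Qf_nonneg ha _

lemma oneForm_sq_le {a : Matrix (Fin n) (Fin n) ℝ} (ha : a.PosDef) (v z : Fin n → ℝ) :
    oneForm v z ^ 2 ≤ quadInv a v v * Qf a z := by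
  set u := Matrix.mulVec a⁻¹ v with hudef
  have h1 : Bf a u z = oneForm v z := by
    rw [Bf_symm ha, Bf_eq, hudef, mulVec_inv_cancel ha, dotProduct_comm]
    rfl
  rw [← h1, quadInv_eq_Qf ha]
  exact cauchy_schwarz ha u z

lemma abs_sVar_le {a : Matrix (Fin n) (Fin n) ℝ} (ha : a.PosDef) (v : Fin n → ℝ)
    {z : Fin n → ℝ} (hz : z ≠ 0) :
    |sVar a v z| ≤ Real.sqrt (quadInv a v v) := by
  have hα : 0 < alph a z := alph_pos ha hz
  have hq : 0 ≤ quadInv a v v := quadInv_nonneg ha v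
  have h1 : oneForm v z ^ 2 ≤ quadInv a v v * Qf a z := oneForm_sq_le ha v z
  have hQ : alph a z ^ 2 = Qf a z := sq_alph ha z
  have hs : Real.sqrt (quadInv a v v) ^ 2 = quadInv a v v := Real.sq_sqrt hq
  have hsn : 0 ≤ Real.sqrt (quadInv a v v) := Real.sqrt_nonneg _
  rw [sVar, abs_div, abs_of_pos hα, div_le_iff₀ hα]
  have key : |oneForm v z| ^ 2 ≤ (Real.sqrt (quadInv a v v) * alph a z) ^ 2 := by
    rw [sq_abs]
    calc oneForm v z ^ 2 ≤ quadInv a v v * Qf a z := h1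
    _ = (Real.sqrt (quadInv a v v) * alph a z) ^ 2 := by rw [mul_pow, hs, hQ]
  nlinarith [abs_nonneg (oneForm v z), mul_nonneg hsn hα.le, key]


lemma hasDerivAt_slice1 {H : ℝ × ℝ → ℝ} {p : ℝ × ℝ} (h : DifferentiableAt ℝ H p) :
    HasDerivAt (fun x => H (x, p.2)) (fderiv ℝ H p (1, 0)) p.1 := by
  have hcurve : HasDerivAt (fun x : ℝ => (x, p.2)) ((1 : ℝ), (0 : ℝ)) p.1 :=
    (hasDerivAt_id p.1).prodMk (hasDerivAt_const p.1 p.2)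
  exact h.hasFDerivAt.comp_hasDerivAt p.1 hcurve

lemma hasDerivAt_slice2 {H : ℝ × ℝ → ℝ} {p : ℝ × ℝ} (h : DifferentiableAt ℝ H p) :
    HasDerivAt (fun x => H (p.1, x)) (fderiv ℝ H p (0, 1)) p.2 := by
  have hcurve : HasDerivAt (fun x : ℝ => ((p.1 : ℝ), x)) ((0 : ℝ), (1 : ℝ)) p.2 :=
    (hasDerivAt_const p.2 p.1).prodMk (hasDerivAt_id p.2)
  exact h.hasFDerivAt.comp_hasDerivAt p.2 hcurve

lemma fderiv_pair_apply {H : ℝ × ℝ → ℝ} {p : ℝ × ℝ} (h : DifferentiableAt ℝ H p) (u v : ℝ) :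
    fderiv ℝ H p (u, v)
      = u * deriv (fun x => H (x, p.2)) p.1 + v * deriv (fun x => H (p.1, x)) p.2 := by
  rw [(hasDerivAt_slice1 h).deriv, (hasDerivAt_slice2 h).deriv]
  have hv : ((u, v) : ℝ × ℝ) = u • ((1 : ℝ), (0 : ℝ)) + v • ((0 : ℝ), (1 : ℝ)) := by
    simp [Prod.ext_iff]
  rw [hv, map_add, map_smul, map_smul, smul_eq_mul, smul_eq_mul]

section Psi

variable {Ψ : ℝ → ℝ → ℝ} {U : Set (ℝ × ℝ)}

lemma diffAt_of_cd (hU : IsOpen U) (hΨ : ContDiffOn ℝ (⊤ : ℕ∞) (fun p : ℝ × ℝ => Ψ p.1 p.2) U)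
    {p : ℝ × ℝ} (hp : p ∈ U) : DifferentiableAt ℝ (fun p : ℝ × ℝ => Ψ p.1 p.2) p :=
  (hΨ.differentiableOn (by simp)).differentiableAt (hU.mem_nhds hp)

lemma Ds_eq_fderiv {H : ℝ → ℝ → ℝ} {p : ℝ × ℝ}
    (h : DifferentiableAt ℝ (fun r : ℝ × ℝ => H r.1 r.2) p) :
    Ds H p.1 p.2 = fderiv ℝ (fun r : ℝ × ℝ => H r.1 r.2) p (1, 0) :=
  (hasDerivAt_slice1 h).deriv.symm ▸ rfl

lemma Dt_eq_fderiv {H : ℝ → ℝ → ℝ} {p : ℝ × ℝ}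
    (h : DifferentiableAt ℝ (fun r : ℝ × ℝ => H r.1 r.2) p) :
    Dt H p.1 p.2 = fderiv ℝ (fun r : ℝ × ℝ => H r.1 r.2) p (0, 1) :=
  (hasDerivAt_slice2 h).deriv.symm ▸ rfl

lemma contDiffOn_fderiv (hU : IsOpen U) (hΨ : ContDiffOn ℝ (⊤ : ℕ∞) (fun p : ℝ × ℝ => Ψ p.1 p.2) U) :
    ContDiffOn ℝ (⊤ : ℕ∞) (fderiv ℝ (fun p : ℝ × ℝ => Ψ p.1 p.2)) U :=
  hΨ.fderiv_of_isOpen hU (by simp)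

lemma contDiffOn_Ds (hU : IsOpen U) (hΨ : ContDiffOn ℝ (⊤ : ℕ∞) (fun p : ℝ × ℝ => Ψ p.1 p.2) U) :
    ContDiffOn ℝ (⊤ : ℕ∞) (fun p : ℝ × ℝ => Ds Ψ p.1 p.2) U := by
  have h2 : ContDiffOn ℝ (⊤ : ℕ∞)
      (fun p => (fderiv ℝ (fun p : ℝ × ℝ => Ψ p.1 p.2) p) (1, 0)) U :=
    (contDiffOn_fderiv hU hΨ).clm_apply contDiffOn_const
  exact h2.congr fun p hp => Ds_eq_fderiv (diffAt_of_cd hU hΨ hp)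

lemma contDiffOn_Dt (hU : IsOpen U) (hΨ : ContDiffOn ℝ (⊤ : ℕ∞) (fun p : ℝ × ℝ => Ψ p.1 p.2) U) :
    ContDiffOn ℝ (⊤ : ℕ∞) (fun p : ℝ × ℝ => Dt Ψ p.1 p.2) U := by
  have h2 : ContDiffOn ℝ (⊤ : ℕ∞)
      (fun p => (fderiv ℝ (fun p : ℝ × ℝ => Ψ p.1 p.2) p) (0, 1)) U :=
    (contDiffOn_fderiv hU hΨ).clm_apply contDiffOn_const
  exact h2.congr fun p hp => Dt_eq_fderiv (diffAt_of_cd hU hΨ hp)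

lemma diffAt_Ds (hU : IsOpen U) (hΨ : ContDiffOn ℝ (⊤ : ℕ∞) (fun p : ℝ × ℝ => Ψ p.1 p.2) U)
    {p : ℝ × ℝ} (hp : p ∈ U) :
    DifferentiableAt ℝ (fun p : ℝ × ℝ => Ds Ψ p.1 p.2) p :=
  ((contDiffOn_Ds hU hΨ).differentiableOn (by simp)).differentiableAt (hU.mem_nhds hp)

lemma diffAt_Dt (hU : IsOpen U) (hΨ : ContDiffOn ℝ (⊤ : ℕ∞) (fun p : ℝ × ℝ => Ψ p.1 p.2) U)
    {p : ℝ × ℝ} (hp : p ∈ U) :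
    DifferentiableAt ℝ (fun p : ℝ × ℝ => Dt Ψ p.1 p.2) p :=
  ((contDiffOn_Dt hU hΨ).differentiableOn (by simp)).differentiableAt (hU.mem_nhds hp)

lemma clairaut (hU : IsOpen U) (hΨ : ContDiffOn ℝ (⊤ : ℕ∞) (fun p : ℝ × ℝ => Ψ p.1 p.2) U)
    {p : ℝ × ℝ} (hp : p ∈ U) :
    Ds (Dt Ψ) p.1 p.2 = Dt (Ds Ψ) p.1 p.2 := by
  set f : ℝ × ℝ → ℝ := fun p => Ψ p.1 p.2 with hf
  set f' : ℝ × ℝ → (ℝ × ℝ) →L[ℝ] ℝ := fderiv ℝ f with hf'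
  have hdf' : DifferentiableAt ℝ f' p :=
    (((contDiffOn_fderiv hU hΨ).differentiableOn (by simp)).differentiableAt (hU.mem_nhds hp))
  have hev : ∀ᶠ r in nhds p, HasFDerivAt f (f' r) r := by
    filter_upwards [hU.mem_nhds hp] with r hr
    exact (diffAt_of_cd hU hΨ hr).hasFDerivAt
  have hsymm := second_derivative_symmetric_of_eventually hev hdf'.hasFDerivAt
  -- Ds (Dt Ψ) p.1 p.2
  have hnb1 : ∀ᶠ u in nhds p.1, (u, p.2) ∈ U := by
    have : Continuous fun u : ℝ => (u, p.2) := continuous_id.prodMk continuous_const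
    have hmem : p.1 ∈ (fun u : ℝ => (u, p.2)) ⁻¹' U := by simpa using hp
    exact (hU.preimage this).mem_nhds hmem
  have hnb2 : ∀ᶠ v in nhds p.2, (p.1, v) ∈ U := by
    have : Continuous fun v : ℝ => (p.1, v) := continuous_const.prodMk continuous_id
    have hmem : p.2 ∈ (fun v : ℝ => (p.1, v)) ⁻¹' U := by simpa using hp
    exact (hU.preimage this).mem_nhds hmem
  have hG2 : DifferentiableAt ℝ (fun r : ℝ × ℝ => f' r (0, 1)) p :=
    hdf'.clm_apply (differentiableAt_const _)
  have hG1 : DifferentiableAt ℝ (fun r : ℝ × ℝ => f' r (1, 0)) p :=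
    hdf'.clm_apply (differentiableAt_const _)
  have e1 : Ds (Dt Ψ) p.1 p.2 = fderiv ℝ (fun r : ℝ × ℝ => f' r (0, 1)) p (1, 0) := by
    have heq : (fun u : ℝ => Dt Ψ u p.2) =ᶠ[nhds p.1] fun u => f' (u, p.2) (0, 1) := by
      filter_upwards [hnb1] with u hu
      exact Dt_eq_fderiv (diffAt_of_cd hU hΨ hu)
    show deriv (fun u => Dt Ψ u p.2) p.1 = _
    rw [heq.deriv_eq]
    exact (hasDerivAt_slice1 hG2).deriv
  have e2 : Dt (Ds Ψ) p.1 p.2 = fderiv ℝ (fun r : ℝ × ℝ => f' r (1, 0)) p (0, 1) := by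
    have heq : (fun v : ℝ => Ds Ψ p.1 v) =ᶠ[nhds p.2] fun v => f' (p.1, v) (1, 0) := by
      filter_upwards [hnb2] with v hv
      exact Ds_eq_fderiv (diffAt_of_cd hU hΨ hv)
    show deriv (fun v => Ds Ψ p.1 v) p.2 = _
    rw [heq.deriv_eq]
    exact (hasDerivAt_slice2 hG1).deriv
  rw [e1, e2]
  rw [fderiv_clm_apply hdf' (differentiableAt_const _),
      fderiv_clm_apply hdf' (differentiableAt_const _)]
  simp only [fderiv_const_apply, fderiv_const, Pi.zero_apply, ContinuousLinearMap.comp_zero, zero_add,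
    ContinuousLinearMap.add_apply, ContinuousLinearMap.flip_apply]
  exact hsymm _ _

end Psi


lemma hasFD_comp {a : Matrix (Fin n) (Fin n) ℝ} (ha : a.PosDef) (bv gv : Fin n → ℝ)
    {z : Fin n → ℝ} (hz : z ≠ 0) (G : ℝ → ℝ → ℝ)
    (hG : DifferentiableAt ℝ (fun r : ℝ × ℝ => G r.1 r.2) (sVar a bv z, sVar a gv z)) :
    HasFDerivAt (fun w => G (sVar a bv w) (sVar a gv w))
      (lin (fun k =>
        Ds G (sVar a bv z) (sVar a gv z)
          * ((bv k - sVar a bv z * (Lf a k z / alph a z)) / alph a z)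
        + Dt G (sVar a bv z) (sVar a gv z)
          * ((gv k - sVar a gv z * (Lf a k z / alph a z)) / alph a z))) z := by
  have hS : HasFDerivAt (fun w => (sVar a bv w, sVar a gv w))
      (((lin fun k => (bv k - sVar a bv z * (Lf a k z / alph a z)) / alph a z)).prod
       ((lin fun k => (gv k - sVar a gv z * (Lf a k z / alph a z)) / alph a z))) z :=
    (hasFD_sVar ha bv hz).prodMk (hasFD_sVar ha gv hz)
  have h := hG.hasFDerivAt.comp z hS
  refine h.congr_fderiv (Eq.symm ?_)
  ext w
  simp only [lin_apply, ContinuousLinearMap.coe_comp', Function.comp_apply,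
    ContinuousLinearMap.prod_apply]
  rw [fderiv_pair_apply hG]
  simp only [lin_apply, Ds, Dt, add_mul, mul_assoc, Finset.sum_add_distrib, ← Finset.mul_sum]
  ring
end St2


set_option maxHeartbeats 4000000 in
open St2 in
/-- the fundamental tensor of the (α,β,γ)-metric. -/
theorem statement2
    (n : ℕ) (hn : 2 ≤ n)
    (a : Matrix (Fin n) (Fin n) ℝ) (ha : a.PosDef)
    (bv gv : Fin n → ℝ) (b₀ g₀ : ℝ) (hb₀ : 0 < b₀) (hg₀ : 0 < g₀)
    (hb : Real.sqrt (quadInv a bv bv) < b₀)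
    (hg : Real.sqrt (quadInv a gv gv) < g₀)
    (Ψ : ℝ → ℝ → ℝ)
    (hΨ : ContDiffOn ℝ (⊤ : ℕ∞) (fun p : ℝ × ℝ => Ψ p.1 p.2)
      (Set.Ioo (-b₀) b₀ ×ˢ Set.Ioo (-g₀) g₀))
    (hΨpos : ∀ p ∈ Set.Ioo (-b₀) b₀ ×ˢ Set.Ioo (-g₀) g₀, 0 < Ψ p.1 p.2)
    (y : Fin n → ℝ) (hy : y ≠ 0) (i j : Fin n) :
    ∀ p q : ℝ, p = sVar a bv y → q = sVar a gv y →
      fundT (Fm a bv gv Ψ) y i j =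
        rhoF Ψ p q * a i j + rho0F Ψ p q * bv i * bv j + rhobar0F Ψ p q * gv i * gv j
          + rho1F Ψ p q * (bv i * pd (alph a) y j + bv j * pd (alph a) y i)
          + rhobar1F Ψ p q * (gv i * pd (alph a) y j + gv j * pd (alph a) y i)
          + rho2F Ψ p q * (pd (alph a) y i * pd (alph a) y j)
          + rho3F Ψ p q * (bv i * gv j + bv j * gv i) := by
  intro p q hp hq
  subst hp; subst hq
  have hU : IsOpen (Set.Ioo (-b₀) b₀ ×ˢ Set.Ioo (-g₀) g₀) := isOpen_Ioo.prod isOpen_Ioo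
  have hmem : ∀ z : Fin n → ℝ, z ≠ 0 →
      (sVar a bv z, sVar a gv z) ∈ Set.Ioo (-b₀) b₀ ×ˢ Set.Ioo (-g₀) g₀ := by
    intro z hz
    refine Set.mem_prod.mpr ⟨Set.mem_Ioo.mpr ?_, Set.mem_Ioo.mpr ?_⟩
    · exact abs_lt.mp (lt_of_le_of_lt (abs_sVar_le ha bv hz) hb)
    · exact abs_lt.mp (lt_of_le_of_lt (abs_sVar_le ha gv hz) hg)
  have hαy : 0 < alph a y := alph_pos ha hy
  have hα0 : alph a y ≠ 0 := ne_of_gt hαy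
  -- F² = Q · Ψ²
  have hF2 : (fun w => Fm a bv gv Ψ w ^ 2)
      = fun w => Qf a w * Ψ (sVar a bv w) (sVar a gv w) ^ 2 := by
    funext w
    rw [Fm, mul_pow, sq_alph ha]
  -- first derivative of Q·Ψ² at any z ≠ 0
  have hW : ∀ z : Fin n → ℝ, z ≠ 0 → HasFDerivAt
      (fun w => Qf a w * Ψ (sVar a bv w) (sVar a gv w) ^ 2)
      (lin (fun k =>
        2 * Lf a k z * Ψ (sVar a bv z) (sVar a gv z) ^ 2
        + Qf a z * (2 * Ψ (sVar a bv z) (sVar a gv z) *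
            (Ds Ψ (sVar a bv z) (sVar a gv z)
               * ((bv k - sVar a bv z * (Lf a k z / alph a z)) / alph a z)
             + Dt Ψ (sVar a bv z) (sVar a gv z)
               * ((gv k - sVar a gv z * (Lf a k z / alph a z)) / alph a z))))) z := by
    intro z hz
    have hΨc := hasFD_comp ha bv gv hz Ψ (diffAt_of_cd hU hΨ (hmem z hz))
    have h := (hasFD_Q a (asymm ha) z).mul (hΨc.mul hΨc)
    refine HasFDerivAt.congr_of_eventuallyEq (h.congr_fderiv (Eq.symm ?_))
      (Filter.Eventually.of_forall fun w => by simp only [Pi.mul_apply]; ring)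
    ext w
    simp only [lin_apply, ContinuousLinearMap.add_apply, ContinuousLinearMap.smul_apply,
      smul_eq_mul, pow_one, Finset.mul_sum, ← Finset.sum_add_distrib, Pi.mul_apply]
    apply Finset.sum_congr rfl
    intro k _
    ring
  -- derivative building blocks at y
  have hL : HasFDerivAt (fun z => Lf a j z) (lin (a j)) y := hasFD_oneForm (a j) y
  have hIA := hasFD_inv_alph ha hy
  have hsb := hasFD_sVar ha bv hy
  have hsg := hasFD_sVar ha gv hy
  have hΨy := hasFD_comp ha bv gv hy Ψ (diffAt_of_cd hU hΨ (hmem y hy))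
  have hDsy := hasFD_comp ha bv gv hy (Ds Ψ) (diffAt_Ds hU hΨ (hmem y hy))
  have hDty := hasFD_comp ha bv gv hy (Dt Ψ) (diffAt_Dt hU hΨ (hmem y hy))
  have hQy := hasFD_Q a (asymm ha) y
  -- second derivative: E = (first derivative in direction j) as a function of z
  have hE := ((hL.const_mul (2:ℝ)).mul (hΨy.mul hΨy)).add
    (hQy.mul ((hΨy.const_mul (2:ℝ)).mul
      ((hDsy.mul (((hasFDerivAt_const (bv j) y).sub
          (hsb.mul (hL.mul hIA))).mul hIA)).add
       (hDty.mul (((hasFDerivAt_const (gv j) y).sub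
          (hsg.mul (hL.mul hIA))).mul hIA)))))
  have hne : ∀ᶠ z in nhds y, z ≠ 0 :=
    isOpen_compl_singleton.mem_nhds (by simpa using hy)
  have hEE : (fun z => pd (fun w => Qf a w * Ψ (sVar a bv w) (sVar a gv w) ^ 2) z j)
      =ᶠ[nhds y] (fun z =>
        2 * Lf a j z * (Ψ (sVar a bv z) (sVar a gv z) * Ψ (sVar a bv z) (sVar a gv z))
        + Qf a z * (2 * Ψ (sVar a bv z) (sVar a gv z) *
            (Ds Ψ (sVar a bv z) (sVar a gv z)
               * ((bv j - sVar a bv z * (Lf a j z * (alph a z)⁻¹)) * (alph a z)⁻¹)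
             + Dt Ψ (sVar a bv z) (sVar a gv z)
               * ((gv j - sVar a gv z * (Lf a j z * (alph a z)⁻¹)) * (alph a z)⁻¹)))) := by
    filter_upwards [hne] with z hz
    rw [pd_of_hasFD (hW z hz) j]
    simp only [div_eq_mul_inv]
    ring
  have hkey : pd2 (fun w => Qf a w * Ψ (sVar a bv w) (sVar a gv w) ^ 2) y i j
      = fderiv ℝ (fun z =>
        2 * Lf a j z * (Ψ (sVar a bv z) (sVar a gv z) * Ψ (sVar a bv z) (sVar a gv z))
        + Qf a z * (2 * Ψ (sVar a bv z) (sVar a gv z) *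
            (Ds Ψ (sVar a bv z) (sVar a gv z)
               * ((bv j - sVar a bv z * (Lf a j z * (alph a z)⁻¹)) * (alph a z)⁻¹)
             + Dt Ψ (sVar a bv z) (sVar a gv z)
               * ((gv j - sVar a gv z * (Lf a j z * (alph a z)⁻¹)) * (alph a z)⁻¹))))
        y (Pi.single i 1) := by
    rw [pd2, pd, hEE.fderiv_eq]
  rw [fundT, hF2, hkey]
  erw [hE.fderiv]
  rw [pd_alph ha hy i, pd_alph ha hy j]
  have hcl : Ds (Dt Ψ) (sVar a bv y) (sVar a gv y) = Dt (Ds Ψ) (sVar a bv y) (sVar a gv y) :=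
    clairaut hU hΨ (hmem y hy)
  have hα2 : alph a y ^ 2 = Qf a y := sq_alph ha y
  simp only [ContinuousLinearMap.add_apply, ContinuousLinearMap.smul_apply,
    ContinuousLinearMap.sub_apply, ContinuousLinearMap.zero_apply, smul_eq_mul,
    lin_single, ContinuousLinearMap.coe_smul', Pi.smul_apply, Pi.mul_apply, Pi.sub_apply, Pi.add_apply]
  simp only [show a j i = a i j from asymm ha j i]
  simp only [rhoF, rho0F, rhobar0F, rho1F, rhobar1F, rho2F, rho3F, PiF]
  rw [hcl, ← hα2]
  field_simp
  ring
end
end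

section
/- At every y ∈ ℝⁿ∖{0} at which Π ≠ 0, the determinant of the fundamental tensor of the (α,β,γ)-metric F satisfies det(g_{ij}) = Ψ^{n+1}·Π^{n−2}·Γ·det(a_{ij}). -/
noncomputable section

open Set

namespace S3Aux

lemma clm2_apply (L : ℝ × ℝ →L[ℝ] ℝ) (u w : ℝ) : L (u, w) = u * L (1, 0) + w * L (0, 1) := by
  have h : (u, w) = u • ((1:ℝ), (0:ℝ)) + w • ((0:ℝ), (1:ℝ)) := by
    simp [Prod.ext_iff]
  rw [h, map_add, map_smul, map_smul, smul_eq_mul, smul_eq_mul]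

lemma deriv_slice1 {φ : ℝ × ℝ → ℝ} {p q : ℝ} (hφ : DifferentiableAt ℝ φ (p, q)) :
    deriv (fun u => φ (u, q)) p = fderiv ℝ φ (p, q) (1, 0) :=
  (hφ.hasFDerivAt.comp_hasDerivAt p ((hasDerivAt_id p).prodMk (hasDerivAt_const p q))).deriv

lemma deriv_slice2 {φ : ℝ × ℝ → ℝ} {p q : ℝ} (hφ : DifferentiableAt ℝ φ (p, q)) :
    deriv (fun w => φ (p, w)) q = fderiv ℝ φ (p, q) (0, 1) :=
  (hφ.hasFDerivAt.comp_hasDerivAt q ((hasDerivAt_const q p).prodMk (hasDerivAt_id q))).deriv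

def cov {n : ℕ} (g : Fin n → ℝ) : (Fin n → ℝ) →L[ℝ] ℝ :=
  ∑ i, g i • (ContinuousLinearMap.proj i : (Fin n → ℝ) →L[ℝ] ℝ)

lemma cov_apply {n : ℕ} (g v : Fin n → ℝ) : cov g v = ∑ i, g i * v i := by
  simp [cov]

lemma cov_single {n : ℕ} (g : Fin n → ℝ) (j : Fin n) : cov g (Pi.single j 1) = g j := by
  rw [cov_apply]
  simp [Pi.single_apply]

lemma clm_eq_cov {n : ℕ} (D : (Fin n → ℝ) →L[ℝ] ℝ) :
    D = cov (fun i => D (Pi.single i 1)) := by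
  ext v
  rw [cov_apply]
  have h : v = ∑ i, v i • (Pi.single i 1 : Fin n → ℝ) := by
    funext k
    simp [Pi.single_apply]
  conv_lhs => rw [h]
  rw [map_sum]
  simp [mul_comm]

lemma hasFDerivAt_cov {n : ℕ} {f : (Fin n → ℝ) → ℝ} {D : (Fin n → ℝ) →L[ℝ] ℝ} {z : Fin n → ℝ}
    (h : HasFDerivAt f D z) (g : Fin n → ℝ) (hg : ∀ i, D (Pi.single i 1) = g i) :
    HasFDerivAt f (cov g) z := by
  have e : cov g = D := by
    rw [clm_eq_cov D]
    congr 1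
    funext i
    rw [hg]
  rwa [e]

end S3Aux
namespace S3Aux

def psip (Ψ : ℝ → ℝ → ℝ) : ℝ × ℝ → ℝ := fun p => Ψ p.1 p.2
def G1 (Ψ : ℝ → ℝ → ℝ) (x : ℝ × ℝ) : ℝ := fderiv ℝ (psip Ψ) x (1, 0)
def G2 (Ψ : ℝ → ℝ → ℝ) (x : ℝ × ℝ) : ℝ := fderiv ℝ (psip Ψ) x (0, 1)
def H11 (Ψ : ℝ → ℝ → ℝ) (x : ℝ × ℝ) : ℝ := fderiv ℝ (G1 Ψ) x (1, 0)
def H12 (Ψ : ℝ → ℝ → ℝ) (x : ℝ × ℝ) : ℝ := fderiv ℝ (G1 Ψ) x (0, 1)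
def H21 (Ψ : ℝ → ℝ → ℝ) (x : ℝ × ℝ) : ℝ := fderiv ℝ (G2 Ψ) x (1, 0)
def H22 (Ψ : ℝ → ℝ → ℝ) (x : ℝ × ℝ) : ℝ := fderiv ℝ (G2 Ψ) x (0, 1)

section TwoVar

variable {Ψ : ℝ → ℝ → ℝ} {S : Set (ℝ × ℝ)} (hS : IsOpen S)
  (hΨ : ContDiffOn ℝ (⊤ : ℕ∞) (psip Ψ) S)

include hS hΨ

lemma diff_psip {x : ℝ × ℝ} (hx : x ∈ S) : DifferentiableAt ℝ (psip Ψ) x :=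
  (hΨ.contDiffAt (hS.mem_nhds hx)).differentiableAt (by simp)

lemma contDiffOn_G1 : ContDiffOn ℝ (⊤ : ℕ∞) (G1 Ψ) S :=
  (hΨ.fderiv_of_isOpen hS (by simp)).clm_apply contDiffOn_const

lemma contDiffOn_G2 : ContDiffOn ℝ (⊤ : ℕ∞) (G2 Ψ) S :=
  (hΨ.fderiv_of_isOpen hS (by simp)).clm_apply contDiffOn_const

lemma diff_G1 {x : ℝ × ℝ} (hx : x ∈ S) : DifferentiableAt ℝ (G1 Ψ) x :=
  ((contDiffOn_G1 hS hΨ).contDiffAt (hS.mem_nhds hx)).differentiableAt (by simp)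

lemma diff_G2 {x : ℝ × ℝ} (hx : x ∈ S) : DifferentiableAt ℝ (G2 Ψ) x :=
  ((contDiffOn_G2 hS hΨ).contDiffAt (hS.mem_nhds hx)).differentiableAt (by simp)

lemma Ds_eq {p q : ℝ} (hpq : (p, q) ∈ S) : Ds Ψ p q = G1 Ψ (p, q) :=
  deriv_slice1 (diff_psip hS hΨ hpq)

lemma Dt_eq {p q : ℝ} (hpq : (p, q) ∈ S) : Dt Ψ p q = G2 Ψ (p, q) :=
  deriv_slice2 (diff_psip hS hΨ hpq)

lemma nhds_slice1 {p q : ℝ} (hpq : (p, q) ∈ S) : ∀ᶠ u in nhds p, (u, q) ∈ S :=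
  (hS.preimage (by fun_prop : Continuous fun u : ℝ => (u, q))).mem_nhds hpq

lemma nhds_slice2 {p q : ℝ} (hpq : (p, q) ∈ S) : ∀ᶠ w in nhds q, (p, w) ∈ S :=
  (hS.preimage (by fun_prop : Continuous fun w : ℝ => (p, w))).mem_nhds hpq

lemma DsDs_eq {p q : ℝ} (hpq : (p, q) ∈ S) : Ds (Ds Ψ) p q = H11 Ψ (p, q) := by
  have hev : (fun u => Ds Ψ u q) =ᶠ[nhds p] fun u => G1 Ψ (u, q) := by
    filter_upwards [nhds_slice1 hS hΨ hpq] with u hu using Ds_eq hS hΨ hu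
  show deriv (fun u => Ds Ψ u q) p = _
  rw [hev.deriv_eq, deriv_slice1 (diff_G1 hS hΨ hpq)]
  rfl

lemma DtDs_eq {p q : ℝ} (hpq : (p, q) ∈ S) : Dt (Ds Ψ) p q = H12 Ψ (p, q) := by
  have hev : (fun w => Ds Ψ p w) =ᶠ[nhds q] fun w => G1 Ψ (p, w) := by
    filter_upwards [nhds_slice2 hS hΨ hpq] with w hw using Ds_eq hS hΨ hw
  show deriv (fun w => Ds Ψ p w) q = _
  rw [hev.deriv_eq, deriv_slice2 (diff_G1 hS hΨ hpq)]
  rfl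

lemma DtDt_eq {p q : ℝ} (hpq : (p, q) ∈ S) : Dt (Dt Ψ) p q = H22 Ψ (p, q) := by
  have hev : (fun w => Dt Ψ p w) =ᶠ[nhds q] fun w => G2 Ψ (p, w) := by
    filter_upwards [nhds_slice2 hS hΨ hpq] with w hw using Dt_eq hS hΨ hw
  show deriv (fun w => Dt Ψ p w) q = _
  rw [hev.deriv_eq, deriv_slice2 (diff_G2 hS hΨ hpq)]
  rfl

lemma diff_fderiv_psip {x : ℝ × ℝ} (hx : x ∈ S) :
    DifferentiableAt ℝ (fderiv ℝ (psip Ψ)) x :=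
  ((hΨ.fderiv_of_isOpen (m := (⊤ : ℕ∞)) hS (by simp)).contDiffAt (hS.mem_nhds hx)).differentiableAt (by simp)

lemma H21_eq {x : ℝ × ℝ} (hx : x ∈ S) : H21 Ψ x = H12 Ψ x := by
  have hev : ∀ᶠ z in nhds x, HasFDerivAt (psip Ψ) (fderiv ℝ (psip Ψ) z) z := by
    filter_upwards [hS.mem_nhds hx] with z hz using (diff_psip hS hΨ hz).hasFDerivAt
  have hf' : HasFDerivAt (fderiv ℝ (psip Ψ)) (fderiv ℝ (fderiv ℝ (psip Ψ)) x) x :=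
    (diff_fderiv_psip hS hΨ hx).hasFDerivAt
  have hsymm := second_derivative_symmetric_of_eventually hev hf'
    ((1:ℝ), (0:ℝ)) ((0:ℝ), (1:ℝ))
  have e2 : H21 Ψ x = fderiv ℝ (fderiv ℝ (psip Ψ)) x (1, 0) (0, 1) := by
    have h := hf'.clm_apply (hasFDerivAt_const ((0:ℝ), (1:ℝ)) x)
    have := h.fderiv
    show fderiv ℝ (G2 Ψ) x (1, 0) = _
    rw [show G2 Ψ = fun z => fderiv ℝ (psip Ψ) z (0, 1) from rfl, this]
    simp
  have e1 : H12 Ψ x = fderiv ℝ (fderiv ℝ (psip Ψ)) x (0, 1) (1, 0) := by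
    have h := hf'.clm_apply (hasFDerivAt_const ((1:ℝ), (0:ℝ)) x)
    have := h.fderiv
    show fderiv ℝ (G1 Ψ) x (0, 1) = _
    rw [show G1 Ψ = fun z => fderiv ℝ (psip Ψ) z (1, 0) from rfl, this]
    simp
  rw [e1, e2, hsymm]

end TwoVar
end S3Aux
namespace S3Aux

def Qf {n : ℕ} (a : Matrix (Fin n) (Fin n) ℝ) (z : Fin n → ℝ) : ℝ :=
  ∑ i, ∑ j, a i j * z i * z j

def Af {n : ℕ} (a : Matrix (Fin n) (Fin n) ℝ) (j : Fin n) (z : Fin n → ℝ) : ℝ :=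
  ∑ k, a j k * z k

def sgrad {n : ℕ} (a : Matrix (Fin n) (Fin n) ℝ) (u z : Fin n → ℝ) (j : Fin n) : ℝ :=
  (u j - sVar a u z * (Af a j z / alph a z)) / alph a z

def ptv {n : ℕ} (a : Matrix (Fin n) (Fin n) ℝ) (bv gv : Fin n → ℝ) (z : Fin n → ℝ) : ℝ × ℝ :=
  (sVar a bv z, sVar a gv z)

def PiV (Ψ : ℝ → ℝ → ℝ) (x : ℝ × ℝ) : ℝ := psip Ψ x - x.1 * G1 Ψ x - x.2 * G2 Ψ x

def rhoV (Ψ : ℝ → ℝ → ℝ) (x : ℝ × ℝ) : ℝ := psip Ψ x * PiV Ψ x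

def Gfun {n : ℕ} (a : Matrix (Fin n) (Fin n) ℝ) (bv gv : Fin n → ℝ) (Ψ : ℝ → ℝ → ℝ)
    (j : Fin n) (z : Fin n → ℝ) : ℝ :=
  2 * rhoV Ψ (ptv a bv gv z) * Af a j z
    + 2 * alph a z * (psip Ψ (ptv a bv gv z) * G1 Ψ (ptv a bv gv z) * bv j
        + psip Ψ (ptv a bv gv z) * G2 Ψ (ptv a bv gv z) * gv j)

section Geom

variable {n : ℕ} {a : Matrix (Fin n) (Fin n) ℝ} {bv gv : Fin n → ℝ} {Ψ : ℝ → ℝ → ℝ}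
  {z : Fin n → ℝ}

lemma continuous_Qf : Continuous (Qf a) := by
  unfold Qf; fun_prop

lemma Qf_pos (ha : a.PosDef) (hz : z ≠ 0) : 0 < Qf a z := by
  have h := ha.dotProduct_mulVec_pos hz
  have e : dotProduct (star z) (a.mulVec z) = Qf a z := by
    simp only [star_trivial, dotProduct, Matrix.mulVec, Qf, Finset.mul_sum]
    exact Finset.sum_congr rfl fun i _ => Finset.sum_congr rfl fun j _ => by ring
  rwa [e] at h

lemma alph_eq : alph a z = Real.sqrt (Qf a z) := rfl

lemma alph_pos (hz : 0 < Qf a z) : 0 < alph a z := Real.sqrt_pos.2 hz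

lemma sq_alph (hz : 0 < Qf a z) : alph a z ^ 2 = Qf a z :=
  Real.sq_sqrt hz.le

lemma hasFDerivAt_oneForm (u : Fin n → ℝ) (z : Fin n → ℝ) :
    HasFDerivAt (oneForm u) (cov u) z := by
  have h : HasFDerivAt (fun w : Fin n → ℝ => ∑ i, u i * w i)
      (∑ i, u i • (ContinuousLinearMap.proj i : (Fin n → ℝ) →L[ℝ] ℝ)) z :=
    HasFDerivAt.fun_sum fun i _ => (hasFDerivAt_apply i z).const_mul (u i)
  exact h

lemma hasFDerivAt_Qf (hsym : ∀ i j, a i j = a j i) (z : Fin n → ℝ) :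
    HasFDerivAt (Qf a) (cov (fun j => 2 * Af a j z)) z := by
  have h : HasFDerivAt (fun w : Fin n → ℝ => ∑ i, ∑ j, a i j * w i * w j)
      (∑ i : Fin n, ∑ j : Fin n,
        ((a i j * z i) • (ContinuousLinearMap.proj j : (Fin n → ℝ) →L[ℝ] ℝ)
          + z j • (a i j • (ContinuousLinearMap.proj i : (Fin n → ℝ) →L[ℝ] ℝ)))) z :=
    HasFDerivAt.fun_sum fun i _ => HasFDerivAt.fun_sum fun j _ =>
      ((hasFDerivAt_apply i z).const_mul (a i j)).mul (hasFDerivAt_apply j z)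
  refine hasFDerivAt_cov h _ fun m => ?_
  simp only [ContinuousLinearMap.coe_sum', Finset.sum_apply, ContinuousLinearMap.add_apply,
    ContinuousLinearMap.coe_smul', Pi.smul_apply, ContinuousLinearMap.proj_apply,
    Pi.single_apply, smul_eq_mul]
  have e1 : ∀ i : Fin n,
      ∑ j : Fin n, (a i j * z i * (if j = m then (1:ℝ) else 0)
        + z j * (a i j * (if i = m then (1:ℝ) else 0)))
      = a i m * z i + (if i = m then Af a m z else 0) := by
    intro i
    rw [Finset.sum_add_distrib]
    congr 1
    · simp [mul_ite]
    · by_cases h : i = m <;> simp [h, Af, mul_comm]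
  rw [Finset.sum_congr rfl fun i _ => e1 i, Finset.sum_add_distrib]
  simp only [Finset.sum_ite_eq' Finset.univ m, Finset.mem_univ, if_true]
  have : ∑ i, a i m * z i = Af a m z := by
    rw [Af]
    exact Finset.sum_congr rfl fun i _ => by rw [hsym m i]
  rw [this]; ring

lemma hasFDerivAt_alph (hsym : ∀ i j, a i j = a j i) (hz : 0 < Qf a z) :
    HasFDerivAt (alph a) (cov (fun j => Af a j z / alph a z)) z := by
  have h := (Real.hasDerivAt_sqrt hz.ne').comp_hasFDerivAt z (hasFDerivAt_Qf hsym z)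
  refine hasFDerivAt_cov h _ fun j => ?_
  have hα := (alph_pos hz).ne'
  simp only [ContinuousLinearMap.coe_smul', Pi.smul_apply, cov_single, smul_eq_mul]
  rw [← alph_eq] at *
  field_simp

lemma hasFDerivAt_sVar (hsym : ∀ i j, a i j = a j i) (u : Fin n → ℝ) (hz : 0 < Qf a z) :
    HasFDerivAt (sVar a u) (cov (sgrad a u z)) z := by
  have hα := (alph_pos hz).ne'
  have hinv := (hasDerivAt_inv hα).comp_hasFDerivAt z (hasFDerivAt_alph hsym hz)
  have h := (hasFDerivAt_oneForm u z).mul hinv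
  have e : sVar a u = fun w => oneForm u w * (alph a w)⁻¹ :=
    funext fun w => div_eq_mul_inv _ _
  rw [e]
  refine hasFDerivAt_cov h _ fun j => ?_
  simp only [ContinuousLinearMap.coe_smul', Pi.smul_apply, ContinuousLinearMap.coe_add',
    Pi.add_apply, cov_single, smul_eq_mul, Function.comp_apply]
  rw [sgrad, sVar]
  field_simp
  ring

lemma hasFDerivAt_comp2 (hsym : ∀ i j, a i j = a j i) (hz : 0 < Qf a z)
    {φ : ℝ × ℝ → ℝ} (hφ : DifferentiableAt ℝ φ (ptv a bv gv z)) :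
    HasFDerivAt (fun w => φ (ptv a bv gv w))
      (cov (fun j => sgrad a bv z j * fderiv ℝ φ (ptv a bv gv z) (1, 0)
        + sgrad a gv z j * fderiv ℝ φ (ptv a bv gv z) (0, 1))) z := by
  have h := hφ.hasFDerivAt.comp z
    ((hasFDerivAt_sVar hsym bv hz).prodMk (hasFDerivAt_sVar hsym gv hz))
  refine hasFDerivAt_cov h _ fun j => ?_
  rw [ContinuousLinearMap.comp_apply, ContinuousLinearMap.prod_apply, cov_single, cov_single,
    clm2_apply]

end Geom
end S3Aux
namespace S3Aux
section CS

variable {n : ℕ} {a : Matrix (Fin n) (Fin n) ℝ} {z : Fin n → ℝ}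

lemma Qf_eq_dot : Qf a z = dotProduct z (a.mulVec z) := by
  simp only [dotProduct, Matrix.mulVec, Qf, Finset.mul_sum]
  exact Finset.sum_congr rfl fun i _ => Finset.sum_congr rfl fun j _ => by ring

lemma inv_symm (hdet : IsUnit a.det) (hsym : ∀ i j, a i j = a j i) :
    ∀ i j, a⁻¹ i j = a⁻¹ j i := by
  have ht : a.transpose = a := Matrix.ext fun i j => hsym j i
  have hT : a⁻¹.transpose = a⁻¹ := by rw [Matrix.transpose_nonsing_inv, ht]
  intro i j
  conv_lhs => rw [← hT]
  rfl

lemma cauchy_schwarz (ha : a.PosDef) (hsym : ∀ i j, a i j = a j i) (u : Fin n → ℝ)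
    (hz : z ≠ 0) :
    |oneForm u z| ≤ Real.sqrt (quadInv a u u) * alph a z := by
  classical
  set Q : (Fin n → ℝ) → (Fin n → ℝ) → ℝ :=
    fun p r => dotProduct p (a.mulVec r) with hQdef
  have hdet : IsUnit a.det := ha.det_pos.ne'.isUnit
  set w : Fin n → ℝ := a⁻¹.mulVec u with hw
  have haw : a.mulVec w = u := by
    rw [hw, Matrix.mulVec_mulVec, Matrix.mul_nonsing_inv _ hdet, Matrix.one_mulVec]
  have hQsymm : ∀ p r, Q p r = Q r p := by
    intro p r
    simp only [hQdef, dotProduct, Matrix.mulVec, Finset.mul_sum]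
    rw [Finset.sum_comm]
    exact Finset.sum_congr rfl fun i _ => Finset.sum_congr rfl fun j _ => by
      rw [hsym i j]; ring
  have h0 : ∀ p, 0 ≤ Q p p := by
    intro p
    by_cases hp : p = 0
    · simp [hQdef, hp]
    · have := ha.dotProduct_mulVec_pos hp
      rw [star_trivial] at this
      exact this.le
  have hQz : 0 < Q z z := by
    have := ha.dotProduct_mulVec_pos hz
    rwa [star_trivial] at this
  have expand : ∀ c d : ℝ, Q (c • w - d • z) (c • w - d • z)
      = c^2 * Q w w - 2*c*d*Q w z + d^2 * Q z z := by
    intro c d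
    have hswap : dotProduct z (a.mulVec w) = dotProduct w (a.mulVec z) :=
      hQsymm z w
    simp only [hQdef, Matrix.mulVec_sub, Matrix.mulVec_smul, dotProduct_sub,
      sub_dotProduct, dotProduct_smul, smul_dotProduct, smul_eq_mul]
    rw [hswap]
    ring
  have key : (Q w z)^2 ≤ Q w w * Q z z := by
    have hv := h0 (Q z z • w - Q w z • z)
    rw [expand] at hv
    nlinarith [hQz]
  have e1 : oneForm u z = Q z w := by
    have h1 : Q z w = dotProduct z u := by rw [hQdef]; simp only []; rw [haw]
    rw [h1, oneForm, dotProduct]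
    exact Finset.sum_congr rfl fun i _ => mul_comm _ _
  have e2 : quadInv a u u = Q w w := by
    have h1 : Q w w = dotProduct w u := by rw [hQdef]; simp only []; rw [haw]
    rw [h1, quadInv, dotProduct]
    have hinv := inv_symm hdet hsym
    rw [Finset.sum_comm]
    refine Finset.sum_congr rfl fun j _ => ?_
    rw [hw, Matrix.mulVec, dotProduct, Finset.sum_mul]
    exact Finset.sum_congr rfl fun i _ => by rw [hinv j i] <;> ring
  have e3 : alph a z = Real.sqrt (Q z z) := by rw [alph_eq, Qf_eq_dot] <;> rfl
  have key2 : (Q z w)^2 ≤ Q w w * Q z z := by rw [hQsymm z w]; exact key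
  calc |oneForm u z| = Real.sqrt ((Q z w)^2) := by rw [e1, Real.sqrt_sq_eq_abs]
    _ ≤ Real.sqrt (Q w w * Q z z) := Real.sqrt_le_sqrt key2
    _ = Real.sqrt (quadInv a u u) * alph a z := by
        rw [Real.sqrt_mul (h0 w), e2, e3]

lemma memS {bv gv : Fin n → ℝ} {b₀ g₀ : ℝ} (ha : a.PosDef) (hsym : ∀ i j, a i j = a j i)
    (hb : Real.sqrt (quadInv a bv bv) < b₀) (hg : Real.sqrt (quadInv a gv gv) < g₀)
    (hz : z ≠ 0) :
    ptv a bv gv z ∈ Set.Ioo (-b₀) b₀ ×ˢ Set.Ioo (-g₀) g₀ := by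
  have hzq : 0 < Qf a z := Qf_pos ha hz
  have hα : 0 < alph a z := alph_pos hzq
  have key : ∀ (u : Fin n → ℝ) (c : ℝ), Real.sqrt (quadInv a u u) < c →
      |sVar a u z| < c := by
    intro u c hc
    have h1 := cauchy_schwarz ha hsym u hz
    have : |sVar a u z| = |oneForm u z| / alph a z := by
      rw [sVar, abs_div, abs_of_pos hα]
    rw [this, div_lt_iff₀ hα]
    calc |oneForm u z| ≤ Real.sqrt (quadInv a u u) * alph a z := h1
      _ < c * alph a z := by
          exact mul_lt_mul_of_pos_right hc hα
  constructor
  · exact abs_lt.1 (key bv b₀ hb)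
  · exact abs_lt.1 (key gv g₀ hg)

end CS
end S3Aux
namespace S3Aux
section FD

variable {n : ℕ} {a : Matrix (Fin n) (Fin n) ℝ} {bv gv : Fin n → ℝ} {Ψ : ℝ → ℝ → ℝ}
  {z : Fin n → ℝ}

lemma Fm_sq_eq (hz : 0 < Qf a z) :
    Fm a bv gv Ψ z ^ 2 = Qf a z * psip Ψ (ptv a bv gv z) ^ 2 := by
  rw [Fm, mul_pow, sq_alph hz]
  rfl

lemma firstDeriv (hsym : ∀ i j, a i j = a j i)
    (hψd : DifferentiableAt ℝ (psip Ψ) (ptv a bv gv z)) (hz : 0 < Qf a z) :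
    HasFDerivAt (fun w => Fm a bv gv Ψ w ^ 2) (cov (fun j => Gfun a bv gv Ψ j z)) z := by
  have hα := (alph_pos hz).ne'
  have hcomp := hasFDerivAt_comp2 (bv := bv) (gv := gv) hsym hz hψd
  have hΦ := (hasFDerivAt_Qf hsym z).mul (hcomp.mul hcomp)
  have hev : (fun w => Fm a bv gv Ψ w ^ 2)
      =ᶠ[nhds z] fun w => Qf a w * (psip Ψ (ptv a bv gv w) * psip Ψ (ptv a bv gv w)) := by
    filter_upwards [(isOpen_lt continuous_const continuous_Qf).mem_nhds hz] with w hw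
    rw [Fm_sq_eq hw]
    ring
  have h := hΦ.congr_of_eventuallyEq hev
  refine hasFDerivAt_cov h _ fun j => ?_
  simp only [ContinuousLinearMap.add_apply, ContinuousLinearMap.coe_smul', Pi.smul_apply,
    cov_single, smul_eq_mul, Pi.mul_apply]
  simp only [Gfun, rhoV, PiV, ptv, sgrad, G1, G2]
  rw [show Qf a z = alph a z ^ 2 from (sq_alph hz).symm]
  field_simp
  ring

lemma pd_Fm_sq (hsym : ∀ i j, a i j = a j i)
    (hψd : DifferentiableAt ℝ (psip Ψ) (ptv a bv gv z)) (hz : 0 < Qf a z) (j : Fin n) :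
    pd (fun w => Fm a bv gv Ψ w ^ 2) z j = Gfun a bv gv Ψ j z := by
  rw [pd, (firstDeriv hsym hψd hz).fderiv, cov_single]

end FD
end S3Aux
namespace S3Aux

def Ph1 (Ψ : ℝ → ℝ → ℝ) (x : ℝ × ℝ) : ℝ := psip Ψ x * G1 Ψ x
def Ph2 (Ψ : ℝ → ℝ → ℝ) (x : ℝ × ℝ) : ℝ := psip Ψ x * G2 Ψ x
def F11 (Ψ : ℝ → ℝ → ℝ) (x : ℝ × ℝ) : ℝ := G1 Ψ x ^ 2 + psip Ψ x * H11 Ψ x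
def F12 (Ψ : ℝ → ℝ → ℝ) (x : ℝ × ℝ) : ℝ := G1 Ψ x * G2 Ψ x + psip Ψ x * H12 Ψ x
def F21 (Ψ : ℝ → ℝ → ℝ) (x : ℝ × ℝ) : ℝ := G1 Ψ x * G2 Ψ x + psip Ψ x * H21 Ψ x
def F22 (Ψ : ℝ → ℝ → ℝ) (x : ℝ × ℝ) : ℝ := G2 Ψ x ^ 2 + psip Ψ x * H22 Ψ x
def R1 (Ψ : ℝ → ℝ → ℝ) (x : ℝ × ℝ) : ℝ :=
  G1 Ψ x * PiV Ψ x - psip Ψ x * (x.1 * H11 Ψ x + x.2 * H21 Ψ x)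
def R2 (Ψ : ℝ → ℝ → ℝ) (x : ℝ × ℝ) : ℝ :=
  G2 Ψ x * PiV Ψ x - psip Ψ x * (x.1 * H12 Ψ x + x.2 * H22 Ψ x)

section TwoVarD

variable {Ψ : ℝ → ℝ → ℝ} {S : Set (ℝ × ℝ)} (hS : IsOpen S)
  (hΨ : ContDiffOn ℝ (⊤ : ℕ∞) (psip Ψ) S) {x : ℝ × ℝ}

include hS hΨ

lemma hasFDerivAt_rhoV (hx : x ∈ S) :
    ∃ D : ℝ × ℝ →L[ℝ] ℝ, HasFDerivAt (rhoV Ψ) D x ∧ D (1, 0) = R1 Ψ x ∧ D (0, 1) = R2 Ψ x := by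
  have hψ := (diff_psip hS hΨ hx).hasFDerivAt
  have hG1 := (diff_G1 hS hΨ hx).hasFDerivAt
  have hG2 := (diff_G2 hS hΨ hx).hasFDerivAt
  have hfst : HasFDerivAt (fun p : ℝ × ℝ => p.1) (ContinuousLinearMap.fst ℝ ℝ ℝ) x :=
    hasFDerivAt_fst
  have hsnd : HasFDerivAt (fun p : ℝ × ℝ => p.2) (ContinuousLinearMap.snd ℝ ℝ ℝ) x :=
    hasFDerivAt_snd
  refine ⟨_, hψ.mul ((hψ.sub (hfst.mul hG1)).sub (hsnd.mul hG2)), ?_, ?_⟩ <;>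
  · simp only [ContinuousLinearMap.add_apply, ContinuousLinearMap.coe_smul', Pi.smul_apply,
      ContinuousLinearMap.coe_sub', Pi.sub_apply, ContinuousLinearMap.coe_fst',
      ContinuousLinearMap.coe_snd', smul_eq_mul]
    simp only [R1, R2, PiV, G1, G2, H11, H12, H21, H22]
    ring

lemma hasFDerivAt_Ph1 (hx : x ∈ S) :
    ∃ D : ℝ × ℝ →L[ℝ] ℝ, HasFDerivAt (Ph1 Ψ) D x ∧ D (1, 0) = F11 Ψ x ∧ D (0, 1) = F12 Ψ x := by
  have hψ := (diff_psip hS hΨ hx).hasFDerivAt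
  have hG1 := (diff_G1 hS hΨ hx).hasFDerivAt
  refine ⟨_, hψ.mul hG1, ?_, ?_⟩ <;>
  · simp only [ContinuousLinearMap.add_apply, ContinuousLinearMap.coe_smul', Pi.smul_apply,
      smul_eq_mul]
    simp only [F11, F12, G1, G2, H11, H12]
    ring

lemma hasFDerivAt_Ph2 (hx : x ∈ S) :
    ∃ D : ℝ × ℝ →L[ℝ] ℝ, HasFDerivAt (Ph2 Ψ) D x ∧ D (1, 0) = F21 Ψ x ∧ D (0, 1) = F22 Ψ x := by
  have hψ := (diff_psip hS hΨ hx).hasFDerivAt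
  have hG2 := (diff_G2 hS hΨ hx).hasFDerivAt
  refine ⟨_, hψ.mul hG2, ?_, ?_⟩ <;>
  · simp only [ContinuousLinearMap.add_apply, ContinuousLinearMap.coe_smul', Pi.smul_apply,
      smul_eq_mul]
    simp only [F21, F22, G1, G2, H21, H22]
    ring

end TwoVarD
end S3Aux
namespace S3Aux

def Um {n : ℕ} (a : Matrix (Fin n) (Fin n) ℝ) (bv gv y : Fin n → ℝ) :
    Matrix (Fin n) (Fin 3) ℝ :=
  Matrix.of fun i k => ![bv i, gv i, Af a i y / alph a y] k

def Wm (Ψ : ℝ → ℝ → ℝ) (x : ℝ × ℝ) : Matrix (Fin 3) (Fin 3) ℝ :=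
  !![F11 Ψ x, F21 Ψ x, R1 Ψ x;
     F12 Ψ x, F22 Ψ x, R2 Ψ x;
     Ph1 Ψ x - x.1 * F11 Ψ x - x.2 * F12 Ψ x,
       Ph2 Ψ x - x.1 * F21 Ψ x - x.2 * F22 Ψ x,
       -(x.1 * R1 Ψ x) - x.2 * R2 Ψ x]

section Second

variable {n : ℕ} {a : Matrix (Fin n) (Fin n) ℝ} {bv gv : Fin n → ℝ} {Ψ : ℝ → ℝ → ℝ}
  {S : Set (ℝ × ℝ)} {y : Fin n → ℝ}

lemma hasFDerivAt_Af (j : Fin n) (z : Fin n → ℝ) :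
    HasFDerivAt (Af a j) (cov (fun k => a j k)) z := by
  have h : HasFDerivAt (fun w : Fin n → ℝ => ∑ k, a j k * w k)
      (∑ k, a j k • (ContinuousLinearMap.proj k : (Fin n → ℝ) →L[ℝ] ℝ)) z :=
    HasFDerivAt.fun_sum fun k _ => (hasFDerivAt_apply k z).const_mul (a j k)
  exact h

lemma secondDeriv (hS : IsOpen S) (hΨ : ContDiffOn ℝ (⊤ : ℕ∞) (psip Ψ) S)
    (hsym : ∀ i j, a i j = a j i) (ha : a.PosDef)
    (hSmem : ∀ z : Fin n → ℝ, z ≠ 0 → ptv a bv gv z ∈ S)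
    (hy : y ≠ 0) (i j : Fin n) :
    fundT (Fm a bv gv Ψ) y i j
      = rhoV Ψ (ptv a bv gv y) * a i j
        + ∑ k : Fin 3, ∑ l : Fin 3,
            Um a bv gv y i k * Wm Ψ (ptv a bv gv y) k l * Um a bv gv y j l := by
  have hx : ptv a bv gv y ∈ S := hSmem y hy
  have hzq : 0 < Qf a y := Qf_pos ha hy
  have hα := alph_pos hzq
  have hα' := hα.ne'
  obtain ⟨Dr, hDr, hr1, hr2⟩ := hasFDerivAt_rhoV hS hΨ hx
  obtain ⟨D1, hD1, he11, he12⟩ := hasFDerivAt_Ph1 hS hΨ hx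
  obtain ⟨D2, hD2, he21, he22⟩ := hasFDerivAt_Ph2 hS hΨ hx
  have hrc := hasFDerivAt_comp2 (bv := bv) (gv := gv) hsym hzq hDr.differentiableAt
  simp only [hDr.fderiv, hr1, hr2] at hrc
  have hP1c := hasFDerivAt_comp2 (bv := bv) (gv := gv) hsym hzq hD1.differentiableAt
  simp only [hD1.fderiv, he11, he12] at hP1c
  have hP2c := hasFDerivAt_comp2 (bv := bv) (gv := gv) hsym hzq hD2.differentiableAt
  simp only [hD2.fderiv, he21, he22] at hP2c
  have hAf := hasFDerivAt_Af (a := a) j y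
  have hαd := hasFDerivAt_alph hsym hzq
  have htot := ((hrc.const_mul 2).mul hAf).add
    ((hαd.const_mul 2).mul ((hP1c.mul_const (bv j)).add (hP2c.mul_const (gv j))))
  rw [fundT, pd2, pd]
  have hev : (fun z => pd (fun w => Fm a bv gv Ψ w ^ 2) z j)
      =ᶠ[nhds y] fun z => Gfun a bv gv Ψ j z := by
    filter_upwards [(isOpen_lt continuous_const continuous_Qf).mem_nhds hzq] with z hz
    have hz0 : z ≠ 0 := by
      rintro rfl
      simp [Qf] at hz
    exact pd_Fm_sq hsym (diff_psip hS hΨ (hSmem z hz0)) hz j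
  rw [hev.fderiv_eq]
  have htot' : HasFDerivAt (fun z => Gfun a bv gv Ψ j z) _ y := htot
  rw [htot'.fderiv]
  simp only [ContinuousLinearMap.add_apply, ContinuousLinearMap.coe_smul', Pi.smul_apply,
    cov_single, smul_eq_mul, Pi.mul_apply, Pi.add_apply]
  rw [hsym j i]
  simp only [Um, Wm, Matrix.of_apply, Fin.sum_univ_three, Matrix.cons_val', Matrix.cons_val_zero,
    Matrix.cons_val_one, Matrix.head_cons, Matrix.empty_val', Matrix.cons_val_fin_one,
    Matrix.head_fin_const, Matrix.cons_val_two, Matrix.tail_cons, ptv, sgrad]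
  field_simp
  ring

end Second
end S3Aux
namespace S3Aux

def Mm (B G Θ p q : ℝ) : Matrix (Fin 3) (Fin 3) ℝ := !![B, Θ, p; Θ, G, q; p, q, 1]

section Mmat

variable {n : ℕ} {a : Matrix (Fin n) (Fin n) ℝ} {bv gv : Fin n → ℝ} {y : Fin n → ℝ}

lemma entry_eq (A : Matrix (Fin n) (Fin n) ℝ) (U : Matrix (Fin n) (Fin 3) ℝ) (k l : Fin 3) :
    (U.transpose * A⁻¹ * U) k l = quadInv A (fun i => U i k) (fun i => U i l) := by
  simp only [Matrix.mul_apply, Matrix.transpose_apply, quadInv, Finset.sum_mul]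
  rw [Finset.sum_comm]
  exact Finset.sum_congr rfl fun i _ => Finset.sum_congr rfl fun j _ => by ring

lemma keyR (hdet : IsUnit a.det) (i : Fin n) :
    ∑ j, a⁻¹ i j * Af a j y = y i := by
  have h1 : a⁻¹ * a = 1 := Matrix.nonsing_inv_mul a hdet
  simp only [Af, Finset.mul_sum]
  rw [Finset.sum_comm]
  have : ∀ k, ∑ j, a⁻¹ i j * (a j k * y k) = (if i = k then 1 else 0) * y k := by
    intro k
    simp_rw [← mul_assoc]
    rw [← Finset.sum_mul]
    congr 1
    have := congrFun (congrFun h1 i) k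
    simpa [Matrix.mul_apply, Matrix.one_apply] using this
  rw [Finset.sum_congr rfl fun k _ => this k]
  simp [Finset.sum_ite_eq]

lemma quadInv_symm (hdet : IsUnit a.det) (hsym : ∀ i j, a i j = a j i) (u v : Fin n → ℝ) :
    quadInv a u v = quadInv a v u := by
  have hinv := inv_symm hdet hsym
  rw [quadInv, quadInv, Finset.sum_comm]
  exact Finset.sum_congr rfl fun i _ => Finset.sum_congr rfl fun j _ => by
    rw [hinv j i]; ring

lemma quadA (hdet : IsUnit a.det) (u : Fin n → ℝ) :
    quadInv a u (fun i => Af a i y / alph a y) = oneForm u y / alph a y := by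
  rw [quadInv, oneForm, Finset.sum_div]
  refine Finset.sum_congr rfl fun i _ => ?_
  rw [show ∑ j, a⁻¹ i j * u i * (Af a j y / alph a y)
      = u i * (∑ j, a⁻¹ i j * Af a j y) / alph a y from by
    rw [Finset.mul_sum, Finset.sum_div]
    exact Finset.sum_congr rfl fun j _ => by ring]
  rw [keyR hdet i]

lemma sum_Af_y : ∑ i, Af a i y * y i = Qf a y := by
  rw [Qf]
  simp only [Af, Finset.sum_mul]
  exact Finset.sum_congr rfl fun i _ => Finset.sum_congr rfl fun j _ => by ring

lemma UtAU (ha : a.PosDef) (hsym : ∀ i j, a i j = a j i) (hy : y ≠ 0) :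
    (Um a bv gv y).transpose * a⁻¹ * Um a bv gv y
      = Mm (quadInv a bv bv) (quadInv a gv gv) (quadInv a bv gv)
          (sVar a bv y) (sVar a gv y) := by
  have hdet : IsUnit a.det := ha.det_pos.ne'.isUnit
  have hzq : 0 < Qf a y := Qf_pos ha hy
  have hα := (alph_pos hzq).ne'
  have hℓ : ∀ u : Fin n → ℝ, quadInv a u (fun i => Af a i y / alph a y)
      = oneForm u y / alph a y := fun u => quadA hdet u
  have hℓ' : ∀ u : Fin n → ℝ, quadInv a (fun i => Af a i y / alph a y) u
      = oneForm u y / alph a y := fun u => by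
    rw [quadInv_symm hdet hsym]; exact hℓ u
  have hℓℓ : quadInv a (fun i => Af a i y / alph a y) (fun i => Af a i y / alph a y) = 1 := by
    rw [hℓ']
    rw [show oneForm (fun i => Af a i y / alph a y) y = Qf a y / alph a y from by
      rw [oneForm, ← sum_Af_y, Finset.sum_div]
      exact Finset.sum_congr rfl fun i _ => by ring]
    rw [div_div, ← sq, sq_alph hzq, div_self hzq.ne']
  ext k l
  rw [entry_eq]
  fin_cases k <;> fin_cases l <;>
    simp only [Um, Mm, Matrix.of_apply, Matrix.cons_val', Matrix.cons_val_zero,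
      Matrix.cons_val_one, Matrix.head_cons, Matrix.empty_val', Matrix.cons_val_fin_one,
      Matrix.head_fin_const, Matrix.cons_val_two, Matrix.tail_cons, Fin.isValue]
  · rfl
  · rfl
  · exact hℓ bv
  · exact quadInv_symm hdet hsym gv bv
  · rfl
  · exact hℓ gv
  · exact hℓ' bv
  · exact hℓ' gv
  · exact hℓℓ

end Mmat
end S3Aux
set_option maxHeartbeats 4000000
/-- `det(g_{ij}) = Ψ^{n+1} Π^{n−2} Γ det(a_{ij})` wherever `Π ≠ 0`. -/
theorem statement3
    (n : ℕ) (hn : 2 ≤ n)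
    (a : Matrix (Fin n) (Fin n) ℝ) (ha : a.PosDef)
    (bv gv : Fin n → ℝ) (b₀ g₀ : ℝ) (hb₀ : 0 < b₀) (hg₀ : 0 < g₀)
    (hb : Real.sqrt (quadInv a bv bv) < b₀)
    (hg : Real.sqrt (quadInv a gv gv) < g₀)
    (Ψ : ℝ → ℝ → ℝ)
    (hΨ : ContDiffOn ℝ (⊤ : ℕ∞) (fun p : ℝ × ℝ => Ψ p.1 p.2)
      (Set.Ioo (-b₀) b₀ ×ˢ Set.Ioo (-g₀) g₀))
    (hΨpos : ∀ p ∈ Set.Ioo (-b₀) b₀ ×ˢ Set.Ioo (-g₀) g₀, 0 < Ψ p.1 p.2)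
    (y : Fin n → ℝ) (hy : y ≠ 0)
    (hPi : PiF Ψ (sVar a bv y) (sVar a gv y) ≠ 0) :
    (Matrix.of fun i j => fundT (Fm a bv gv Ψ) y i j).det =
      Ψ (sVar a bv y) (sVar a gv y) ^ (n + 1)
        * PiF Ψ (sVar a bv y) (sVar a gv y) ^ (n - 2)
        * GammaF Ψ (quadInv a bv bv) (quadInv a gv gv) (quadInv a bv gv)
            (sVar a bv y) (sVar a gv y)
        * a.det := by
  classical
  have hsym : ∀ i j, a i j = a j i := fun i j => by
    conv_lhs => rw [← ha.1]
    simp [Matrix.conjTranspose_apply]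
  have hSo : IsOpen (Set.Ioo (-b₀) b₀ ×ˢ Set.Ioo (-g₀) g₀) := isOpen_Ioo.prod isOpen_Ioo
  have hΨ' : ContDiffOn ℝ (⊤ : ℕ∞) (S3Aux.psip Ψ) (Set.Ioo (-b₀) b₀ ×ˢ Set.Ioo (-g₀) g₀) := hΨ
  have hSmem : ∀ z : Fin n → ℝ, z ≠ 0 →
      S3Aux.ptv a bv gv z ∈ Set.Ioo (-b₀) b₀ ×ˢ Set.Ioo (-g₀) g₀ := fun z hz =>
    S3Aux.memS ha hsym hb hg hz
  have hx : ((sVar a bv y, sVar a gv y) : ℝ × ℝ) ∈ Set.Ioo (-b₀) b₀ ×ˢ Set.Ioo (-g₀) g₀ :=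
    hSmem y hy
  have hψpos : 0 < S3Aux.psip Ψ (sVar a bv y, sVar a gv y) := hΨpos _ hx
  have hPiV : PiF Ψ (sVar a bv y) (sVar a gv y)
      = S3Aux.PiV Ψ (sVar a bv y, sVar a gv y) := by
    rw [PiF, S3Aux.Ds_eq hSo hΨ' hx, S3Aux.Dt_eq hSo hΨ' hx]
    rfl
  have hPiNe : S3Aux.PiV Ψ (sVar a bv y, sVar a gv y) ≠ 0 := hPiV ▸ hPi
  have hρ : S3Aux.rhoV Ψ (sVar a bv y, sVar a gv y) ≠ 0 := mul_ne_zero hψpos.ne' hPiNe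
  have hdet : IsUnit a.det := ha.det_pos.ne'.isUnit
  have matForm : (Matrix.of fun i j => fundT (Fm a bv gv Ψ) y i j)
      = S3Aux.rhoV Ψ (sVar a bv y, sVar a gv y) • a
        + S3Aux.Um a bv gv y * S3Aux.Wm Ψ (sVar a bv y, sVar a gv y)
            * (S3Aux.Um a bv gv y).transpose := by
    ext i j
    rw [Matrix.of_apply, S3Aux.secondDeriv hSo hΨ' hsym ha hSmem hy i j]
    simp only [S3Aux.ptv, Matrix.add_apply, Matrix.smul_apply, smul_eq_mul,
      Matrix.mul_apply, Matrix.transpose_apply, Finset.sum_mul]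
    congr 1
    rw [Finset.sum_comm]
  rw [matForm]
  have assoc1 : S3Aux.rhoV Ψ (sVar a bv y, sVar a gv y) • a
        + S3Aux.Um a bv gv y * S3Aux.Wm Ψ (sVar a bv y, sVar a gv y)
            * (S3Aux.Um a bv gv y).transpose
      = a * (S3Aux.rhoV Ψ (sVar a bv y, sVar a gv y)
          • (1 + (S3Aux.rhoV Ψ (sVar a bv y, sVar a gv y))⁻¹
              • (a⁻¹ * (S3Aux.Um a bv gv y * S3Aux.Wm Ψ (sVar a bv y, sVar a gv y)
                  * (S3Aux.Um a bv gv y).transpose)))) := by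
    conv_rhs => rw [Matrix.mul_smul, Matrix.mul_add, Matrix.mul_one, Matrix.mul_smul,
      Matrix.mul_nonsing_inv_cancel_left _ _ hdet, smul_add, smul_smul,
      mul_inv_cancel₀ hρ, one_smul]
  rw [assoc1, Matrix.det_mul, Matrix.det_smul, Fintype.card_fin]
  have assoc2 : (S3Aux.rhoV Ψ (sVar a bv y, sVar a gv y))⁻¹
        • (a⁻¹ * (S3Aux.Um a bv gv y * S3Aux.Wm Ψ (sVar a bv y, sVar a gv y)
            * (S3Aux.Um a bv gv y).transpose))
      = ((S3Aux.rhoV Ψ (sVar a bv y, sVar a gv y))⁻¹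
          • (a⁻¹ * S3Aux.Um a bv gv y * S3Aux.Wm Ψ (sVar a bv y, sVar a gv y)))
          * (S3Aux.Um a bv gv y).transpose := by
    rw [Matrix.smul_mul]
    congr 1
    simp only [Matrix.mul_assoc]
  rw [assoc2, Matrix.det_one_add_mul_comm]
  have assoc3 : (S3Aux.Um a bv gv y).transpose
        * ((S3Aux.rhoV Ψ (sVar a bv y, sVar a gv y))⁻¹
            • (a⁻¹ * S3Aux.Um a bv gv y * S3Aux.Wm Ψ (sVar a bv y, sVar a gv y)))
      = (S3Aux.rhoV Ψ (sVar a bv y, sVar a gv y))⁻¹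
          • (S3Aux.Mm (quadInv a bv bv) (quadInv a gv gv) (quadInv a bv gv)
              (sVar a bv y) (sVar a gv y) * S3Aux.Wm Ψ (sVar a bv y, sVar a gv y)) := by
    rw [Matrix.mul_smul, ← Matrix.mul_assoc, ← Matrix.mul_assoc,
      S3Aux.UtAU ha hsym hy]
  rw [assoc3, hPiV, mul_comm (a.det)]
  congr 1
  obtain ⟨m, rfl⟩ : ∃ m, n = m + 2 := ⟨n - 2, by omega⟩
  simp only [show m + 2 - 2 = m from by omega, show m + 2 + 1 = m + 3 from by omega]
  have hre : (1 : Matrix (Fin 3) (Fin 3) ℝ)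
        + (S3Aux.rhoV Ψ (sVar a bv y, sVar a gv y))⁻¹
          • (S3Aux.Mm (quadInv a bv bv) (quadInv a gv gv) (quadInv a bv gv)
              (sVar a bv y) (sVar a gv y) * S3Aux.Wm Ψ (sVar a bv y, sVar a gv y))
      = (S3Aux.rhoV Ψ (sVar a bv y, sVar a gv y))⁻¹
          • (S3Aux.rhoV Ψ (sVar a bv y, sVar a gv y) • 1
            + S3Aux.Mm (quadInv a bv bv) (quadInv a gv gv) (quadInv a bv gv)
                (sVar a bv y) (sVar a gv y) * S3Aux.Wm Ψ (sVar a bv y, sVar a gv y)) := by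
    rw [smul_add, smul_smul, inv_mul_cancel₀ hρ, one_smul]
  rw [hre, Matrix.det_smul, Fintype.card_fin]
  have key : (S3Aux.rhoV Ψ (sVar a bv y, sVar a gv y) • (1 : Matrix (Fin 3) (Fin 3) ℝ)
        + S3Aux.Mm (quadInv a bv bv) (quadInv a gv gv) (quadInv a bv gv)
            (sVar a bv y) (sVar a gv y) * S3Aux.Wm Ψ (sVar a bv y, sVar a gv y)).det
      = S3Aux.psip Ψ (sVar a bv y, sVar a gv y) ^ 4
        * S3Aux.PiV Ψ (sVar a bv y, sVar a gv y)
        * GammaF Ψ (quadInv a bv bv) (quadInv a gv gv) (quadInv a bv gv)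
            (sVar a bv y) (sVar a gv y) := by
    rw [Matrix.det_fin_three]
    simp only [Matrix.add_apply, Matrix.smul_apply, Matrix.one_apply, smul_eq_mul,
      Matrix.mul_apply, Fin.sum_univ_three, S3Aux.Mm, S3Aux.Wm, Matrix.of_apply, Matrix.cons_val',
      Matrix.cons_val_zero, Matrix.cons_val_one, Matrix.head_cons, Matrix.empty_val',
      Matrix.cons_val_fin_one, Matrix.head_fin_const, Matrix.cons_val_two, Matrix.tail_cons,
      Fin.isValue, if_true, if_false, one_ne_zero, zero_ne_one, Fin.reduceEq, ite_true,
      ite_false, mul_zero, mul_one, zero_add, add_zero]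
    simp only [GammaF, JF]
    rw [hPiV, S3Aux.DsDs_eq hSo hΨ' hx, S3Aux.DtDs_eq hSo hΨ' hx,
      S3Aux.DtDt_eq hSo hΨ' hx]
    simp only [S3Aux.rhoV, S3Aux.R1, S3Aux.R2, S3Aux.F11, S3Aux.F12, S3Aux.F21, S3Aux.F22,
      S3Aux.Ph1, S3Aux.Ph2, S3Aux.PiV]
    rw [S3Aux.H21_eq hSo hΨ' hx]
    have hPiNe3 : S3Aux.psip Ψ (sVar a bv y, sVar a gv y)
        - sVar a bv y * S3Aux.G1 Ψ (sVar a bv y, sVar a gv y)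
        - sVar a gv y * S3Aux.G2 Ψ (sVar a bv y, sVar a gv y) ≠ 0 := by
      have := hPiNe
      simpa only [S3Aux.PiV] using this
    set_option maxRecDepth 100000 in
    linear_combination (-(S3Aux.psip Ψ (sVar a bv y, sVar a gv y) ^ 4
        * ((quadInv a bv bv - sVar a bv y ^ 2) * (quadInv a gv gv - sVar a gv y ^ 2)
          - (quadInv a bv gv - sVar a bv y * sVar a gv y) ^ 2)
        * (S3Aux.H11 Ψ (sVar a bv y, sVar a gv y) * S3Aux.H22 Ψ (sVar a bv y, sVar a gv y)
          - S3Aux.H12 Ψ (sVar a bv y, sVar a gv y) ^ 2))) * mul_inv_cancel₀ hPiNe3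
  rw [key]
  refine mul_left_cancel₀ (pow_ne_zero 3 hρ) ?_
  rw [show S3Aux.rhoV Ψ (sVar a bv y, sVar a gv y) ^ 3
        * (S3Aux.rhoV Ψ (sVar a bv y, sVar a gv y) ^ (m + 2)
          * (((S3Aux.rhoV Ψ (sVar a bv y, sVar a gv y))⁻¹) ^ 3
            * (S3Aux.psip Ψ (sVar a bv y, sVar a gv y) ^ 4
              * S3Aux.PiV Ψ (sVar a bv y, sVar a gv y)
              * GammaF Ψ (quadInv a bv bv) (quadInv a gv gv) (quadInv a bv gv)
                  (sVar a bv y) (sVar a gv y))))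
      = (S3Aux.rhoV Ψ (sVar a bv y, sVar a gv y)
          * (S3Aux.rhoV Ψ (sVar a bv y, sVar a gv y))⁻¹) ^ 3
        * (S3Aux.rhoV Ψ (sVar a bv y, sVar a gv y) ^ (m + 2)
          * (S3Aux.psip Ψ (sVar a bv y, sVar a gv y) ^ 4
            * S3Aux.PiV Ψ (sVar a bv y, sVar a gv y)
            * GammaF Ψ (quadInv a bv bv) (quadInv a gv gv) (quadInv a bv gv)
                (sVar a bv y) (sVar a gv y))) from by ring,
    mul_inv_cancel₀ hρ, one_pow, one_mul]
  rw [show S3Aux.rhoV Ψ (sVar a bv y, sVar a gv y)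
      = S3Aux.psip Ψ (sVar a bv y, sVar a gv y)
        * S3Aux.PiV Ψ (sVar a bv y, sVar a gv y) from rfl]
  rw [show Ψ (sVar a bv y) (sVar a gv y)
      = S3Aux.psip Ψ (sVar a bv y, sVar a gv y) from rfl]
  ring
end
end

section
/- At every y ∈ ℝⁿ∖{0}, the Cartan tensor C_{ijk} = ½·∂g_{ij}/∂y^k of the (α,β,γ)-metric F is given by C_{ijk} = (ρ₁/2)[h_kα_{ij} + h_iα_{jk} + h_jα_{ik}] + (ρ̄₁/2)[h̄_kα_{ij} + h̄_iα_{jk} + h̄_jα_{ik}] + ((ρ₀)_{s̄}/(2α))[h_ih_jh̄_k + h_jh_kh̄_i + h_ih_kh̄_j] + ((ρ̄₀)_{s}/(2α))[h̄_ih̄_jh_k + h̄_jh̄_kh_i + h̄_ih̄_kh_j] + ((ρ₀)_{s}/(2α))h_ih_jh_k + ((ρ̄₀)_{s̄}/(2α))h̄_ih̄_jh̄_k, where (ρ₀)_s, (ρ₀)_s̄, (ρ̄₀)_s, (ρ̄₀)_s̄ denote the partial derivatives of the functions ρ₀(s,s̄) and ρ̄₀(s,s̄) evaluated at (s,s̄).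 -/
noncomputable section

open Set

-- PART 1 : two-variable calculus toolkit
def Gu (g : ℝ → ℝ → ℝ) : ℝ × ℝ → ℝ := fun p => g p.1 p.2

lemma hasDerivAt_slice1 {g : ℝ → ℝ → ℝ} {p q : ℝ}
    (hd : DifferentiableAt ℝ (Gu g) (p, q)) :
    HasDerivAt (fun u => g u q) (fderiv ℝ (Gu g) (p, q) ((1:ℝ), (0:ℝ))) p := by
  have hline : HasDerivAt (fun u : ℝ => ((u, q) : ℝ × ℝ)) ((1:ℝ), (0:ℝ)) p :=
    (hasDerivAt_id p).prodMk (hasDerivAt_const p q)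
  exact hd.hasFDerivAt.comp_hasDerivAt p hline

lemma hasDerivAt_slice2 {g : ℝ → ℝ → ℝ} {p q : ℝ}
    (hd : DifferentiableAt ℝ (Gu g) (p, q)) :
    HasDerivAt (fun v => g p v) (fderiv ℝ (Gu g) (p, q) ((0:ℝ), (1:ℝ))) q := by
  have hline : HasDerivAt (fun v : ℝ => ((p, v) : ℝ × ℝ)) ((0:ℝ), (1:ℝ)) q :=
    (hasDerivAt_const q p).prodMk (hasDerivAt_id q)
  exact hd.hasFDerivAt.comp_hasDerivAt q hline

lemma ds_eq_fderiv {g : ℝ → ℝ → ℝ} {p q : ℝ}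
    (hd : DifferentiableAt ℝ (Gu g) (p, q)) :
    Ds g p q = fderiv ℝ (Gu g) (p, q) ((1:ℝ), (0:ℝ)) := (hasDerivAt_slice1 hd).deriv

lemma dt_eq_fderiv {g : ℝ → ℝ → ℝ} {p q : ℝ}
    (hd : DifferentiableAt ℝ (Gu g) (p, q)) :
    Dt g p q = fderiv ℝ (Gu g) (p, q) ((0:ℝ), (1:ℝ)) := (hasDerivAt_slice2 hd).deriv

lemma hasDerivAt_Ds {g : ℝ → ℝ → ℝ} {p q : ℝ}
    (hd : DifferentiableAt ℝ (Gu g) (p, q)) :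
    HasDerivAt (fun u => g u q) (Ds g p q) p := by
  rw [ds_eq_fderiv hd]; exact hasDerivAt_slice1 hd

lemma hasDerivAt_Dt {g : ℝ → ℝ → ℝ} {p q : ℝ}
    (hd : DifferentiableAt ℝ (Gu g) (p, q)) :
    HasDerivAt (fun v => g p v) (Dt g p q) q := by
  rw [dt_eq_fderiv hd]; exact hasDerivAt_slice2 hd

lemma diffAt_of_contDiffOn {g : ℝ → ℝ → ℝ} {U : Set (ℝ × ℝ)} (hU : IsOpen U)
    (hg : ContDiffOn ℝ (⊤ : ℕ∞) (Gu g) U) {x : ℝ × ℝ} (hx : x ∈ U) :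
    DifferentiableAt ℝ (Gu g) x :=
  (hg.contDiffAt (hU.mem_nhds hx)).differentiableAt (by simp)

lemma contDiffOn_Gu_Ds {g : ℝ → ℝ → ℝ} {U : Set (ℝ × ℝ)} (hU : IsOpen U)
    (hg : ContDiffOn ℝ (⊤ : ℕ∞) (Gu g) U) : ContDiffOn ℝ (⊤ : ℕ∞) (Gu (Ds g)) U := by
  have h1 : ContDiffOn ℝ (⊤ : ℕ∞) (fun x => fderiv ℝ (Gu g) x) U :=
    hg.fderiv_of_isOpen hU (by simp)
  have h2 : ContDiffOn ℝ (⊤ : ℕ∞) (fun x => fderiv ℝ (Gu g) x ((1:ℝ), (0:ℝ))) U :=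
    h1.clm_apply contDiffOn_const
  refine h2.congr fun x hx => ?_
  obtain ⟨p, q⟩ := x
  exact ds_eq_fderiv (diffAt_of_contDiffOn hU hg hx)

lemma contDiffOn_Gu_Dt {g : ℝ → ℝ → ℝ} {U : Set (ℝ × ℝ)} (hU : IsOpen U)
    (hg : ContDiffOn ℝ (⊤ : ℕ∞) (Gu g) U) : ContDiffOn ℝ (⊤ : ℕ∞) (Gu (Dt g)) U := by
  have h1 : ContDiffOn ℝ (⊤ : ℕ∞) (fun x => fderiv ℝ (Gu g) x) U :=
    hg.fderiv_of_isOpen hU (by simp)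
  have h2 : ContDiffOn ℝ (⊤ : ℕ∞) (fun x => fderiv ℝ (Gu g) x ((0:ℝ), (1:ℝ))) U :=
    h1.clm_apply contDiffOn_const
  refine h2.congr fun x hx => ?_
  obtain ⟨p, q⟩ := x
  exact dt_eq_fderiv (diffAt_of_contDiffOn hU hg hx)

lemma clairaut {g : ℝ → ℝ → ℝ} {U : Set (ℝ × ℝ)} (hU : IsOpen U)
    (hg : ContDiffOn ℝ (⊤ : ℕ∞) (Gu g) U) {p q : ℝ} (hpq : (p, q) ∈ U) :
    Ds (Dt g) p q = Dt (Ds g) p q := by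
  set A : ℝ × ℝ → (ℝ × ℝ) →L[ℝ] ℝ := fun x => fderiv ℝ (Gu g) x with hA
  have hAc : ContDiffOn ℝ (⊤ : ℕ∞) A U := hg.fderiv_of_isOpen hU (by simp)
  have hAd : DifferentiableAt ℝ A (p, q) :=
    (hAc.contDiffAt (hU.mem_nhds hpq)).differentiableAt (by simp)
  have hev : ∀ᶠ x in nhds (p, q), HasFDerivAt (Gu g) (A x) x := by
    filter_upwards [hU.mem_nhds hpq] with x hx
    exact (diffAt_of_contDiffOn hU hg hx).hasFDerivAt
  have hsymm := second_derivative_symmetric_of_eventually hev hAd.hasFDerivAt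
  -- Ds (Dt g) p q
  have e1 : Ds (Dt g) p q = fderiv ℝ A (p, q) ((1:ℝ), (0:ℝ)) ((0:ℝ), (1:ℝ)) := by
    have hnear : ∀ᶠ u in nhds p, Dt g u q = A (u, q) ((0:ℝ), (1:ℝ)) := by
      have hcont : Continuous fun u : ℝ => ((u, q) : ℝ × ℝ) := by fun_prop
      filter_upwards [hcont.continuousAt.preimage_mem_nhds (hU.mem_nhds hpq)] with u hu
      exact dt_eq_fderiv (diffAt_of_contDiffOn hU hg hu)
    have : Ds (Dt g) p q = deriv (fun u => A (u, q) ((0:ℝ), (1:ℝ))) p := by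
      unfold Ds
      exact Filter.EventuallyEq.deriv_eq hnear
    rw [this]
    have hH : DifferentiableAt ℝ (fun x : ℝ × ℝ => A x ((0:ℝ), (1:ℝ))) (p, q) :=
      hAd.clm_apply (differentiableAt_const _)
    have h2 : HasDerivAt (fun u => A (u, q) ((0:ℝ), (1:ℝ)))
        (fderiv ℝ (fun x : ℝ × ℝ => A x ((0:ℝ), (1:ℝ))) (p, q) ((1:ℝ), (0:ℝ))) p := by
      have hline : HasDerivAt (fun u : ℝ => ((u, q) : ℝ × ℝ)) ((1:ℝ), (0:ℝ)) p :=
        (hasDerivAt_id p).prodMk (hasDerivAt_const p q)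
      exact hH.hasFDerivAt.comp_hasDerivAt p hline
    rw [h2.deriv, fderiv_clm_apply hAd (differentiableAt_const _)]
    simp
  have e2 : Dt (Ds g) p q = fderiv ℝ A (p, q) ((0:ℝ), (1:ℝ)) ((1:ℝ), (0:ℝ)) := by
    have hnear : ∀ᶠ v in nhds q, Ds g p v = A (p, v) ((1:ℝ), (0:ℝ)) := by
      have hcont : Continuous fun v : ℝ => ((p, v) : ℝ × ℝ) := by fun_prop
      filter_upwards [hcont.continuousAt.preimage_mem_nhds (hU.mem_nhds hpq)] with v hv
      exact ds_eq_fderiv (diffAt_of_contDiffOn hU hg hv)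
    have : Dt (Ds g) p q = deriv (fun v => A (p, v) ((1:ℝ), (0:ℝ))) q := by
      unfold Dt
      exact Filter.EventuallyEq.deriv_eq hnear
    rw [this]
    have hH : DifferentiableAt ℝ (fun x : ℝ × ℝ => A x ((1:ℝ), (0:ℝ))) (p, q) :=
      hAd.clm_apply (differentiableAt_const _)
    have h2 : HasDerivAt (fun v => A (p, v) ((1:ℝ), (0:ℝ)))
        (fderiv ℝ (fun x : ℝ × ℝ => A x ((1:ℝ), (0:ℝ))) (p, q) ((0:ℝ), (1:ℝ))) q := by
      have hline : HasDerivAt (fun v : ℝ => ((p, v) : ℝ × ℝ)) ((0:ℝ), (1:ℝ)) q :=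
        (hasDerivAt_const q p).prodMk (hasDerivAt_id q)
      exact hH.hasFDerivAt.comp_hasDerivAt q hline
    rw [h2.deriv, fderiv_clm_apply hAd (differentiableAt_const _)]
    simp
  rw [e1, e2, hsymm]

def Mv {n : ℕ} (a : Matrix (Fin n) (Fin n) ℝ) (z : Fin n → ℝ) (j : Fin n) : ℝ :=
  ∑ l, a j l * z l
def Qf {n : ℕ} (a : Matrix (Fin n) (Fin n) ℝ) (z : Fin n → ℝ) : ℝ :=
  ∑ i, ∑ j, a i j * z i * z j
def Lof {n : ℕ} (c : Fin n → ℝ) : (Fin n → ℝ) →L[ℝ] ℝ :=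
  ∑ i, c i • ContinuousLinearMap.proj i
lemma Lof_apply {n : ℕ} (c w : Fin n → ℝ) : Lof c w = ∑ i, c i * w i := by
  simp [Lof]
lemma Lof_single {n : ℕ} (c : Fin n → ℝ) (k : Fin n) : Lof c (Pi.single k 1) = c k := by
  simp [Lof_apply, Pi.single_apply]
lemma ds_eq_fderiv' {g : ℝ → ℝ → ℝ} {p q : ℝ}
    (hd : DifferentiableAt ℝ (Gu g) (p, q)) :
    Ds g p q = fderiv ℝ (Gu g) (p, q) ((1:ℝ), (0:ℝ)) := by
  have hline : HasDerivAt (fun u : ℝ => ((u, q) : ℝ × ℝ)) ((1:ℝ), (0:ℝ)) p :=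
    (hasDerivAt_id p).prodMk (hasDerivAt_const p q)
  exact (hd.hasFDerivAt.comp_hasDerivAt p hline).deriv
lemma dt_eq_fderiv' {g : ℝ → ℝ → ℝ} {p q : ℝ}
    (hd : DifferentiableAt ℝ (Gu g) (p, q)) :
    Dt g p q = fderiv ℝ (Gu g) (p, q) ((0:ℝ), (1:ℝ)) := by
  have hline : HasDerivAt (fun v : ℝ => ((p, v) : ℝ × ℝ)) ((0:ℝ), (1:ℝ)) q :=
    (hasDerivAt_const q p).prodMk (hasDerivAt_id q)
  exact (hd.hasFDerivAt.comp_hasDerivAt q hline).deriv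


-- PART 2 : partial-derivative predicate
def HasPdAt {n : ℕ} (f : (Fin n → ℝ) → ℝ) (z : Fin n → ℝ) (c : Fin n → ℝ) : Prop :=
  ∃ L : (Fin n → ℝ) →L[ℝ] ℝ, HasFDerivAt f L z ∧ ∀ k, L (Pi.single k 1) = c k

namespace HasPdAt

variable {n : ℕ} {f g : (Fin n → ℝ) → ℝ} {z cf cg : Fin n → ℝ}

lemma pd_eq (h : HasPdAt f z cf) (k : Fin n) : pd f z k = cf k := by
  obtain ⟨L, hL, he⟩ := h
  rw [pd, hL.fderiv, he]

lemma differentiableAt (h : HasPdAt f z cf) : DifferentiableAt ℝ f z := by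
  obtain ⟨L, hL, _⟩ := h
  exact hL.differentiableAt

lemma congr_c (h : HasPdAt f z cf) (e : ∀ k, cf k = cg k) : HasPdAt f z cg := by
  obtain ⟨L, hL, he⟩ := h
  exact ⟨L, hL, fun k => (he k).trans (e k)⟩

lemma const (r : ℝ) (z : Fin n → ℝ) : HasPdAt (fun _ => r) z (fun _ => 0) :=
  ⟨0, hasFDerivAt_const r z, by simp⟩

lemma add (hf : HasPdAt f z cf) (hg : HasPdAt g z cg) :
    HasPdAt (fun w => f w + g w) z (fun k => cf k + cg k) := by
  obtain ⟨L, hL, he⟩ := hf; obtain ⟨M, hM, hm⟩ := hg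
  exact ⟨L + M, hL.add hM, fun k => by simp [he k, hm k]⟩

lemma sub (hf : HasPdAt f z cf) (hg : HasPdAt g z cg) :
    HasPdAt (fun w => f w - g w) z (fun k => cf k - cg k) := by
  obtain ⟨L, hL, he⟩ := hf; obtain ⟨M, hM, hm⟩ := hg
  exact ⟨L - M, hL.sub hM, fun k => by simp [he k, hm k]⟩

lemma neg (hf : HasPdAt f z cf) : HasPdAt (fun w => -f w) z (fun k => -cf k) := by
  obtain ⟨L, hL, he⟩ := hf
  exact ⟨-L, hL.neg, fun k => by simp [he k]⟩

lemma mul (hf : HasPdAt f z cf) (hg : HasPdAt g z cg) :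
    HasPdAt (fun w => f w * g w) z (fun k => f z * cg k + g z * cf k) := by
  obtain ⟨L, hL, he⟩ := hf; obtain ⟨M, hM, hm⟩ := hg
  exact ⟨f z • M + g z • L, hL.mul hM, fun k => by simp [he k, hm k]⟩

lemma const_mul (hf : HasPdAt f z cf) (r : ℝ) :
    HasPdAt (fun w => r * f w) z (fun k => r * cf k) := by
  obtain ⟨L, hL, he⟩ := hf
  exact ⟨r • L, hL.const_mul r, fun k => by simp [he k]⟩

lemma scomp {h : ℝ → ℝ} {h' : ℝ} (hh : HasDerivAt h h' (f z)) (hf : HasPdAt f z cf) :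
    HasPdAt (fun w => h (f w)) z (fun k => h' * cf k) := by
  obtain ⟨L, hL, he⟩ := hf
  exact ⟨h' • L, hh.comp_hasFDerivAt z hL, fun k => by simp [he k]⟩

lemma congr_fun' (h : HasPdAt f z cf) (e : ∀ w, f w = g w) : HasPdAt g z cf := by
  obtain ⟨L, hL, he⟩ := h
  have : f = g := funext e
  exact ⟨L, this ▸ hL, he⟩

lemma div (hf : HasPdAt f z cf) (hg : HasPdAt g z cg) (h0 : g z ≠ 0) :
    HasPdAt (fun w => f w / g w) z
      (fun k => (cf k * g z - f z * cg k) / g z ^ 2) := by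
  have hinv : HasPdAt (fun w => (g w)⁻¹) z (fun k => -(g z ^ 2)⁻¹ * cg k) :=
    scomp (hasDerivAt_inv h0) hg
  have hm := hf.mul hinv
  refine (hm.congr_c fun k => ?_).congr_fun' fun w => (div_eq_mul_inv (f w) (g w)).symm
  field_simp
  ring

lemma pow (hf : HasPdAt f z cf) (m : ℕ) :
    HasPdAt (fun w => f w ^ m) z (fun k => m * f z ^ (m - 1) * cf k) := by
  have h := scomp (hasDerivAt_pow m (f z)) hf
  exact h.congr_c fun k => by ring

end HasPdAt

lemma pd_congr {n : ℕ} {f g : (Fin n → ℝ) → ℝ} {z : Fin n → ℝ} (h : f =ᶠ[nhds z] g)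
    (k : Fin n) : pd f z k = pd g z k := by
  unfold pd; rw [Filter.EventuallyEq.fderiv_eq h]
-- PART 3 : base derivative lemmas
section Base

variable {n : ℕ} (a : Matrix (Fin n) (Fin n) ℝ) (v : Fin n → ℝ) (z : Fin n → ℝ)

lemma hasFDerivAt_coord (i : Fin n) :
    HasFDerivAt (fun y : Fin n → ℝ => y i)
      (ContinuousLinearMap.proj i : (Fin n → ℝ) →L[ℝ] ℝ) z :=
  (ContinuousLinearMap.proj i : (Fin n → ℝ) →L[ℝ] ℝ).hasFDerivAt

lemma hasFDerivAt_oneForm : HasFDerivAt (oneForm v) (Lof v) z := by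
  unfold oneForm Lof
  exact HasFDerivAt.fun_sum fun i _ => (hasFDerivAt_coord z i).const_mul (v i)

lemma hasPdAt_oneForm : HasPdAt (oneForm v) z v :=
  ⟨Lof v, hasFDerivAt_oneForm v z, fun k => Lof_single v k⟩

lemma hasPdAt_Mv (j : Fin n) : HasPdAt (fun w => Mv a w j) z (a j) := by
  have h := hasPdAt_oneForm (a j) z
  exact h.congr_fun' fun w => rfl

lemma hasPdAt_Qf (hsym : ∀ i j, a i j = a j i) :
    HasPdAt (Qf a) z (fun k => 2 * Mv a z k) := by
  have hterm : ∀ i : Fin n,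
      HasFDerivAt (fun w : Fin n → ℝ => w i * oneForm (a i) w)
        (z i • Lof (a i) + oneForm (a i) z • ContinuousLinearMap.proj i) z := fun i =>
    (hasFDerivAt_coord z i).mul (hasFDerivAt_oneForm (a i) z)
  have hfun : HasFDerivAt (fun w : Fin n → ℝ => ∑ i, w i * oneForm (a i) w)
      (∑ i, (z i • Lof (a i) + oneForm (a i) z • ContinuousLinearMap.proj i)) z :=
    HasFDerivAt.fun_sum fun i _ => hterm i
  have heq : (fun w : Fin n → ℝ => ∑ i, w i * oneForm (a i) w) = Qf a := by
    funext w
    unfold Qf oneForm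
    exact Finset.sum_congr rfl fun i _ => by
      rw [Finset.mul_sum]; exact Finset.sum_congr rfl fun j _ => by ring
  refine ⟨_, heq ▸ hfun, fun k => ?_⟩
  have e1 : ∀ i : Fin n,
      ((z i • Lof (a i) + oneForm (a i) z • ContinuousLinearMap.proj i :
        (Fin n → ℝ) →L[ℝ] ℝ)) (Pi.single k 1)
        = z i * a i k + oneForm (a i) z * (Pi.single k 1 : Fin n → ℝ) i := by
    intro i
    simp [Lof_single, smul_eq_mul]
  rw [ContinuousLinearMap.sum_apply]
  rw [Finset.sum_congr rfl fun i _ => e1 i]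
  rw [Finset.sum_add_distrib]
  have e2 : ∑ i, oneForm (a i) z * (Pi.single k 1 : Fin n → ℝ) i = oneForm (a k) z := by
    simp [Pi.single_apply, mul_ite, Finset.sum_ite_eq']
  have e3 : ∑ i, z i * a i k = Mv a z k := by
    unfold Mv
    exact Finset.sum_congr rfl fun i _ => by rw [hsym i k]; ring
  rw [e2, e3]
  have e4 : oneForm (a k) z = Mv a z k := rfl
  rw [e4]; ring

lemma hasPdAt_alph (hsym : ∀ i j, a i j = a j i) (hQ : 0 < Qf a z) :
    HasPdAt (alph a) z (fun k => Mv a z k / alph a z) := by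
  have h := (hasPdAt_Qf a z hsym).scomp (h := fun x => Real.sqrt x)
    (Real.hasDerivAt_sqrt hQ.ne')
  have hα : alph a z = Real.sqrt (Qf a z) := rfl
  have hα0 : Real.sqrt (Qf a z) ≠ 0 := (Real.sqrt_pos.mpr hQ).ne'
  refine (h.congr_c fun k => ?_).congr_fun' fun w => rfl
  rw [hα]
  field_simp

def Sd {n : ℕ} (a : Matrix (Fin n) (Fin n) ℝ) (v z : Fin n → ℝ) (k : Fin n) : ℝ :=
  v k / alph a z - oneForm v z * Mv a z k / alph a z ^ 3

lemma hasPdAt_sVar (hsym : ∀ i j, a i j = a j i) (hQ : 0 < Qf a z) :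
    HasPdAt (sVar a v) z (Sd a v z) := by
  have hα0 : alph a z ≠ 0 := by
    have : alph a z = Real.sqrt (Qf a z) := rfl
    rw [this]; exact (Real.sqrt_pos.mpr hQ).ne'
  have h := (hasPdAt_oneForm v z).div (hasPdAt_alph a z hsym hQ) hα0
  refine (h.congr_c fun k => ?_).congr_fun' fun w => rfl
  unfold Sd
  field_simp

lemma hasPdAt_comp2 {g : ℝ → ℝ → ℝ} {f₁ f₂ : (Fin n → ℝ) → ℝ} {c₁ c₂ : Fin n → ℝ}
    {z : Fin n → ℝ} (hd : DifferentiableAt ℝ (Gu g) (f₁ z, f₂ z))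
    (h₁ : HasPdAt f₁ z c₁) (h₂ : HasPdAt f₂ z c₂) :
    HasPdAt (fun w => g (f₁ w) (f₂ w)) z
      (fun k => Ds g (f₁ z) (f₂ z) * c₁ k + Dt g (f₁ z) (f₂ z) * c₂ k) := by
  obtain ⟨L₁, hL₁, he₁⟩ := h₁
  obtain ⟨L₂, hL₂, he₂⟩ := h₂
  have hp : HasFDerivAt (fun w => (f₁ w, f₂ w)) (L₁.prod L₂) z := hL₁.prodMk hL₂
  have hc := hd.hasFDerivAt.comp z hp
  refine ⟨_, hc, fun k => ?_⟩
  have hev : (L₁.prod L₂) (Pi.single k 1) = (c₁ k, c₂ k) := by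
    simp [ContinuousLinearMap.prod_apply, he₁ k, he₂ k]
  rw [ContinuousLinearMap.comp_apply, hev]
  have hsplit : ((c₁ k, c₂ k) : ℝ × ℝ)
      = c₁ k • ((1:ℝ), (0:ℝ)) + c₂ k • ((0:ℝ), (1:ℝ)) := by
    simp [Prod.ext_iff]
  rw [hsplit, map_add, map_smul, map_smul, smul_eq_mul, smul_eq_mul,
    ← ds_eq_fderiv' hd, ← dt_eq_fderiv' hd]
  ring

end Base
-- PART 4 : positivity and Cauchy-Schwarz
section PosCS
open Matrix

variable {n : ℕ} {a : Matrix (Fin n) (Fin n) ℝ}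

lemma sym_of_posdef (ha : a.PosDef) : ∀ i j, a i j = a j i := by
  intro i j
  have h := ha.1
  have := congrFun (congrFun h i) j
  simpa [Matrix.conjTranspose_apply] using this.symm

lemma Qf_eq_dot (z : Fin n → ℝ) : Qf a z = z ⬝ᵥ a.mulVec z := by
  unfold Qf dotProduct Matrix.mulVec dotProduct
  exact Finset.sum_congr rfl fun i _ => by
    rw [Finset.mul_sum]
    exact Finset.sum_congr rfl fun j _ => by ring

lemma Qf_pos (ha : a.PosDef) {z : Fin n → ℝ} (hz : z ≠ 0) : 0 < Qf a z := by
  have h := ha.dotProduct_mulVec_pos hz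
  rw [Qf_eq_dot]
  simpa using h

lemma Qf_nonneg (ha : a.PosDef) (z : Fin n → ℝ) : 0 ≤ Qf a z := by
  rcases eq_or_ne z 0 with h | h
  · subst h; simp [Qf]
  · exact (Qf_pos ha h).le

lemma inner_symm (ha : a.PosDef) (u w : Fin n → ℝ) :
    u ⬝ᵥ a.mulVec w = w ⬝ᵥ a.mulVec u := by
  have ht : aᵀ = a := by
    have h := ha.1
    rw [Matrix.IsHermitian] at h
    simpa using h
  rw [Matrix.dotProduct_mulVec, ← Matrix.mulVec_transpose, ht, dotProduct_comm]

lemma inner_nonneg (ha : a.PosDef) (w : Fin n → ℝ) : 0 ≤ w ⬝ᵥ a.mulVec w := by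
  have := ha.posSemidef.dotProduct_mulVec_nonneg w
  simpa using this

lemma cauchy_schwarz (ha : a.PosDef) (v z : Fin n → ℝ) :
    (oneForm v z) ^ 2 ≤ quadInv a v v * Qf a z := by
  have hdet : IsUnit a.det := isUnit_iff_ne_zero.mpr ha.det_pos.ne'
  set c : Fin n → ℝ := a⁻¹.mulVec v with hc
  have hac : a.mulVec c = v := by
    rw [hc, Matrix.mulVec_mulVec, Matrix.mul_nonsing_inv a hdet, Matrix.one_mulVec]
  have hof : oneForm v z = c ⬝ᵥ a.mulVec z := by
    rw [inner_symm ha c z, hac]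
    unfold oneForm dotProduct
    exact Finset.sum_congr rfl fun i _ => mul_comm _ _
  have hquad : quadInv a v v = c ⬝ᵥ a.mulVec c := by
    rw [hac]
    unfold quadInv dotProduct
    rw [hc]
    unfold Matrix.mulVec dotProduct
    exact Finset.sum_congr rfl fun i _ => by
      rw [Finset.sum_mul]
      exact Finset.sum_congr rfl fun j _ => by ring
  set B := c ⬝ᵥ a.mulVec c with hB
  set C := c ⬝ᵥ a.mulVec z with hC
  rw [hof, hquad, Qf_eq_dot]
  rcases eq_or_lt_of_le (inner_nonneg ha c) with h0 | hpos
  · -- B = 0 forces c = 0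
    have hc0 : c = 0 := by
      by_contra hne
      exact absurd (ha.dotProduct_mulVec_pos hne) (by simpa using h0.symm.le.not_gt)
    have hC0 : C = 0 := by rw [hC, hc0]; simp
    have hB0 : B = 0 := by rw [hB, hc0]; simp
    rw [hC0, hB0]
    simp
  · have hexp : 0 ≤ (B • z - C • c) ⬝ᵥ a.mulVec (B • z - C • c) := inner_nonneg ha _
    have hzc : z ⬝ᵥ a.mulVec c = C := by rw [inner_symm ha]
    have hE : (B • z - C • c) ⬝ᵥ a.mulVec (B • z - C • c)
        = B * (B * (z ⬝ᵥ a.mulVec z) - C * C) := by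
      rw [Matrix.mulVec_sub, Matrix.mulVec_smul, Matrix.mulVec_smul]
      rw [sub_dotProduct, smul_dotProduct, smul_dotProduct]
      rw [dotProduct_sub, dotProduct_sub,
        dotProduct_smul, dotProduct_smul,
        dotProduct_smul, dotProduct_smul]
      rw [hzc]
      simp only [smul_eq_mul, ← hB, ← hC]
      ring
    rw [hE] at hexp
    have := (mul_nonneg_iff_of_pos_left hpos).mp hexp
    nlinarith [this]

lemma sVar_mem (ha : a.PosDef) {v : Fin n → ℝ} {r : ℝ} (hr : Real.sqrt (quadInv a v v) < r)
    {z : Fin n → ℝ} (hz : z ≠ 0) : sVar a v z ∈ Set.Ioo (-r) r := by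
  have hQ := Qf_pos ha hz
  have hα : alph a z = Real.sqrt (Qf a z) := rfl
  have hα0 : 0 < alph a z := by rw [hα]; exact Real.sqrt_pos.mpr hQ
  have hqnn : 0 ≤ quadInv a v v := by
    by_contra hneg
    push_neg at hneg
    nlinarith [cauchy_schwarz ha v z, sq_nonneg (oneForm v z), hQ]
  have hr0 : 0 ≤ Real.sqrt (quadInv a v v) := Real.sqrt_nonneg _
  have hq_lt : quadInv a v v < r ^ 2 := by
    have := Real.sq_sqrt hqnn
    nlinarith [hr, hr0]
  have hs2 : (sVar a v z) ^ 2 < r ^ 2 := by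
    have hcs := cauchy_schwarz ha v z
    have hαsq : alph a z ^ 2 = Qf a z := by
      rw [hα]; exact Real.sq_sqrt hQ.le
    have : sVar a v z ^ 2 = (oneForm v z) ^ 2 / Qf a z := by
      unfold sVar
      rw [div_pow, hαsq]
    rw [this]
    rw [div_lt_iff₀ hQ]
    calc (oneForm v z) ^ 2 ≤ quadInv a v v * Qf a z := hcs
    _ < r ^ 2 * Qf a z := by nlinarith [hq_lt, hQ]
  have hrpos : 0 < r := lt_of_le_of_lt hr0 hr
  constructor
  · nlinarith [hs2]
  · nlinarith [hs2]

end PosCS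
-- PART 5 : the squared function Φ and its partials vs the ρ quantities
def Phif (Ψ : ℝ → ℝ → ℝ) : ℝ → ℝ → ℝ := fun p q => Ψ p q ^ 2

section PhiFacts

variable {Ψ : ℝ → ℝ → ℝ} {U : Set (ℝ × ℝ)} (hU : IsOpen U)
  (hΨ : ContDiffOn ℝ (⊤ : ℕ∞) (Gu Ψ) U)

include hU

lemma ds_congr_on {g₁ g₂ : ℝ → ℝ → ℝ} {p q : ℝ} (hpq : (p, q) ∈ U)
    (h : ∀ x ∈ U, g₁ x.1 x.2 = g₂ x.1 x.2) : Ds g₁ p q = Ds g₂ p q := by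
  unfold Ds
  apply Filter.EventuallyEq.deriv_eq
  have hcont : Continuous fun u : ℝ => ((u, q) : ℝ × ℝ) := by fun_prop
  filter_upwards [hcont.continuousAt.preimage_mem_nhds (hU.mem_nhds hpq)] with u hu
  exact h _ hu

lemma dt_congr_on {g₁ g₂ : ℝ → ℝ → ℝ} {p q : ℝ} (hpq : (p, q) ∈ U)
    (h : ∀ x ∈ U, g₁ x.1 x.2 = g₂ x.1 x.2) : Dt g₁ p q = Dt g₂ p q := by
  unfold Dt
  apply Filter.EventuallyEq.deriv_eq
  have hcont : Continuous fun v : ℝ => ((p, v) : ℝ × ℝ) := by fun_prop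
  filter_upwards [hcont.continuousAt.preimage_mem_nhds (hU.mem_nhds hpq)] with v hv
  exact h _ hv

include hΨ

lemma contDiffOn_Gu_Phif : ContDiffOn ℝ (⊤ : ℕ∞) (Gu (Phif Ψ)) U := hΨ.pow 2

lemma dsPhif_eq (x : ℝ × ℝ) (hx : x ∈ U) :
    Ds (Phif Ψ) x.1 x.2 = 2 * Ψ x.1 x.2 * Ds Ψ x.1 x.2 := by
  obtain ⟨p, q⟩ := x
  have h1 : HasDerivAt (fun u => Ψ u q) (Ds Ψ p q) p :=
    hasDerivAt_Ds (diffAt_of_contDiffOn hU hΨ hx)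
  have h2 := h1.fun_pow 2
  have h3 : Ds (Phif Ψ) p q = deriv (fun u => Ψ u q ^ 2) p := rfl
  rw [h3, h2.deriv]
  ring

lemma dtPhif_eq (x : ℝ × ℝ) (hx : x ∈ U) :
    Dt (Phif Ψ) x.1 x.2 = 2 * Ψ x.1 x.2 * Dt Ψ x.1 x.2 := by
  obtain ⟨p, q⟩ := x
  have h1 : HasDerivAt (fun v => Ψ p v) (Dt Ψ p q) q :=
    hasDerivAt_Dt (diffAt_of_contDiffOn hU hΨ hx)
  have h2 := h1.fun_pow 2
  have h3 : Dt (Phif Ψ) p q = deriv (fun v => Ψ p v ^ 2) q := rfl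
  rw [h3, h2.deriv]
  ring

lemma dsdsPhif_eq (x : ℝ × ℝ) (hx : x ∈ U) :
    Ds (Ds (Phif Ψ)) x.1 x.2 = 2 * rho0F Ψ x.1 x.2 := by
  obtain ⟨p, q⟩ := x
  have e : Ds (Ds (Phif Ψ)) p q = Ds (fun p' q' => 2 * Ψ p' q' * Ds Ψ p' q') p q :=
    ds_congr_on hU hx (fun x' hx' => dsPhif_eq hU hΨ x' hx')
  rw [e]
  have h1 : HasDerivAt (fun u => Ψ u q) (Ds Ψ p q) p :=
    hasDerivAt_Ds (diffAt_of_contDiffOn hU hΨ hx)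
  have h2 : HasDerivAt (fun u => Ds Ψ u q) (Ds (Ds Ψ) p q) p :=
    hasDerivAt_Ds (diffAt_of_contDiffOn hU (contDiffOn_Gu_Ds hU hΨ) hx)
  have h3 := (h1.fun_mul h2).const_mul 2
  have h5 : (fun u => 2 * Ψ u q * Ds Ψ u q) = (fun u => 2 * (Ψ u q * Ds Ψ u q)) := by
    funext u; ring
  have h4 : Ds (fun p' q' => 2 * Ψ p' q' * Ds Ψ p' q') p q
      = deriv (fun u => 2 * Ψ u q * Ds Ψ u q) p := rfl
  rw [h4, h5, h3.deriv]
  unfold rho0F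
  ring

lemma dtdsPhif_eq (x : ℝ × ℝ) (hx : x ∈ U) :
    Dt (Ds (Phif Ψ)) x.1 x.2 = 2 * rho3F Ψ x.1 x.2 := by
  obtain ⟨p, q⟩ := x
  have e : Dt (Ds (Phif Ψ)) p q = Dt (fun p' q' => 2 * Ψ p' q' * Ds Ψ p' q') p q :=
    dt_congr_on hU hx (fun x' hx' => dsPhif_eq hU hΨ x' hx')
  rw [e]
  have h1 : HasDerivAt (fun v => Ψ p v) (Dt Ψ p q) q :=
    hasDerivAt_Dt (diffAt_of_contDiffOn hU hΨ hx)
  have h2 : HasDerivAt (fun v => Ds Ψ p v) (Dt (Ds Ψ) p q) q :=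
    hasDerivAt_Dt (diffAt_of_contDiffOn hU (contDiffOn_Gu_Ds hU hΨ) hx)
  have h3 := (h1.fun_mul h2).const_mul 2
  have h5 : (fun v => 2 * Ψ p v * Ds Ψ p v) = (fun v => 2 * (Ψ p v * Ds Ψ p v)) := by
    funext v; ring
  have h4 : Dt (fun p' q' => 2 * Ψ p' q' * Ds Ψ p' q') p q
      = deriv (fun v => 2 * Ψ p v * Ds Ψ p v) q := rfl
  rw [h4, h5, h3.deriv]
  unfold rho3F
  ring

lemma dtdtPhif_eq (x : ℝ × ℝ) (hx : x ∈ U) :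
    Dt (Dt (Phif Ψ)) x.1 x.2 = 2 * rhobar0F Ψ x.1 x.2 := by
  obtain ⟨p, q⟩ := x
  have e : Dt (Dt (Phif Ψ)) p q = Dt (fun p' q' => 2 * Ψ p' q' * Dt Ψ p' q') p q :=
    dt_congr_on hU hx (fun x' hx' => dtPhif_eq hU hΨ x' hx')
  rw [e]
  have h1 : HasDerivAt (fun v => Ψ p v) (Dt Ψ p q) q :=
    hasDerivAt_Dt (diffAt_of_contDiffOn hU hΨ hx)
  have h2 : HasDerivAt (fun v => Dt Ψ p v) (Dt (Dt Ψ) p q) q :=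
    hasDerivAt_Dt (diffAt_of_contDiffOn hU (contDiffOn_Gu_Dt hU hΨ) hx)
  have h3 := (h1.fun_mul h2).const_mul 2
  have h5 : (fun v => 2 * Ψ p v * Dt Ψ p v) = (fun v => 2 * (Ψ p v * Dt Ψ p v)) := by
    funext v; ring
  have h4 : Dt (fun p' q' => 2 * Ψ p' q' * Dt Ψ p' q') p q
      = deriv (fun v => 2 * Ψ p v * Dt Ψ p v) q := rfl
  rw [h4, h5, h3.deriv]
  unfold rhobar0F
  ring

lemma dsdtPhif_eq (x : ℝ × ℝ) (hx : x ∈ U) :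
    Ds (Dt (Phif Ψ)) x.1 x.2 = 2 * rho3F Ψ x.1 x.2 := by
  obtain ⟨p, q⟩ := x
  show Ds (Dt (Phif Ψ)) p q = 2 * rho3F Ψ p q
  have h : Ds (Dt (Phif Ψ)) p q = Dt (Ds (Phif Ψ)) p q :=
    clairaut hU (contDiffOn_Gu_Phif hU hΨ) hx
  rw [h]
  exact dtdsPhif_eq hU hΨ _ hx

-- third order, at a point of U
lemma dsdsdsPhif_eq {p q : ℝ} (hx : (p, q) ∈ U) :
    Ds (Ds (Ds (Phif Ψ))) p q = 2 * Ds (rho0F Ψ) p q := by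
  have e : Ds (Ds (Ds (Phif Ψ))) p q = Ds (fun p' q' => 2 * rho0F Ψ p' q') p q :=
    ds_congr_on hU hx (fun x' hx' => dsdsPhif_eq hU hΨ x' hx')
  rw [e]
  unfold Ds
  exact deriv_const_mul_field 2

lemma dtdsdsPhif_eq {p q : ℝ} (hx : (p, q) ∈ U) :
    Dt (Ds (Ds (Phif Ψ))) p q = 2 * Dt (rho0F Ψ) p q := by
  have e : Dt (Ds (Ds (Phif Ψ))) p q = Dt (fun p' q' => 2 * rho0F Ψ p' q') p q :=
    dt_congr_on hU hx (fun x' hx' => dsdsPhif_eq hU hΨ x' hx')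
  rw [e]
  unfold Dt
  exact deriv_const_mul_field 2

lemma dsdtdtPhif_eq {p q : ℝ} (hx : (p, q) ∈ U) :
    Ds (Dt (Dt (Phif Ψ))) p q = 2 * Ds (rhobar0F Ψ) p q := by
  have e : Ds (Dt (Dt (Phif Ψ))) p q = Ds (fun p' q' => 2 * rhobar0F Ψ p' q') p q :=
    ds_congr_on hU hx (fun x' hx' => dtdtPhif_eq hU hΨ x' hx')
  rw [e]
  unfold Ds
  exact deriv_const_mul_field 2

lemma dtdtdtPhif_eq {p q : ℝ} (hx : (p, q) ∈ U) :
    Dt (Dt (Dt (Phif Ψ))) p q = 2 * Dt (rhobar0F Ψ) p q := by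
  have e : Dt (Dt (Dt (Phif Ψ))) p q = Dt (fun p' q' => 2 * rhobar0F Ψ p' q') p q :=
    dt_congr_on hU hx (fun x' hx' => dtdtPhif_eq hU hΨ x' hx')
  rw [e]
  unfold Dt
  exact deriv_const_mul_field 2

lemma dsdtdsPhif_eq {p q : ℝ} (hx : (p, q) ∈ U) :
    Ds (Dt (Ds (Phif Ψ))) p q = 2 * Dt (rho0F Ψ) p q := by
  have h : Ds (Dt (Ds (Phif Ψ))) p q = Dt (Ds (Ds (Phif Ψ))) p q :=
    clairaut hU (contDiffOn_Gu_Ds hU (contDiffOn_Gu_Phif hU hΨ)) hx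
  rw [h]
  exact dtdsdsPhif_eq hU hΨ hx

lemma dtdtdsPhif_eq {p q : ℝ} (hx : (p, q) ∈ U) :
    Dt (Dt (Ds (Phif Ψ))) p q = 2 * Ds (rhobar0F Ψ) p q := by
  have e : Dt (Dt (Ds (Phif Ψ))) p q = Dt (Ds (Dt (Phif Ψ))) p q :=
    dt_congr_on hU hx (fun x' hx' => by
      obtain ⟨p', q'⟩ := x'
      exact (clairaut hU (contDiffOn_Gu_Phif hU hΨ) hx').symm)
  rw [e]
  have h : Ds (Dt (Dt (Phif Ψ))) p q = Dt (Ds (Dt (Phif Ψ))) p q :=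
    clairaut hU (contDiffOn_Gu_Dt hU (contDiffOn_Gu_Phif hU hΨ)) hx
  rw [← h]
  exact dsdtdtPhif_eq hU hΨ hx

lemma dsdsdtPhif_eq {p q : ℝ} (hx : (p, q) ∈ U) :
    Ds (Ds (Dt (Phif Ψ))) p q = 2 * Dt (rho0F Ψ) p q := by
  have e : Ds (Ds (Dt (Phif Ψ))) p q = Ds (Dt (Ds (Phif Ψ))) p q :=
    ds_congr_on hU hx (fun x' hx' => by
      obtain ⟨p', q'⟩ := x'
      exact clairaut hU (contDiffOn_Gu_Phif hU hΨ) hx')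
  rw [e]
  exact dsdtdsPhif_eq hU hΨ hx

lemma dtdsdtPhif_eq {p q : ℝ} (hx : (p, q) ∈ U) :
    Dt (Ds (Dt (Phif Ψ))) p q = 2 * Ds (rhobar0F Ψ) p q := by
  have h : Ds (Dt (Dt (Phif Ψ))) p q = Dt (Ds (Dt (Phif Ψ))) p q :=
    clairaut hU (contDiffOn_Gu_Dt hU (contDiffOn_Gu_Phif hU hΨ)) hx
  rw [← h]
  exact dsdtdtPhif_eq hU hΨ hx

end PhiFacts
-- PART 6 : derivatives of the Sd coefficient functions
def Sdd {n : ℕ} (a : Matrix (Fin n) (Fin n) ℝ) (v z : Fin n → ℝ) (i j : Fin n) : ℝ :=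
  -(v j * Mv a z i + v i * Mv a z j + oneForm v z * a i j) / alph a z ^ 3
    + 3 * oneForm v z * Mv a z i * Mv a z j / alph a z ^ 5

def Sddd {n : ℕ} (a : Matrix (Fin n) (Fin n) ℝ) (v z : Fin n → ℝ) (i j k : Fin n) : ℝ :=
  -(v j * a i k + v i * a j k + v k * a i j) / alph a z ^ 3
    + (3 * (v j * Mv a z i + v i * Mv a z j + oneForm v z * a i j) * Mv a z k
      + 3 * (v k * Mv a z i * Mv a z j + oneForm v z * a i k * Mv a z j
          + oneForm v z * Mv a z i * a j k)) / alph a z ^ 5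
    - 15 * oneForm v z * Mv a z i * Mv a z j * Mv a z k / alph a z ^ 7

section SdLemmas

variable {n : ℕ} {a : Matrix (Fin n) (Fin n) ℝ} (v : Fin n → ℝ) {z : Fin n → ℝ}

lemma alph_ne_zero (hQ : 0 < Qf a z) : alph a z ≠ 0 := by
  have : alph a z = Real.sqrt (Qf a z) := rfl
  rw [this]
  exact (Real.sqrt_pos.mpr hQ).ne'

lemma hasPdAt_Sd (hsym : ∀ i j, a i j = a j i) (hQ : 0 < Qf a z) (j : Fin n) :
    HasPdAt (fun w => Sd a v w j) z (fun k => Sdd a v z j k) := by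
  have hα0 := alph_ne_zero hQ
  have Hα := hasPdAt_alph a z hsym hQ
  have T1 := (HasPdAt.const (v j) z).div Hα hα0
  have T2 := ((hasPdAt_oneForm v z).mul (hasPdAt_Mv a z j)).div (Hα.pow 3)
    (pow_ne_zero 3 hα0)
  have T := T1.sub T2
  refine (T.congr_fun' fun w => rfl).congr_c fun k => ?_
  unfold Sdd
  field_simp
  ring

lemma hasPdAt_Sdd (hsym : ∀ i j, a i j = a j i) (hQ : 0 < Qf a z) (i j : Fin n) :
    HasPdAt (fun w => Sdd a v w i j) z (fun k => Sddd a v z i j k) := by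
  have hα0 := alph_ne_zero hQ
  have Hα := hasPdAt_alph a z hsym hQ
  have N1 := ((((hasPdAt_Mv a z i).const_mul (v j)).add
      ((hasPdAt_Mv a z j).const_mul (v i))).add
      ((hasPdAt_oneForm v z).const_mul (a i j))).neg
  have T1 := N1.div (Hα.pow 3) (pow_ne_zero 3 hα0)
  have T2 := ((((hasPdAt_oneForm v z).const_mul 3).mul (hasPdAt_Mv a z i)).mul
      (hasPdAt_Mv a z j)).div (Hα.pow 5) (pow_ne_zero 5 hα0)
  have T := T1.add T2
  refine (T.congr_fun' fun w => ?_).congr_c fun k => ?_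
  · unfold Sdd
    ring
  · unfold Sddd
    field_simp
    ring

end SdLemmas
-- PART 7 : first and second derivative functions of F² and the level lemmas
def D1 {n : ℕ} (a : Matrix (Fin n) (Fin n) ℝ) (bv gv : Fin n → ℝ) (Ψ : ℝ → ℝ → ℝ)
    (j : Fin n) (w : Fin n → ℝ) : ℝ :=
  2 * Mv a w j * Phif Ψ (sVar a bv w) (sVar a gv w)
    + Qf a w * (Ds (Phif Ψ) (sVar a bv w) (sVar a gv w) * Sd a bv w j
      + Dt (Phif Ψ) (sVar a bv w) (sVar a gv w) * Sd a gv w j)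

def D2 {n : ℕ} (a : Matrix (Fin n) (Fin n) ℝ) (bv gv : Fin n → ℝ) (Ψ : ℝ → ℝ → ℝ)
    (i j : Fin n) (w : Fin n → ℝ) : ℝ :=
  2 * a j i * Phif Ψ (sVar a bv w) (sVar a gv w)
    + 2 * Mv a w j * (Ds (Phif Ψ) (sVar a bv w) (sVar a gv w) * Sd a bv w i
      + Dt (Phif Ψ) (sVar a bv w) (sVar a gv w) * Sd a gv w i)
    + 2 * Mv a w i * (Ds (Phif Ψ) (sVar a bv w) (sVar a gv w) * Sd a bv w j
      + Dt (Phif Ψ) (sVar a bv w) (sVar a gv w) * Sd a gv w j)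
    + Qf a w * ((Ds (Ds (Phif Ψ)) (sVar a bv w) (sVar a gv w) * Sd a bv w i
        + Dt (Ds (Phif Ψ)) (sVar a bv w) (sVar a gv w) * Sd a gv w i) * Sd a bv w j
      + (Ds (Dt (Phif Ψ)) (sVar a bv w) (sVar a gv w) * Sd a bv w i
        + Dt (Dt (Phif Ψ)) (sVar a bv w) (sVar a gv w) * Sd a gv w i) * Sd a gv w j
      + Ds (Phif Ψ) (sVar a bv w) (sVar a gv w) * Sdd a bv w j i
      + Dt (Phif Ψ) (sVar a bv w) (sVar a gv w) * Sdd a gv w j i)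

section Levels

variable {n : ℕ} {a : Matrix (Fin n) (Fin n) ℝ} {bv gv : Fin n → ℝ} {b₀ g₀ : ℝ}
  {Ψ : ℝ → ℝ → ℝ}

lemma mem_R (ha : a.PosDef) (hb : Real.sqrt (quadInv a bv bv) < b₀)
    (hg : Real.sqrt (quadInv a gv gv) < g₀) {z : Fin n → ℝ} (hz : z ≠ 0) :
    ((sVar a bv z, sVar a gv z) : ℝ × ℝ) ∈ Set.Ioo (-b₀) b₀ ×ˢ Set.Ioo (-g₀) g₀ :=
  Set.mem_prod.2 ⟨sVar_mem ha hb hz, sVar_mem ha hg hz⟩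

lemma level1 (ha : a.PosDef) (hb : Real.sqrt (quadInv a bv bv) < b₀)
    (hg : Real.sqrt (quadInv a gv gv) < g₀)
    (hΨ : ContDiffOn ℝ (⊤ : ℕ∞) (Gu Ψ) (Set.Ioo (-b₀) b₀ ×ˢ Set.Ioo (-g₀) g₀))
    {z : Fin n → ℝ} (hz : z ≠ 0) (j : Fin n) :
    pd (fun w => Fm a bv gv Ψ w ^ 2) z j = D1 a bv gv Ψ j z := by
  have hsym := sym_of_posdef ha
  have hQ := Qf_pos ha hz
  have hR : IsOpen (Set.Ioo (-b₀) b₀ ×ˢ Set.Ioo (-g₀) g₀) := isOpen_Ioo.prod isOpen_Ioo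
  have hmem := mem_R ha hb hg hz
  have hΦd : DifferentiableAt ℝ (Gu (Phif Ψ)) (sVar a bv z, sVar a gv z) :=
    diffAt_of_contDiffOn hR (contDiffOn_Gu_Phif hR hΨ) hmem
  have hfun : (fun w => Fm a bv gv Ψ w ^ 2)
      = fun w => Qf a w * Phif Ψ (sVar a bv w) (sVar a gv w) := by
    funext w
    unfold Fm Phif
    rw [mul_pow]
    have : alph a w ^ 2 = Qf a w := Real.sq_sqrt (Qf_nonneg ha w)
    rw [this]
  have H := (hasPdAt_Qf a z hsym).mul
    (hasPdAt_comp2 hΦd (hasPdAt_sVar a bv z hsym hQ) (hasPdAt_sVar a gv z hsym hQ))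
  have H' := H.congr_fun'
    (g := fun w => Qf a w * Phif Ψ (sVar a bv w) (sVar a gv w)) fun w => rfl
  rw [hfun, H'.pd_eq j]
  unfold D1
  ring

lemma level2 (ha : a.PosDef) (hb : Real.sqrt (quadInv a bv bv) < b₀)
    (hg : Real.sqrt (quadInv a gv gv) < g₀)
    (hΨ : ContDiffOn ℝ (⊤ : ℕ∞) (Gu Ψ) (Set.Ioo (-b₀) b₀ ×ˢ Set.Ioo (-g₀) g₀))
    {z : Fin n → ℝ} (hz : z ≠ 0) (i j : Fin n) :
    pd (D1 a bv gv Ψ j) z i = D2 a bv gv Ψ i j z := by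
  have hsym := sym_of_posdef ha
  have hQ := Qf_pos ha hz
  have hR : IsOpen (Set.Ioo (-b₀) b₀ ×ˢ Set.Ioo (-g₀) g₀) := isOpen_Ioo.prod isOpen_Ioo
  have hmem := mem_R ha hb hg hz
  have hΦ := contDiffOn_Gu_Phif hR hΨ
  have Hs := hasPdAt_sVar a bv z hsym hQ
  have Ht := hasPdAt_sVar a gv z hsym hQ
  have HΦu := hasPdAt_comp2 (diffAt_of_contDiffOn hR hΦ hmem) Hs Ht
  have HC1u := hasPdAt_comp2 (diffAt_of_contDiffOn hR (contDiffOn_Gu_Ds hR hΦ) hmem) Hs Ht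
  have HC2u := hasPdAt_comp2 (diffAt_of_contDiffOn hR (contDiffOn_Gu_Dt hR hΦ) hmem) Hs Ht
  have HSdb := hasPdAt_Sd bv hsym hQ j
  have HSdg := hasPdAt_Sd gv hsym hQ j
  have A1 := ((hasPdAt_Mv a z j).const_mul 2).mul HΦu
  have A2 := (hasPdAt_Qf a z hsym).mul ((HC1u.mul HSdb).add (HC2u.mul HSdg))
  have H := A1.add A2
  have H' := H.congr_fun' (g := D1 a bv gv Ψ j) fun w => by unfold D1; ring
  rw [H'.pd_eq i]
  unfold D2
  ring

end Levels
set_option maxHeartbeats 4000000 in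
/-- the Cartan tensor `C_{ijk} = ½ ∂g_{ij}/∂y^k` of the (α,β,γ)-metric. -/
theorem statement5
    (n : ℕ) (hn : 2 ≤ n)
    (a : Matrix (Fin n) (Fin n) ℝ) (ha : a.PosDef)
    (bv gv : Fin n → ℝ) (b₀ g₀ : ℝ) (hb₀ : 0 < b₀) (hg₀ : 0 < g₀)
    (hb : Real.sqrt (quadInv a bv bv) < b₀)
    (hg : Real.sqrt (quadInv a gv gv) < g₀)
    (Ψ : ℝ → ℝ → ℝ)
    (hΨ : ContDiffOn ℝ (⊤ : ℕ∞) (fun p : ℝ × ℝ => Ψ p.1 p.2)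
      (Set.Ioo (-b₀) b₀ ×ˢ Set.Ioo (-g₀) g₀))
    (hΨpos : ∀ p ∈ Set.Ioo (-b₀) b₀ ×ˢ Set.Ioo (-g₀) g₀, 0 < Ψ p.1 p.2)
    (y : Fin n → ℝ) (hy : y ≠ 0) (i j k : Fin n) :
    ∀ p q : ℝ, p = sVar a bv y → q = sVar a gv y →
      (1 / 2) * pd (fun z => fundT (Fm a bv gv Ψ) z i j) y k =
        (rho1F Ψ p q / 2) *
            (hl a bv y k * pd2 (alph a) y i j + hl a bv y i * pd2 (alph a) y j k
              + hl a bv y j * pd2 (alph a) y i k)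
        + (rhobar1F Ψ p q / 2) *
            (hl a gv y k * pd2 (alph a) y i j + hl a gv y i * pd2 (alph a) y j k
              + hl a gv y j * pd2 (alph a) y i k)
        + (Dt (rho0F Ψ) p q / (2 * alph a y)) *
            (hl a bv y i * hl a bv y j * hl a gv y k
              + hl a bv y j * hl a bv y k * hl a gv y i
              + hl a bv y i * hl a bv y k * hl a gv y j)
        + (Ds (rhobar0F Ψ) p q / (2 * alph a y)) *
            (hl a gv y i * hl a gv y j * hl a bv y k
              + hl a gv y j * hl a gv y k * hl a bv y i
              + hl a gv y i * hl a gv y k * hl a bv y j)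
        + (Ds (rho0F Ψ) p q / (2 * alph a y)) * (hl a bv y i * hl a bv y j * hl a bv y k)
        + (Dt (rhobar0F Ψ) p q / (2 * alph a y)) * (hl a gv y i * hl a gv y j * hl a gv y k) := by
  intro p q hp hq
  subst hp
  subst hq
  have hΨ' : ContDiffOn ℝ (⊤ : ℕ∞) (Gu Ψ) (Set.Ioo (-b₀) b₀ ×ˢ Set.Ioo (-g₀) g₀) := hΨ
  have hsym := sym_of_posdef ha
  have hQ := Qf_pos ha hy
  have hα0 := alph_ne_zero (a := a) hQ
  have hR : IsOpen (Set.Ioo (-b₀) b₀ ×ˢ Set.Ioo (-g₀) g₀) := isOpen_Ioo.prod isOpen_Ioo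
  have hmem := mem_R ha hb hg hy
  have hΦ := contDiffOn_Gu_Phif hR hΨ'
  -- replace the LHS function by (1/2) * D2 near y
  have hev : (fun z => fundT (Fm a bv gv Ψ) z i j)
      =ᶠ[nhds y] (fun z => (1/2) * D2 a bv gv Ψ i j z) := by
    filter_upwards [isOpen_compl_singleton.mem_nhds hy] with z hz
    have hz' : z ≠ 0 := hz
    unfold fundT pd2
    have e1 : pd (fun w => pd (fun u => Fm a bv gv Ψ u ^ 2) w j) z i
        = pd (D1 a bv gv Ψ j) z i := by
      apply pd_congr _ i
      filter_upwards [isOpen_compl_singleton.mem_nhds hz'] with w hw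
      exact level1 ha hb hg hΨ' hw j
    rw [e1, level2 ha hb hg hΨ' hz' i j]
  have e2 := pd_congr hev k
  -- level-3 : differentiate D2 at y
  have Hs := hasPdAt_sVar a bv y hsym hQ
  have Ht := hasPdAt_sVar a gv y hsym hQ
  have HΦu := hasPdAt_comp2 (diffAt_of_contDiffOn hR hΦ hmem) Hs Ht
  have HC1u := hasPdAt_comp2 (diffAt_of_contDiffOn hR (contDiffOn_Gu_Ds hR hΦ) hmem) Hs Ht
  have HC2u := hasPdAt_comp2 (diffAt_of_contDiffOn hR (contDiffOn_Gu_Dt hR hΦ) hmem) Hs Ht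
  have HC11u := hasPdAt_comp2
    (diffAt_of_contDiffOn hR (contDiffOn_Gu_Ds hR (contDiffOn_Gu_Ds hR hΦ)) hmem) Hs Ht
  have HC12u := hasPdAt_comp2
    (diffAt_of_contDiffOn hR (contDiffOn_Gu_Dt hR (contDiffOn_Gu_Ds hR hΦ)) hmem) Hs Ht
  have HC21u := hasPdAt_comp2
    (diffAt_of_contDiffOn hR (contDiffOn_Gu_Ds hR (contDiffOn_Gu_Dt hR hΦ)) hmem) Hs Ht
  have HC22u := hasPdAt_comp2
    (diffAt_of_contDiffOn hR (contDiffOn_Gu_Dt hR (contDiffOn_Gu_Dt hR hΦ)) hmem) Hs Ht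
  have HSbi := hasPdAt_Sd bv hsym hQ i
  have HSbj := hasPdAt_Sd bv hsym hQ j
  have HSgi := hasPdAt_Sd gv hsym hQ i
  have HSgj := hasPdAt_Sd gv hsym hQ j
  have HSddb := hasPdAt_Sdd bv hsym hQ j i
  have HSddg := hasPdAt_Sdd gv hsym hQ j i
  have P1 := HΦu.const_mul (2 * a j i)
  have P2 := ((hasPdAt_Mv a y j).const_mul 2).mul ((HC1u.mul HSbi).add (HC2u.mul HSgi))
  have P3 := ((hasPdAt_Mv a y i).const_mul 2).mul ((HC1u.mul HSbj).add (HC2u.mul HSgj))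
  have P4 := (hasPdAt_Qf a y hsym).mul
    (((((HC11u.mul HSbi).add (HC12u.mul HSgi)).mul HSbj).add
      (((HC21u.mul HSbi).add (HC22u.mul HSgi)).mul HSgj)).add
      ((HC1u.mul HSddb).add (HC2u.mul HSddg)))
  have H3 := ((P1.add P2).add P3).add P4
  have H3' := H3.congr_fun' (g := D2 a bv gv Ψ i j) fun w => by unfold D2; ring
  have e3 := (H3'.const_mul (1/2)).pd_eq k
  rw [e2, e3]
  -- now pure algebra: rewrite the Φ-atoms into ρ-atoms
  set pp := sVar a bv y with hpp
  set qq := sVar a gv y with hqq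
  have v1 : Ds (Phif Ψ) pp qq = 2 * Ψ pp qq * Ds Ψ pp qq := dsPhif_eq hR hΨ' _ hmem
  have v2 : Dt (Phif Ψ) pp qq = 2 * Ψ pp qq * Dt Ψ pp qq := dtPhif_eq hR hΨ' _ hmem
  have v3 : Ds (Ds (Phif Ψ)) pp qq = 2 * rho0F Ψ pp qq := dsdsPhif_eq hR hΨ' _ hmem
  have v4 : Dt (Ds (Phif Ψ)) pp qq = 2 * rho3F Ψ pp qq := dtdsPhif_eq hR hΨ' _ hmem
  have v5 : Ds (Dt (Phif Ψ)) pp qq = 2 * rho3F Ψ pp qq := dsdtPhif_eq hR hΨ' _ hmem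
  have v6 : Dt (Dt (Phif Ψ)) pp qq = 2 * rhobar0F Ψ pp qq := dtdtPhif_eq hR hΨ' _ hmem
  have t1 : Ds (Ds (Ds (Phif Ψ))) pp qq = 2 * Ds (rho0F Ψ) pp qq := dsdsdsPhif_eq hR hΨ' hmem
  have t2 : Dt (Ds (Ds (Phif Ψ))) pp qq = 2 * Dt (rho0F Ψ) pp qq := dtdsdsPhif_eq hR hΨ' hmem
  have t3 : Ds (Dt (Ds (Phif Ψ))) pp qq = 2 * Dt (rho0F Ψ) pp qq := dsdtdsPhif_eq hR hΨ' hmem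
  have t4 : Dt (Dt (Ds (Phif Ψ))) pp qq = 2 * Ds (rhobar0F Ψ) pp qq := dtdtdsPhif_eq hR hΨ' hmem
  have t5 : Ds (Ds (Dt (Phif Ψ))) pp qq = 2 * Dt (rho0F Ψ) pp qq := dsdsdtPhif_eq hR hΨ' hmem
  have t6 : Dt (Ds (Dt (Phif Ψ))) pp qq = 2 * Ds (rhobar0F Ψ) pp qq := dtdsdtPhif_eq hR hΨ' hmem
  have t7 : Ds (Dt (Dt (Phif Ψ))) pp qq = 2 * Ds (rhobar0F Ψ) pp qq := dsdtdtPhif_eq hR hΨ' hmem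
  have t8 : Dt (Dt (Dt (Phif Ψ))) pp qq = 2 * Dt (rhobar0F Ψ) pp qq := dtdtdtPhif_eq hR hΨ' hmem
  rw [t1, t2, t3, t4, t5, t6, t7, t8, v3, v4, v5, v6, v1, v2]
  -- second derivatives of α and the h-covectors
  have pdal : ∀ i' : Fin n, pd (alph a) y i' = Mv a y i' / alph a y := fun i' =>
    (hasPdAt_alph a y hsym hQ).pd_eq i'
  have pd2al : ∀ i' j' : Fin n, pd2 (alph a) y i' j'
      = (a j' i' * alph a y - Mv a y j' * (Mv a y i' / alph a y)) / alph a y ^ 2 := by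
    intro i' j'
    unfold pd2
    have e : pd (fun z => pd (alph a) z j') y i'
        = pd (fun z => Mv a z j' / alph a z) y i' := by
      apply pd_congr _ i'
      filter_upwards [isOpen_compl_singleton.mem_nhds hy] with z hz
      exact (hasPdAt_alph a z hsym (Qf_pos ha hz)).pd_eq j'
    rw [e, ((hasPdAt_Mv a y j').div (hasPdAt_alph a y hsym hQ) hα0).pd_eq i']
  have hQA : Qf a y = alph a y ^ 2 := (Real.sq_sqrt (Qf_nonneg ha y)).symm
  unfold hl rho1F rhobar1F
  simp only [pd2al, pdal, hQA, ← hpp, ← hqq]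
  unfold Sddd Sdd Sd
  simp only [hsym j i, hsym k j, hsym k i]
  rw [hpp, hqq]
  unfold sVar
  field_simp
  ring
end
end

section
/- At every y ∈ ℝⁿ∖{0}, the second derivatives ℓ_{ij} = ∂²F/∂y^i∂y^j of the (α,β,γ)-metric F satisfy, with b^i = a^{ij}b_j and γ^i = a^{ij}γ_j: ℓ_{ij}b^i = (1/α)[Π + (b²−s²)Ψ_ss + (θ−ss̄)Ψ_ss̄]·h_j + (1/α)[(b²−s²)Ψ_ss̄ + (θ−ss̄)Ψ_s̄s̄]·h̄_j, and ℓ_{ij}γ^i = (1/α)[(θ−ss̄)Ψ_ss + (g²−s̄²)Ψ_ss̄]·h_j + (1/α)[Π + (θ−ss̄)Ψ_ss̄ + (g²−s̄²)Ψ_s̄s̄]·h̄_j. -/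
noncomputable section

open Set

theorem myDiv {E : Type*} [NormedAddCommGroup E] [NormedSpace ℝ E] {f g : E → ℝ}
    {f' g' : E →L[ℝ] ℝ} {x : E} (hf : HasFDerivAt f f' x) (hg : HasFDerivAt g g' x)
    (hx : g x ≠ 0) :
    HasFDerivAt (fun z => f z / g z) ((g x)⁻¹ • f' - (f x / g x ^ 2) • g') x := by
  have hinv : HasFDerivAt (fun z => (g z)⁻¹) ((-(g x ^ 2)⁻¹) • g') x :=
    (hasDerivAt_inv hx).comp_hasFDerivAt x hg
  have h := hf.mul hinv
  have he : (fun z => f z / g z) = fun z => f z * (g z)⁻¹ := by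
    ext z; rw [div_eq_mul_inv]
  rw [he]
  refine h.congr_fderiv ?_
  ext u
  simp only [ContinuousLinearMap.sub_apply, ContinuousLinearMap.add_apply,
    ContinuousLinearMap.smul_apply, smul_eq_mul]
  field_simp
  ring


namespace St10
open Matrix


variable {n : ℕ} (a : Matrix (Fin n) (Fin n) ℝ)

/-- `(a z)_i`. -/
def mvec (z : Fin n → ℝ) (i : Fin n) : ℝ := ∑ j, a i j * z j

lemma quad_eq_dot (z : Fin n → ℝ) :
    (∑ i, ∑ j, a i j * z i * z j) = z ⬝ᵥ a.mulVec z := by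
  simp only [dotProduct, Matrix.mulVec, Finset.mul_sum]
  refine Finset.sum_congr rfl fun i _ => Finset.sum_congr rfl fun j _ => by ring

lemma quad_pos (ha : a.PosDef) {z : Fin n → ℝ} (hz : z ≠ 0) :
    0 < ∑ i, ∑ j, a i j * z i * z j := by
  rw [quad_eq_dot]
  have := ha.dotProduct_mulVec_pos hz
  simpa using this

lemma alph_pos (ha : a.PosDef) {z : Fin n → ℝ} (hz : z ≠ 0) : 0 < alph a z :=
  Real.sqrt_pos.2 (quad_pos a ha hz)

/-- the projection CLM -/
def projL (i : Fin n) : (Fin n → ℝ) →L[ℝ] ℝ := ContinuousLinearMap.proj i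

/-- derivative CLM of a one-form -/
def ofL (v : Fin n → ℝ) : (Fin n → ℝ) →L[ℝ] ℝ := ∑ i, v i • projL i

@[simp] lemma ofL_apply (v u : Fin n → ℝ) : ofL v u = ∑ i, v i * u i := by
  simp [ofL, projL]

lemma hasFDerivAt_oneForm (v z : Fin n → ℝ) :
    HasFDerivAt (oneForm v) (ofL v) z := by
  have : oneForm v = fun z => ofL v z := by
    ext z; simp [oneForm]
  rw [this]
  exact (ofL v).hasFDerivAt

/-- derivative CLM of the quadratic form, assuming `a` symmetric -/
def quadL (z : Fin n → ℝ) : (Fin n → ℝ) →L[ℝ] ℝ := (2 : ℝ) • ofL (mvec a z)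

@[simp] lemma quadL_apply (z u : Fin n → ℝ) :
    quadL a z u = 2 * ∑ i, mvec a z i * u i := by
  simp [quadL]

lemma hasFDerivAt_quad (hsymm : ∀ i j, a i j = a j i) (z : Fin n → ℝ) :
    HasFDerivAt (fun z : Fin n → ℝ => ∑ i, ∑ j, a i j * z i * z j) (quadL a z) z := by
  have h : HasFDerivAt (fun z : Fin n → ℝ => ∑ i, ∑ j, a i j * z i * z j)
      (∑ i, ∑ j, (a i j) • (z i • projL j + z j • projL i)) z := by
    apply HasFDerivAt.fun_sum; intro i _
    apply HasFDerivAt.fun_sum; intro j _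
    have hi : HasFDerivAt (fun z : Fin n → ℝ => z i) (projL (n := n) i) z :=
      (projL i).hasFDerivAt
    have hj : HasFDerivAt (fun z : Fin n → ℝ => z j) (projL (n := n) j) z :=
      (projL j).hasFDerivAt
    have := (hi.mul hj).const_mul (a i j)
    have hfun : (fun y : Fin n → ℝ => a i j * y i * y j)
        = fun y => a i j * ((fun z : Fin n → ℝ => z i) * fun z : Fin n → ℝ => z j) y := by
      ext w; simp only [Pi.mul_apply]; ring
    rw [hfun]; exact this
  convert h using 1
  ext u
  simp only [ContinuousLinearMap.sum_apply, ContinuousLinearMap.add_apply,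
    ContinuousLinearMap.smul_apply, quadL_apply, smul_eq_mul]
  have h1 : ∑ i, ∑ j, a i j * (z i * projL (n := n) j u + z j * projL (n := n) i u)
      = (∑ i, ∑ j, a i j * z i * u j) + (∑ i, ∑ j, a i j * z j * u i) := by
    rw [← Finset.sum_add_distrib]
    refine Finset.sum_congr rfl fun i _ => ?_
    rw [← Finset.sum_add_distrib]
    refine Finset.sum_congr rfl fun j _ => ?_
    simp only [projL, ContinuousLinearMap.proj_apply]
    ring
  have h2 : (∑ i, ∑ j, a i j * z i * u j) = ∑ i, mvec a z i * u i := by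
    rw [Finset.sum_comm]
    refine Finset.sum_congr rfl fun j _ => ?_
    rw [mvec, Finset.sum_mul]
    refine Finset.sum_congr rfl fun i _ => ?_
    rw [hsymm j i]
  have h3 : (∑ i, ∑ j, a i j * z j * u i) = ∑ i, mvec a z i * u i := by
    refine Finset.sum_congr rfl fun i _ => ?_
    rw [mvec, Finset.sum_mul]
  calc 2 * ∑ i, mvec a z i * u i 
      = (∑ i, ∑ j, a i j * z i * u j) + (∑ i, ∑ j, a i j * z j * u i) := by
        rw [h2, h3]; ring
    _ = _ := h1.symm

/-- derivative CLM of `alph`. -/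
def alphL (z : Fin n → ℝ) : (Fin n → ℝ) →L[ℝ] ℝ := (alph a z)⁻¹ • ofL (mvec a z)

@[simp] lemma alphL_apply (z u : Fin n → ℝ) :
    alphL a z u = (∑ i, mvec a z i * u i) / alph a z := by
  simp [alphL, div_eq_inv_mul]

lemma hasFDerivAt_alph (ha : a.PosDef) (hsymm : ∀ i j, a i j = a j i)
    {z : Fin n → ℝ} (hz : z ≠ 0) :
    HasFDerivAt (alph a) (alphL a z) z := by
  have h := (hasFDerivAt_quad a hsymm z).sqrt (ne_of_gt (quad_pos a ha hz))
  have : alph a = fun z : Fin n → ℝ => Real.sqrt (∑ i, ∑ j, a i j * z i * z j) := rfl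
  rw [this]
  refine h.congr_fderiv ?_
  ext u
  simp only [ContinuousLinearMap.smul_apply, alphL_apply, quadL_apply, smul_eq_mul]
  rw [show Real.sqrt (∑ i, ∑ j, a i j * z i * z j) = alph a z from rfl]
  have hα : alph a z ≠ 0 := ne_of_gt (alph_pos a ha hz)
  field_simp



variable {n : ℕ} (a : Matrix (Fin n) (Fin n) ℝ)

lemma a_symm (ha : a.PosDef) : ∀ i j, a i j = a j i := by
  intro i j
  have := ha.1
  rw [Matrix.IsHermitian] at this
  conv_rhs => rw [← this]
  simp [Matrix.conjTranspose_apply]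

lemma aT (ha : a.PosDef) : aᵀ = a := by
  ext i j; exact a_symm a ha j i

lemma ainv_symm (ha : a.PosDef) : ∀ i j, a⁻¹ i j = a⁻¹ j i := a_symm _ ha.inv

lemma a_mul_inv (ha : a.PosDef) : a * a⁻¹ = 1 :=
  Matrix.mul_nonsing_inv a (isUnit_iff_ne_zero.2 (ne_of_gt ha.det_pos))

lemma quadInv_dot (v w : Fin n → ℝ) : quadInv a v w = v ⬝ᵥ a⁻¹ *ᵥ w := by
  simp only [quadInv, dotProduct, Matrix.mulVec, Finset.mul_sum]
  refine Finset.sum_congr rfl fun i _ => Finset.sum_congr rfl fun j _ => by ring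

lemma cauchy_schwarz (ha : a.PosDef) (v z : Fin n → ℝ) :
    (oneForm v z) ^ 2 ≤ quadInv a v v * (∑ i, ∑ j, a i j * z i * z j) := by
  letI G := Matrix.toNormedAddCommGroup a ha
  letI I := Matrix.toInnerProductSpace a ha.posSemidef
  set u : Fin n → ℝ := a⁻¹ *ᵥ v with hu
  have hau : a *ᵥ u = v := by
    rw [hu, Matrix.mulVec_mulVec, a_mul_inv a ha, Matrix.one_mulVec]
  have key : (u ⬝ᵥ a *ᵥ z) * (u ⬝ᵥ a *ᵥ z) ≤ (u ⬝ᵥ a *ᵥ u) * (z ⬝ᵥ a *ᵥ z) :=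
    by have h := @real_inner_mul_inner_self_le (Fin n → ℝ) G.toSeminormedAddCommGroup I u z
       simp only [dotProduct_comm u, dotProduct_comm z]; exact h
  have h1 : u ⬝ᵥ a *ᵥ z = oneForm v z := by
    rw [Matrix.dotProduct_mulVec, ← Matrix.mulVec_transpose, aT a ha, hau]
    rfl
  have h2 : u ⬝ᵥ a *ᵥ u = quadInv a v v := by
    rw [hau, quadInv_dot, ← hu, dotProduct_comm]
  have h3 : z ⬝ᵥ a *ᵥ z = ∑ i, ∑ j, a i j * z i * z j := (quad_eq_dot a z).symm
  rw [h1, h2, h3] at key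
  calc (oneForm v z)^2 = oneForm v z * oneForm v z := sq (oneForm v z) ▸ by ring
    _ ≤ _ := key

lemma sVar_sq_le (ha : a.PosDef) (v : Fin n → ℝ) {z : Fin n → ℝ} (hz : z ≠ 0) :
    (sVar a v z) ^ 2 ≤ quadInv a v v := by
  have hq : 0 < ∑ i, ∑ j, a i j * z i * z j := by
    rw [quad_eq_dot]; simpa using ha.dotProduct_mulVec_pos hz
  have hα : 0 < alph a z := Real.sqrt_pos.2 hq
  have hsq : alph a z ^ 2 = ∑ i, ∑ j, a i j * z i * z j := Real.sq_sqrt hq.le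
  have := cauchy_schwarz a ha v z
  rw [← hsq] at this
  rw [sVar, div_pow]
  rw [div_le_iff₀ (by positivity)]
  linarith [this]

lemma sVar_mem (ha : a.PosDef) (v : Fin n → ℝ) {z : Fin n → ℝ} (hz : z ≠ 0)
    {c : ℝ} (hc : Real.sqrt (quadInv a v v) < c) :
    sVar a v z ∈ Set.Ioo (-c) c := by
  have h := Real.abs_le_sqrt (sVar_sq_le a ha v hz)
  have : |sVar a v z| < c := lt_of_le_of_lt h hc
  rw [abs_lt] at this
  exact ⟨this.1, this.2⟩



variable {n : ℕ} (a : Matrix (Fin n) (Fin n) ℝ)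

lemma sum_single (f : Fin n → ℝ) (j : Fin n) :
    ∑ i, f i * (Pi.single j 1 : Fin n → ℝ) i = f j := by
  rw [Finset.sum_eq_single j]
  · simp
  · intro i _ hij; simp [Pi.single_apply, hij]
  · intro h; exact absurd (Finset.mem_univ j) h

/-- derivative CLM of `sVar a v`. -/
def sL (v z : Fin n → ℝ) : (Fin n → ℝ) →L[ℝ] ℝ :=
  (alph a z)⁻¹ • (ofL v - sVar a v z • alphL a z)

@[simp] lemma sL_apply (v z u : Fin n → ℝ) :
    sL a v z u = ((∑ i, v i * u i) - sVar a v z * alphL a z u) / alph a z := by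
  simp [sL, div_eq_inv_mul]

lemma hasFDerivAt_sVar (ha : a.PosDef) (hsymm : ∀ i j, a i j = a j i)
    (v : Fin n → ℝ) {z : Fin n → ℝ} (hz : z ≠ 0) :
    HasFDerivAt (sVar a v) (sL a v z) z := by
  have hα := alph_pos a ha hz
  have h := myDiv (hasFDerivAt_oneForm v z) (hasFDerivAt_alph a ha hsymm hz) (ne_of_gt hα)
  have he : sVar a v = fun z => oneForm v z / alph a z := rfl
  rw [he]
  refine h.congr_fderiv ?_
  ext u
  simp only [sL_apply, ContinuousLinearMap.smul_apply, ContinuousLinearMap.sub_apply,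
    smul_eq_mul, alphL_apply, ofL_apply, sVar]
  field_simp

section Psi
variable (Ψ : ℝ → ℝ → ℝ)

/-- first partials of the uncurried function -/
def P1 : ℝ × ℝ → ℝ := fun w => fderiv ℝ (fun p : ℝ × ℝ => Ψ p.1 p.2) w (1, 0)
def P2 : ℝ × ℝ → ℝ := fun w => fderiv ℝ (fun p : ℝ × ℝ => Ψ p.1 p.2) w (0, 1)
def Pfun : ℝ × ℝ → ℝ := fun w => Ψ w.1 w.2 - w.1 * P1 Ψ w - w.2 * P2 Ψ w
/-- second derivative entries -/
def D2 (w : ℝ × ℝ) : ℝ × ℝ →L[ℝ] ℝ × ℝ →L[ℝ] ℝ :=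
  fderiv ℝ (fderiv ℝ (fun p : ℝ × ℝ => Ψ p.1 p.2)) w

lemma clm_eval (L : ℝ × ℝ →L[ℝ] ℝ) (u : ℝ × ℝ) :
    L u = u.1 * L (1, 0) + u.2 * L (0, 1) := by
  have hu : u = u.1 • ((1:ℝ), (0:ℝ)) + u.2 • ((0:ℝ), (1:ℝ)) := by
    ext <;> simp
  conv_lhs => rw [hu]
  rw [L.map_add, L.map_smul, L.map_smul]
  simp

variable {Ψ} {U : Set (ℝ × ℝ)} {w : ℝ × ℝ}
variable (hU : IsOpen U) (hC : ContDiffOn ℝ (⊤ : ℕ∞) (fun p : ℝ × ℝ => Ψ p.1 p.2) U)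
include hU hC

lemma contDiffAt_of (hw : w ∈ U) : ContDiffAt ℝ (⊤ : ℕ∞) (fun p : ℝ × ℝ => Ψ p.1 p.2) w :=
  hC.contDiffAt (hU.mem_nhds hw)

lemma hasFDerivAt_Psi (hw : w ∈ U) :
    HasFDerivAt (fun p : ℝ × ℝ => Ψ p.1 p.2)
      (fderiv ℝ (fun p : ℝ × ℝ => Ψ p.1 p.2) w) w :=
  ((contDiffAt_of hU hC hw).differentiableAt (by simp)).hasFDerivAt

lemma Ds_eq (hw : w ∈ U) : Ds Ψ w.1 w.2 = P1 Ψ w := by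
  have h := (hasFDerivAt_Psi hU hC hw).comp_hasDerivAt w.1
    ((hasDerivAt_id w.1).prodMk (hasDerivAt_const w.1 w.2))
  have : (fun u : ℝ => Ψ u w.2) = (fun p : ℝ × ℝ => Ψ p.1 p.2) ∘ (fun u => (u, w.2)) := rfl
  rw [Ds, this]
  exact h.deriv

lemma Dt_eq (hw : w ∈ U) : Dt Ψ w.1 w.2 = P2 Ψ w := by
  have h := (hasFDerivAt_Psi hU hC hw).comp_hasDerivAt w.2
    ((hasDerivAt_const w.2 w.1).prodMk (hasDerivAt_id w.2))
  have : (fun v : ℝ => Ψ w.1 v) = (fun p : ℝ × ℝ => Ψ p.1 p.2) ∘ (fun v => (w.1, v)) := rfl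
  rw [Dt, this]
  exact h.deriv

lemma hasFDerivAt_P1 (hw : w ∈ U) :
    HasFDerivAt (P1 Ψ) ((ContinuousLinearMap.apply ℝ ℝ ((1:ℝ), (0:ℝ))).comp (D2 Ψ w)) w := by
  have hd : DifferentiableAt ℝ (fderiv ℝ (fun p : ℝ × ℝ => Ψ p.1 p.2)) w :=
    ((contDiffAt_of hU hC hw).fderiv_right (m := (⊤ : ℕ∞)) (by simp)).differentiableAt (by simp)
  exact (ContinuousLinearMap.apply ℝ ℝ ((1:ℝ), (0:ℝ))).hasFDerivAt.comp w hd.hasFDerivAt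

lemma hasFDerivAt_P2 (hw : w ∈ U) :
    HasFDerivAt (P2 Ψ) ((ContinuousLinearMap.apply ℝ ℝ ((0:ℝ), (1:ℝ))).comp (D2 Ψ w)) w := by
  have hd : DifferentiableAt ℝ (fderiv ℝ (fun p : ℝ × ℝ => Ψ p.1 p.2)) w :=
    ((contDiffAt_of hU hC hw).fderiv_right (m := (⊤ : ℕ∞)) (by simp)).differentiableAt (by simp)
  exact (ContinuousLinearMap.apply ℝ ℝ ((0:ℝ), (1:ℝ))).hasFDerivAt.comp w hd.hasFDerivAt

lemma DsDs_eq (hw : w ∈ U) : Ds (Ds Ψ) w.1 w.2 = D2 Ψ w (1, 0) (1, 0) := by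
  have hev : ∀ᶠ u in nhds w.1, Ds Ψ u w.2 = P1 Ψ (u, w.2) := by
    have hcont : Continuous (fun u : ℝ => (u, w.2)) := by fun_prop
    have : ∀ᶠ u in nhds w.1, (u, w.2) ∈ U := by
      have := hcont.continuousAt (x := w.1)
      exact this.preimage_mem_nhds (hU.mem_nhds (by simpa using hw))
    filter_upwards [this] with u hu
    exact Ds_eq hU hC hu
  have h : HasDerivAt (fun u : ℝ => P1 Ψ (u, w.2)) (D2 Ψ w (1, 0) (1, 0)) w.1 := by
    have := (hasFDerivAt_P1 hU hC hw).comp_hasDerivAt w.1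
      ((hasDerivAt_id w.1).prodMk (hasDerivAt_const w.1 w.2))
    simpa [ContinuousLinearMap.comp_apply, ContinuousLinearMap.apply_apply, Function.comp_def] using this
  rw [show Ds (Ds Ψ) w.1 w.2 = deriv (fun u => Ds Ψ u w.2) w.1 from rfl]
  rw [Filter.EventuallyEq.deriv_eq hev]
  exact h.deriv

lemma DtDs_eq (hw : w ∈ U) : Dt (Ds Ψ) w.1 w.2 = D2 Ψ w (0, 1) (1, 0) := by
  have hev : ∀ᶠ v in nhds w.2, Ds Ψ w.1 v = P1 Ψ (w.1, v) := by
    have hcont : Continuous (fun v : ℝ => (w.1, v)) := by fun_prop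
    have : ∀ᶠ v in nhds w.2, (w.1, v) ∈ U := by
      exact (hcont.continuousAt (x := w.2)).preimage_mem_nhds (hU.mem_nhds (by simpa using hw))
    filter_upwards [this] with v hv
    exact Ds_eq hU hC hv
  have h : HasDerivAt (fun v : ℝ => P1 Ψ (w.1, v)) (D2 Ψ w (0, 1) (1, 0)) w.2 := by
    have := (hasFDerivAt_P1 hU hC hw).comp_hasDerivAt w.2
      ((hasDerivAt_const w.2 w.1).prodMk (hasDerivAt_id w.2))
    simpa [ContinuousLinearMap.comp_apply, ContinuousLinearMap.apply_apply, Function.comp_def] using this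
  rw [show Dt (Ds Ψ) w.1 w.2 = deriv (fun v => Ds Ψ w.1 v) w.2 from rfl]
  rw [Filter.EventuallyEq.deriv_eq hev]
  exact h.deriv

lemma DtDt_eq (hw : w ∈ U) : Dt (Dt Ψ) w.1 w.2 = D2 Ψ w (0, 1) (0, 1) := by
  have hev : ∀ᶠ v in nhds w.2, Dt Ψ w.1 v = P2 Ψ (w.1, v) := by
    have hcont : Continuous (fun v : ℝ => (w.1, v)) := by fun_prop
    have : ∀ᶠ v in nhds w.2, (w.1, v) ∈ U := by
      exact (hcont.continuousAt (x := w.2)).preimage_mem_nhds (hU.mem_nhds (by simpa using hw))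
    filter_upwards [this] with v hv
    exact Dt_eq hU hC hv
  have h : HasDerivAt (fun v : ℝ => P2 Ψ (w.1, v)) (D2 Ψ w (0, 1) (0, 1)) w.2 := by
    have := (hasFDerivAt_P2 hU hC hw).comp_hasDerivAt w.2
      ((hasDerivAt_const w.2 w.1).prodMk (hasDerivAt_id w.2))
    simpa [ContinuousLinearMap.comp_apply, ContinuousLinearMap.apply_apply, Function.comp_def] using this
  rw [show Dt (Dt Ψ) w.1 w.2 = deriv (fun v => Dt Ψ w.1 v) w.2 from rfl]
  rw [Filter.EventuallyEq.deriv_eq hev]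
  exact h.deriv

lemma D2_symm (hw : w ∈ U) (u v : ℝ × ℝ) : D2 Ψ w u v = D2 Ψ w v u := by
  have := (contDiffAt_of hU hC hw).isSymmSndFDerivAt (by norm_num; exact WithTop.coe_le_coe.2 le_top)
  exact this u v

end Psi

lemma pd_alph (ha : a.PosDef) {z : Fin n → ℝ} (hz : z ≠ 0) (j : Fin n) :
    pd (alph a) z j = mvec a z j / alph a z := by
  rw [pd, (hasFDerivAt_alph a ha (a_symm a ha) hz).fderiv, alphL_apply, sum_single]

lemma sL_single (v z : Fin n → ℝ) (j : Fin n) :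
    sL a v z (Pi.single j 1) = (v j - sVar a v z * (mvec a z j / alph a z)) / alph a z := by
  rw [sL_apply, alphL_apply, sum_single, sum_single]

lemma hl_eq (ha : a.PosDef) (v : Fin n → ℝ) {z : Fin n → ℝ} (hz : z ≠ 0) (j : Fin n) :
    hl a v z j = v j - sVar a v z * (mvec a z j / alph a z) := by
  rw [hl, pd_alph a ha hz]

/-- the pair map `z ↦ (s, s̄)`. -/
def phi (bv gv : Fin n → ℝ) : (Fin n → ℝ) → ℝ × ℝ :=
  fun z => (sVar a bv z, sVar a gv z)

/-- closed form of the first partial `∂F/∂y^j`. -/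
def Ej (bv gv : Fin n → ℝ) (Ψ : ℝ → ℝ → ℝ) (j : Fin n) : (Fin n → ℝ) → ℝ :=
  fun z => (mvec a z j / alph a z) * Pfun Ψ (phi a bv gv z)
    + bv j * P1 Ψ (phi a bv gv z) + gv j * P2 Ψ (phi a bv gv z)

lemma pdF_eq (ha : a.PosDef) (bv gv : Fin n → ℝ) {Ψ : ℝ → ℝ → ℝ} {U : Set (ℝ × ℝ)}
    (hU : IsOpen U) (hC : ContDiffOn ℝ (⊤ : ℕ∞) (fun p : ℝ × ℝ => Ψ p.1 p.2) U)
    {z : Fin n → ℝ} (hz : z ≠ 0) (hm : phi a bv gv z ∈ U) (j : Fin n) :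
    pd (Fm a bv gv Ψ) z j = Ej a bv gv Ψ j z := by
  have hsymm := a_symm a ha
  have hα := alph_pos a ha hz
  have hαne : alph a z ≠ 0 := ne_of_gt hα
  have hφ' : HasFDerivAt (phi a bv gv) ((sL a bv z).prod (sL a gv z)) z :=
    (hasFDerivAt_sVar a ha hsymm bv hz).prodMk (hasFDerivAt_sVar a ha hsymm gv hz)
  have hcomp := (hasFDerivAt_Psi hU hC hm).comp z hφ'
  have hF : HasFDerivAt (Fm a bv gv Ψ)
      (alph a z • ((fderiv ℝ (fun p : ℝ × ℝ => Ψ p.1 p.2) (phi a bv gv z)).comp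
          ((sL a bv z).prod (sL a gv z)))
        + Ψ (sVar a bv z) (sVar a gv z) • alphL a z) z :=
    (hasFDerivAt_alph a ha hsymm hz).mul hcomp
  rw [pd, hF.fderiv]
  rw [ContinuousLinearMap.add_apply, ContinuousLinearMap.smul_apply,
    ContinuousLinearMap.smul_apply, ContinuousLinearMap.comp_apply,
    ContinuousLinearMap.prod_apply,
    clm_eval (fderiv ℝ (fun p : ℝ × ℝ => Ψ p.1 p.2) (phi a bv gv z))]
  rw [alphL_apply, sum_single, sL_single, sL_single]
  simp only [smul_eq_mul, Ej, Pfun, P1, P2, phi]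
  field_simp
  ring

lemma clm_eval2 (L : ℝ × ℝ →L[ℝ] ((ℝ × ℝ) →L[ℝ] ℝ)) (u v : ℝ × ℝ) :
    L u v = u.1 * L (1, 0) v + u.2 * L (0, 1) v := by
  have hu : u = u.1 • ((1:ℝ), (0:ℝ)) + u.2 • ((0:ℝ), (1:ℝ)) := by ext <;> simp
  conv_lhs => rw [hu]
  rw [L.map_add, L.map_smul, L.map_smul]
  simp

lemma contr_a (ha : a.PosDef) (v : Fin n → ℝ) (j : Fin n) :
    ∑ i, (∑ l, a⁻¹ i l * v l) * a j i = v j := by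
  have h1 : ∀ i, (∑ l, a⁻¹ i l * v l) * a j i = ∑ l, v l * (a j i * a⁻¹ i l) := by
    intro i
    rw [Finset.sum_mul]
    exact Finset.sum_congr rfl fun l _ => by ring
  rw [Finset.sum_congr rfl fun i _ => h1 i, Finset.sum_comm]
  have h2 : ∀ l, ∑ i, v l * (a j i * a⁻¹ i l) = v l * (a * a⁻¹) j l := by
    intro l
    rw [Matrix.mul_apply, Finset.mul_sum]
  rw [Finset.sum_congr rfl fun l _ => h2 l, a_mul_inv a ha]
  simp [Matrix.one_apply]

lemma contr_q (ha : a.PosDef) (v w' : Fin n → ℝ) :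
    ∑ i, (∑ l, a⁻¹ i l * v l) * w' i = quadInv a v w' := by
  have h1 : ∀ i, (∑ l, a⁻¹ i l * v l) * w' i = ∑ l, a⁻¹ l i * v l * w' i := by
    intro i
    rw [Finset.sum_mul]
    exact Finset.sum_congr rfl fun l _ => by rw [ainv_symm a ha i l]
  rw [Finset.sum_congr rfl fun i _ => h1 i, Finset.sum_comm]
  rfl

lemma quadInv_comm (ha : a.PosDef) (u v : Fin n → ℝ) :
    quadInv a u v = quadInv a v u := by
  rw [quadInv, Finset.sum_comm]
  exact Finset.sum_congr rfl fun i _ => Finset.sum_congr rfl fun j _ => by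
    rw [ainv_symm a ha j i]; ring

lemma contr_m (ha : a.PosDef) (v z : Fin n → ℝ) :
    ∑ i, (∑ l, a⁻¹ i l * v l) * mvec a z i = oneForm v z := by
  have h1 : ∀ i, (∑ l, a⁻¹ i l * v l) * mvec a z i
      = ∑ m, ((∑ l, a⁻¹ i l * v l) * a m i) * z m := by
    intro i
    rw [mvec, Finset.mul_sum]
    exact Finset.sum_congr rfl fun m _ => by rw [a_symm a ha i m]; ring
  rw [Finset.sum_congr rfl fun i _ => h1 i, Finset.sum_comm]
  rw [Finset.sum_congr rfl fun m _ => (Finset.sum_mul _ _ _).symm]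
  have h3 : ∀ m, (∑ i, (∑ l, a⁻¹ i l * v l) * a m i) * z m = v m * z m := by
    intro m; rw [contr_a a ha v m]
  rw [Finset.sum_congr rfl fun m _ => h3 m]
  rfl

lemma pd2_eq (ha : a.PosDef) (bv gv : Fin n → ℝ) {Ψ : ℝ → ℝ → ℝ} {U : Set (ℝ × ℝ)}
    (hU : IsOpen U) (hC : ContDiffOn ℝ (⊤ : ℕ∞) (fun p : ℝ × ℝ => Ψ p.1 p.2) U)
    (hall : ∀ z : Fin n → ℝ, z ≠ 0 → phi a bv gv z ∈ U)
    {y : Fin n → ℝ} (hy : y ≠ 0) (i j : Fin n) :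
    pd2 (Fm a bv gv Ψ) y i j = pd (Ej a bv gv Ψ j) y i := by
  have hev : (fun z => pd (Fm a bv gv Ψ) z j) =ᶠ[nhds y] (Ej a bv gv Ψ j) := by
    have hopen : IsOpen {z : Fin n → ℝ | z ≠ 0} := isOpen_compl_singleton
    filter_upwards [hopen.mem_nhds hy] with z hz
    exact pdF_eq a ha bv gv hU hC hz (hall z hz) j
  have h0 : pd2 (Fm a bv gv Ψ) y i j
      = fderiv ℝ (fun z => pd (Fm a bv gv Ψ) z j) y (Pi.single i 1) := rfl
  rw [h0, hev.fderiv_eq]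
  rfl

set_option maxHeartbeats 2000000 in
lemma master (ha : a.PosDef) (bv gv v : Fin n → ℝ) {Ψ : ℝ → ℝ → ℝ} {U : Set (ℝ × ℝ)}
    (hU : IsOpen U) (hC : ContDiffOn ℝ (⊤ : ℕ∞) (fun p : ℝ × ℝ => Ψ p.1 p.2) U)
    {y : Fin n → ℝ} (hy : y ≠ 0) (hm : phi a bv gv y ∈ U) (j : Fin n) :
    ∑ i, (∑ l, a⁻¹ i l * v l) * pd (Ej a bv gv Ψ j) y i
    = (1 / alph a y) * (Pfun Ψ (phi a bv gv y) * hl a v y j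
      + ((quadInv a v bv - sVar a v y * sVar a bv y) * D2 Ψ (phi a bv gv y) (1, 0) (1, 0)
        + (quadInv a v gv - sVar a v y * sVar a gv y) * D2 Ψ (phi a bv gv y) (0, 1) (1, 0))
          * hl a bv y j
      + ((quadInv a v bv - sVar a v y * sVar a bv y) * D2 Ψ (phi a bv gv y) (1, 0) (0, 1)
        + (quadInv a v gv - sVar a v y * sVar a gv y) * D2 Ψ (phi a bv gv y) (0, 1) (0, 1))
          * hl a gv y j) := by
  have hsymm := a_symm a ha
  have hα := alph_pos a ha hy
  have hαne : alph a y ≠ 0 := ne_of_gt hα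
  -- derivative of z ↦ mvec a z j / alph a z
  have hmv : HasFDerivAt (fun z : Fin n → ℝ => mvec a z j) (ofL (a j)) y := by
    have he : (fun z : Fin n → ℝ => mvec a z j) = fun z => ofL (a j) z := by
      ext z; rw [ofL_apply]; rfl
    rw [he]; exact (ofL (a j)).hasFDerivAt
  have hwj := myDiv hmv (hasFDerivAt_alph a ha hsymm hy) hαne
  -- derivative of the pair map
  have hφ' : HasFDerivAt (phi a bv gv) ((sL a bv y).prod (sL a gv y)) y :=
    (hasFDerivAt_sVar a ha hsymm bv hy).prodMk (hasFDerivAt_sVar a ha hsymm gv hy)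
  have hPsi := hasFDerivAt_Psi hU hC hm
  have hP1 := hasFDerivAt_P1 hU hC hm
  have hP2 := hasFDerivAt_P2 hU hC hm
  -- derivative of Pfun
  have hPf : HasFDerivAt (Pfun Ψ)
      (fderiv ℝ (fun p : ℝ × ℝ => Ψ p.1 p.2) (phi a bv gv y)
        - ((phi a bv gv y).1 •
            ((ContinuousLinearMap.apply ℝ ℝ ((1:ℝ), (0:ℝ))).comp (D2 Ψ (phi a bv gv y)))
          + P1 Ψ (phi a bv gv y) • ContinuousLinearMap.fst ℝ ℝ ℝ)
        - ((phi a bv gv y).2 •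
            ((ContinuousLinearMap.apply ℝ ℝ ((0:ℝ), (1:ℝ))).comp (D2 Ψ (phi a bv gv y)))
          + P2 Ψ (phi a bv gv y) • ContinuousLinearMap.snd ℝ ℝ ℝ)) (phi a bv gv y) := by
    have h1 := (hasFDerivAt_fst (p := phi a bv gv y)).mul hP1
    have h2 := (hasFDerivAt_snd (p := phi a bv gv y)).mul hP2
    exact (hPsi.sub h1).sub h2
  have hEj : HasFDerivAt (Ej a bv gv Ψ j) _ y :=
    ((hwj.mul (hPf.comp y hφ')).add ((hP1.comp y hφ').const_mul (bv j))).add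
      ((hP2.comp y hφ').const_mul (gv j))
  -- abbreviations
  set α := alph a y with hαdef
  set mj := mvec a y j with hmjdef
  set pp := sVar a bv y with hppdef
  set qq := sVar a gv y with hqqdef
  set w := phi a bv gv y with hwdef
  set c11 := D2 Ψ w (1, 0) (1, 0) with hc11
  set c21 := D2 Ψ w (0, 1) (1, 0) with hc21
  set c12 := D2 Ψ w (1, 0) (0, 1) with hc12
  set c22 := D2 Ψ w (0, 1) (0, 1) with hc22
  set Pi0 := Pfun Ψ w with hPi0
  set C3 := ((mj / α) * (-(pp * c11 + qq * c12)) + bv j * c11 + gv j * c12) / α with hC3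
  set C4 := ((mj / α) * (-(pp * c21 + qq * c22)) + bv j * c21 + gv j * c22) / α with hC4
  set C2 := -(mj * Pi0) / α ^ 3 - (pp / α) * C3 - (qq / α) * C4 with hC2
  set C1 := Pi0 / α with hC1
  have hpt : ∀ i, pd (Ej a bv gv Ψ j) y i
      = C1 * a j i + C2 * mvec a y i + C3 * bv i + C4 * gv i := by
    intro i
    simp only [pd]
    rw [hEj.fderiv]
    simp only [ContinuousLinearMap.add_apply, ContinuousLinearMap.smul_apply,
      ContinuousLinearMap.sub_apply, ContinuousLinearMap.comp_apply,
      ContinuousLinearMap.prod_apply, ContinuousLinearMap.coe_fst',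
      ContinuousLinearMap.coe_snd', ContinuousLinearMap.apply_apply, smul_eq_mul,
      alphL_apply, sum_single, ofL_apply, Function.comp]
    rw [clm_eval (fderiv ℝ (fun p : ℝ × ℝ => Ψ p.1 p.2) (phi a bv gv y))
      ((sL a bv y) (Pi.single i 1), (sL a gv y) (Pi.single i 1))]
    rw [clm_eval2 (D2 Ψ (phi a bv gv y))
      ((sL a bv y) (Pi.single i 1), (sL a gv y) (Pi.single i 1)) ((1:ℝ), (0:ℝ))]
    rw [clm_eval2 (D2 Ψ (phi a bv gv y))
      ((sL a bv y) (Pi.single i 1), (sL a gv y) (Pi.single i 1)) ((0:ℝ), (1:ℝ))]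
    rw [sL_single, sL_single]
    rw [hC1, hC2, hC3, hC4, hPi0, hc11, hc21, hc12, hc22]
    simp only [P1, P2, Pfun, D2, phi, hwdef, hppdef, hqqdef, hmjdef, hαdef]
    field_simp [show alph a y ≠ 0 from hαne]
    ring
  have hsplit : ∀ i, (∑ l, a⁻¹ i l * v l) * pd (Ej a bv gv Ψ j) y i
      = C1 * ((∑ l, a⁻¹ i l * v l) * a j i) + C2 * ((∑ l, a⁻¹ i l * v l) * mvec a y i)
        + C3 * ((∑ l, a⁻¹ i l * v l) * bv i) + C4 * ((∑ l, a⁻¹ i l * v l) * gv i) := by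
    intro i; rw [hpt i]; ring
  rw [Finset.sum_congr rfl fun i _ => hsplit i]
  rw [Finset.sum_add_distrib, Finset.sum_add_distrib, Finset.sum_add_distrib,
    ← Finset.mul_sum, ← Finset.mul_sum, ← Finset.mul_sum, ← Finset.mul_sum]
  rw [contr_a a ha v j, contr_m a ha v y, contr_q a ha v bv, contr_q a ha v gv]
  -- final algebra
  have hβv : oneForm v y = sVar a v y * α := by
    rw [sVar, hαdef, div_mul_cancel₀]
    exact hαne
  rw [hβv, hl_eq a ha v hy j, hl_eq a ha bv hy j, hl_eq a ha gv hy j]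
  rw [hC1, hC2, hC3, hC4]
  rw [← hαdef, ← hmjdef, ← hppdef, ← hqqdef]
  field_simp
  ring

end St10

/-- contractions `ℓ_{ij}b^i` and `ℓ_{ij}γ^i`. -/
theorem statement10
    (n : ℕ) (hn : 2 ≤ n)
    (a : Matrix (Fin n) (Fin n) ℝ) (ha : a.PosDef)
    (bv gv : Fin n → ℝ) (b₀ g₀ : ℝ) (hb₀ : 0 < b₀) (hg₀ : 0 < g₀)
    (hb : Real.sqrt (quadInv a bv bv) < b₀)
    (hg : Real.sqrt (quadInv a gv gv) < g₀)
    (Ψ : ℝ → ℝ → ℝ)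
    (hΨ : ContDiffOn ℝ (⊤ : ℕ∞) (fun p : ℝ × ℝ => Ψ p.1 p.2)
      (Set.Ioo (-b₀) b₀ ×ˢ Set.Ioo (-g₀) g₀))
    (hΨpos : ∀ p ∈ Set.Ioo (-b₀) b₀ ×ˢ Set.Ioo (-g₀) g₀, 0 < Ψ p.1 p.2)
    (y : Fin n → ℝ) (hy : y ≠ 0) (j : Fin n) :
    ∀ p q B G Θ : ℝ, p = sVar a bv y → q = sVar a gv y →
      B = quadInv a bv bv → G = quadInv a gv gv → Θ = quadInv a bv gv →
      (∑ i, (∑ l, a⁻¹ i l * bv l) * pd2 (Fm a bv gv Ψ) y i j =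
        (1 / alph a y) *
            (PiF Ψ p q + (B - p ^ 2) * Ds (Ds Ψ) p q + (Θ - p * q) * Dt (Ds Ψ) p q)
            * hl a bv y j
          + (1 / alph a y) *
            ((B - p ^ 2) * Dt (Ds Ψ) p q + (Θ - p * q) * Dt (Dt Ψ) p q) * hl a gv y j)
      ∧ (∑ i, (∑ l, a⁻¹ i l * gv l) * pd2 (Fm a bv gv Ψ) y i j =
        (1 / alph a y) *
            ((Θ - p * q) * Ds (Ds Ψ) p q + (G - q ^ 2) * Dt (Ds Ψ) p q) * hl a bv y j
          + (1 / alph a y) *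
            (PiF Ψ p q + (Θ - p * q) * Dt (Ds Ψ) p q + (G - q ^ 2) * Dt (Dt Ψ) p q)
            * hl a gv y j) := by
  intro p q B G Θ hp hq hB hG hΘ
  subst hp hq hB hG hΘ
  have hU : IsOpen (Ioo (-b₀) b₀ ×ˢ Ioo (-g₀) g₀) := isOpen_Ioo.prod isOpen_Ioo
  have hall : ∀ z : Fin n → ℝ, z ≠ 0 →
      St10.phi a bv gv z ∈ Ioo (-b₀) b₀ ×ˢ Ioo (-g₀) g₀ := fun z hz =>
    Set.mk_mem_prod (St10.sVar_mem a ha bv hz hb) (St10.sVar_mem a ha gv hz hg)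
  have hm := hall y hy
  have e11 : Ds (Ds Ψ) (sVar a bv y) (sVar a gv y)
      = St10.D2 Ψ (St10.phi a bv gv y) (1, 0) (1, 0) := St10.DsDs_eq hU hΨ hm
  have e21 : Dt (Ds Ψ) (sVar a bv y) (sVar a gv y)
      = St10.D2 Ψ (St10.phi a bv gv y) (0, 1) (1, 0) := St10.DtDs_eq hU hΨ hm
  have e22 : Dt (Dt Ψ) (sVar a bv y) (sVar a gv y)
      = St10.D2 Ψ (St10.phi a bv gv y) (0, 1) (0, 1) := St10.DtDt_eq hU hΨ hm
  have esym : St10.D2 Ψ (St10.phi a bv gv y) (1, 0) (0, 1)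
      = St10.D2 Ψ (St10.phi a bv gv y) (0, 1) (1, 0) := St10.D2_symm hU hΨ hm _ _
  have eDs : Ds Ψ (sVar a bv y) (sVar a gv y) = St10.P1 Ψ (St10.phi a bv gv y) :=
    St10.Ds_eq hU hΨ hm
  have eDt : Dt Ψ (sVar a bv y) (sVar a gv y) = St10.P2 Ψ (St10.phi a bv gv y) :=
    St10.Dt_eq hU hΨ hm
  have ePi : PiF Ψ (sVar a bv y) (sVar a gv y) = St10.Pfun Ψ (St10.phi a bv gv y) := by
    rw [PiF, eDs, eDt]; rfl
  constructor
  · have hl1 : ∑ i, (∑ l, a⁻¹ i l * bv l) * pd2 (Fm a bv gv Ψ) y i j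
        = ∑ i, (∑ l, a⁻¹ i l * bv l) * pd (St10.Ej a bv gv Ψ j) y i :=
      Finset.sum_congr rfl fun i _ => by
        rw [St10.pd2_eq a ha bv gv hU hΨ hall hy i j]
    rw [hl1, St10.master a ha bv gv bv hU hΨ hy hm j, esym, ← e11, ← e21, ← e22, ← ePi]
    ring
  · have hl1 : ∑ i, (∑ l, a⁻¹ i l * gv l) * pd2 (Fm a bv gv Ψ) y i j
        = ∑ i, (∑ l, a⁻¹ i l * gv l) * pd (St10.Ej a bv gv Ψ j) y i :=
      Finset.sum_congr rfl fun i _ => by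
        rw [St10.pd2_eq a ha bv gv hU hΨ hall hy i j]
    rw [hl1, St10.master a ha bv gv gv hU hΨ hy hm j, esym, ← e11, ← e21, ← e22, ← ePi,
      St10.quadInv_comm a ha gv bv]
    ring
end
end
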